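/- arXiv:1904.10208 — 4 statements merged into one kernel-verified Lean document; each statement's English description precedes it below -/
import Mathlib

section
/- Let V be a finite-dimensional real vector space, let Φ⁺ be the set of positive roots of a Coxeter system (W,S) in its standard geometric representation, and for each positive root α = Σ_s a_s α_s write ᾱ = α / (Σ_s a_s). Given a basis f₁,…,f_n of the dual space V*, define α ⪯ β if and only if (f₁(ᾱ),…,f_n(ᾱ)) ≤ (f₁(β̄),…,f_n(β̄)) in lexicographic order. Then ⪯ is a reflection ordering on Φ⁺, i.e., a total order such that whenever α, β ∈ Φ⁺, a, b > 0 and aα + bβ ∈ Φ⁺, either α ⪯ aα+bβ ⪯ β or β ⪯ aα+bβ ⪯ α. -/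
open Finset

/-- A (standard) geometric representation of a Coxeter system `cs` on a real vector space `V`:
a representation `ρ`, an invariant symmetric bilinear form, and simple roots forming a basis,
with each simple reflection acting as the reflection in the corresponding simple root. -/
structure GeomRep {B W : Type*} [Group W] (M : CoxeterMatrix B) (cs : CoxeterSystem M W)
    (V : Type*) [AddCommGroup V] [Module ℝ V] where
  ρ : W →* (V ≃ₗ[ℝ] V)
  form : LinearMap.BilinForm ℝ V
  simpleRoot : B → V
  form_symm : ∀ x y : V, form x y = form y x
  form_inv : ∀ (w : W) (x y : V), form (ρ w x) (ρ w y) = form x y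
  form_simple : ∀ i : B, form (simpleRoot i) (simpleRoot i) = 1
  simple_act : ∀ (i : B) (x : V),
    ρ (cs.simple i) x = x - (2 * form x (simpleRoot i)) • simpleRoot i
  indep : LinearIndependent ℝ simpleRoot
  span_top : Submodule.span ℝ (Set.range simpleRoot) = ⊤

namespace GeomRep

variable {B W V : Type*} [Group W] [AddCommGroup V] [Module ℝ V]
  {M : CoxeterMatrix B} {cs : CoxeterSystem M W} (G : GeomRep M cs V)

/-- The set of roots: the orbit of the simple roots. -/
def roots : Set V := {v | ∃ (w : W) (i : B), v = G.ρ w (G.simpleRoot i)}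

/-- A vector is a nonnegative combination of simple roots. -/
def IsNonnegComb (v : V) : Prop :=
  ∃ c : B →₀ ℝ, (∀ i, 0 ≤ c i) ∧ v = c.sum fun i a => a • G.simpleRoot i

/-- The set of positive roots. -/
def posRoots : Set V := {v | v ∈ G.roots ∧ G.IsNonnegComb v}

/-- `α` is the positive root corresponding to the reflection `t`. -/
def IsRootOf (α : V) (t : W) : Prop :=
  α ∈ G.posRoots ∧ ∀ x : V, G.ρ t x = x - (2 * G.form x α) • α

/-- A reflection ordering on the positive roots: a total ordering `le` such that for all
positive roots `α, β` and `a, b > 0` with `a•α + b•β` a positive root, the combination lies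
between `α` and `β`. -/
def IsReflOrdering (le : V → V → Prop) : Prop :=
  (∀ α ∈ G.posRoots, ∀ β ∈ G.posRoots, le α β ∨ le β α) ∧
  (∀ α ∈ G.posRoots, ∀ β ∈ G.posRoots, le α β → le β α → α = β) ∧
  (∀ α ∈ G.posRoots, ∀ β ∈ G.posRoots, ∀ γ ∈ G.posRoots, le α β → le β γ → le α γ) ∧
  (∀ α ∈ G.posRoots, ∀ β ∈ G.posRoots, ∀ a b : ℝ, 0 < a → 0 < b →
    a • α + b • β ∈ G.posRoots →
      (le α (a • α + b • β) ∧ le (a • α + b • β) β) ∨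
      (le β (a • α + b • β) ∧ le (a • α + b • β) α))

end GeomRep

/-- The set of finite nonnegative linear combinations of elements of `A`. -/
def coneOf {V : Type*} [AddCommGroup V] [Module ℝ V] (A : Set V) : Set V :=
  {x | ∃ (s : Finset V) (c : V → ℝ), ↑s ⊆ A ∧ (∀ v ∈ s, 0 ≤ c v) ∧ x = ∑ v ∈ s, c v • v}

namespace CoxeterSystem

variable {B W : Type*} [Group W] {M : CoxeterMatrix B} (cs : CoxeterSystem M W)

/-- One step in the Bruhat order: multiply by a reflection and increase the length. -/
def bruhatStep (u v : W) : Prop :=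
  (∃ t : W, cs.IsReflection t ∧ v = t * u) ∧ cs.length u < cs.length v

/-- Bruhat order on `W`. -/
def bruhatLE : W → W → Prop := Relation.ReflTransGen cs.bruhatStep

/-- Strict Bruhat order. -/
def bruhatLT (u v : W) : Prop := cs.bruhatLE u v ∧ u ≠ v

/-- The covering relation of Bruhat order. -/
def bruhatCovBy (u v : W) : Prop :=
  (∃ t : W, cs.IsReflection t ∧ v = t * u) ∧ cs.length v = cs.length u + 1

/-- Bruhat interval. -/
def bruhatInterval (u v : W) : Set W := {z | cs.bruhatLE u z ∧ cs.bruhatLE z v}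

end CoxeterSystem


namespace GeomRep

variable {B W V : Type*} [Group W] [AddCommGroup V] [Module ℝ V]
  {M : CoxeterMatrix B} {cs : CoxeterSystem M W}

/-- The basis of simple roots. -/
noncomputable def simpleBasis (G : GeomRep M cs V) : Module.Basis B ℝ V :=
  Module.Basis.mk G.indep (by rw [G.span_top])

/-- The sum of the coefficients of `α` in the basis of simple roots. -/
noncomputable def coeffSum (G : GeomRep M cs V) (α : V) : ℝ :=
  (G.simpleBasis.repr α).sum fun _ a => a

/-- The normalization `ᾱ` of `α`: divide by the sum of the simple-root coefficients. -/
noncomputable def norml (G : GeomRep M cs V) (α : V) : V := (G.coeffSum α)⁻¹ • α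

end GeomRep

/-- Lexicographic comparison of tuples. -/
def lexLe {n : ℕ} (a b : Fin n → ℝ) : Prop :=
  a = b ∨ ∃ i : Fin n, a i < b i ∧ ∀ j : Fin n, j < i → a j = b j


section AuxLemmas

variable {n : ℕ}

lemma lexLe_total (a b : Fin n → ℝ) : lexLe a b ∨ lexLe b a := by
  classical
  by_cases h : a = b
  · exact Or.inl (Or.inl h)
  · have hne : (Finset.univ.filter fun i => a i ≠ b i).Nonempty := by
      by_contra hc
      rw [Finset.not_nonempty_iff_eq_empty, Finset.filter_eq_empty_iff] at hc
      exact h (funext fun i => not_not.mp (hc (Finset.mem_univ i)))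
    set s := Finset.univ.filter fun i => a i ≠ b i with hs
    set i := s.min' hne with hi
    have himem : i ∈ s := s.min'_mem hne
    have hine : a i ≠ b i := (Finset.mem_filter.mp himem).2
    have heq : ∀ j, j < i → a j = b j := by
      intro j hj
      by_contra hcj
      exact absurd (s.min'_le j (Finset.mem_filter.mpr ⟨Finset.mem_univ j, hcj⟩)) (not_le.mpr hj)
    rcases lt_or_gt_of_ne hine with hlt | hgt
    · exact Or.inl (Or.inr ⟨i, hlt, heq⟩)
    · exact Or.inr (Or.inr ⟨i, hgt, fun j hj => (heq j hj).symm⟩)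

lemma lexLe_trans {a b c : Fin n → ℝ} (h1 : lexLe a b) (h2 : lexLe b c) : lexLe a c := by
  rcases h1 with rfl | ⟨i, hilt, hieq⟩
  · exact h2
  rcases h2 with rfl | ⟨k, hklt, hkeq⟩
  · exact Or.inr ⟨i, hilt, hieq⟩
  right
  rcases lt_trichotomy i k with h | rfl | h
  · exact ⟨i, by rw [hkeq i h] at hilt; exact hilt,
      fun j hj => (hieq j hj).trans (hkeq j (hj.trans h))⟩
  · exact ⟨i, hilt.trans hklt, fun j hj => (hieq j hj).trans (hkeq j hj)⟩
  · exact ⟨k, by rw [hieq k h]; exact hklt,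
      fun j hj => (hieq j (hj.trans h)).trans (hkeq j hj)⟩

lemma lexLe_antisymm {a b : Fin n → ℝ} (h1 : lexLe a b) (h2 : lexLe b a) : a = b := by
  rcases h1 with rfl | ⟨i, hilt, hieq⟩
  · rfl
  rcases h2 with rfl | ⟨k, hklt, hkeq⟩
  · rfl
  exfalso
  rcases lt_trichotomy i k with h | rfl | h
  · rw [hkeq i h] at hilt; exact lt_irrefl _ hilt
  · exact lt_irrefl _ (hilt.trans hklt)
  · rw [hieq k h] at hklt; exact lt_irrefl _ hklt

lemma lexLe_between {a b : Fin n → ℝ} {t s : ℝ} (ht : 0 < t) (hs : 0 < s) (hts : t + s = 1)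
    (h : lexLe a b) :
    lexLe a (fun i => t * a i + s * b i) ∧ lexLe (fun i => t * a i + s * b i) b := by
  rcases h with rfl | ⟨i, hilt, hieq⟩
  · have : (fun i => t * a i + s * a i) = a := by
      funext i; linear_combination a i * hts
    rw [this]
    exact ⟨Or.inl rfl, Or.inl rfl⟩
  constructor
  · refine Or.inr ⟨i, ?_, fun j hj => ?_⟩
    · show a i < t * a i + s * b i
      have h1 : t * a i + s * a i = a i := by linear_combination (a i) * hts
      nlinarith [mul_lt_mul_of_pos_left hilt hs]
    · show a j = t * a j + s * b j
      rw [← hieq j hj]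
      linear_combination (-(a j)) * hts
  · refine Or.inr ⟨i, ?_, fun j hj => ?_⟩
    · show t * a i + s * b i < b i
      have h1 : t * b i + s * b i = b i := by linear_combination (b i) * hts
      nlinarith [mul_lt_mul_of_pos_left hilt ht]
    · show t * a j + s * b j = b j
      rw [hieq j hj]
      linear_combination (b j) * hts

end AuxLemmas

namespace GeomRep

variable {B W V : Type*} [Group W] [AddCommGroup V] [Module ℝ V]
  {M : CoxeterMatrix B} {cs : CoxeterSystem M W} (G : GeomRep M cs V)

lemma simpleBasis_apply (i : B) : G.simpleBasis i = G.simpleRoot i := Module.Basis.mk_apply _ _ _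

lemma form_root_self {α : V} (hα : α ∈ G.roots) : G.form α α = 1 := by
  obtain ⟨w, i, rfl⟩ := hα
  rw [G.form_inv, G.form_simple]

lemma coeffSum_eq_lc (α : V) :
    G.coeffSum α = Finsupp.linearCombination ℝ (fun _ : B => (1 : ℝ)) (G.simpleBasis.repr α) := by
  rw [Finsupp.linearCombination_apply, coeffSum]
  congr 1
  funext i a
  simp

lemma coeffSum_add (x y : V) : G.coeffSum (x + y) = G.coeffSum x + G.coeffSum y := by
  simp [coeffSum_eq_lc, map_add]

lemma coeffSum_smul (c : ℝ) (x : V) : G.coeffSum (c • x) = c * G.coeffSum x := by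
  simp [coeffSum_eq_lc, map_smul]

lemma coeffSum_pos {α : V} (hα : α ∈ G.posRoots) : 0 < G.coeffSum α := by
  classical
  obtain ⟨hroot, c, hc, hsum⟩ := hα
  have hrepr : G.simpleBasis.repr α = c := by
    have hαlc : α = Finsupp.linearCombination ℝ (⇑G.simpleBasis) c := by
      rw [hsum, Finsupp.linearCombination_apply]
      congr 1
      funext i a
      rw [G.simpleBasis_apply]
    rw [hαlc, Module.Basis.repr_linearCombination]
  have hcs : G.coeffSum α = ∑ i ∈ c.support, c i := by
    rw [coeffSum, hrepr, Finsupp.sum]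
  have hge : 0 ≤ G.coeffSum α := by
    rw [hcs]
    exact Finset.sum_nonneg fun i _ => hc i
  rcases hge.lt_or_eq with h | h
  · exact h
  exfalso
  have hc0 : c = 0 := by
    ext i
    by_cases hi : i ∈ c.support
    · exact (Finset.sum_eq_zero_iff_of_nonneg fun j _ => hc j).mp (by rw [← hcs, ← h]) i hi
    · simpa using Finsupp.notMem_support_iff.mp hi
  have hα0 : α = 0 := by rw [hsum, hc0]; simp
  have h1 := G.form_root_self hroot
  rw [hα0] at h1
  simp at h1

lemma smul_norml {α : V} (hα : α ∈ G.posRoots) : (G.coeffSum α) • G.norml α = α := by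
  rw [norml, smul_smul, mul_inv_cancel₀ (G.coeffSum_pos hα).ne', one_smul]

lemma norml_inj {α β : V} (hα : α ∈ G.posRoots) (hβ : β ∈ G.posRoots)
    (h : G.norml α = G.norml β) : α = β := by
  have hcα := G.coeffSum_pos hα
  have hcβ := G.coeffSum_pos hβ
  have hβ' : β = (G.coeffSum β * (G.coeffSum α)⁻¹) • α := by
    conv_lhs => rw [← G.smul_norml hβ]
    rw [← h, norml, smul_smul]
  have h1 : G.form α α = 1 := G.form_root_self hα.1
  have h2 : G.form β β = 1 := G.form_root_self hβ.1
  set k := G.coeffSum β * (G.coeffSum α)⁻¹ with hk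
  have hkpos : 0 < k := mul_pos hcβ (inv_pos.mpr hcα)
  have h3 : G.form β β = k * (k * G.form α α) := by
    rw [hβ']
    simp [map_smul, smul_eq_mul]
  rw [h1, h2, mul_one] at h3
  have hk1 : k = 1 := by nlinarith
  have : G.coeffSum β = G.coeffSum α := by
    field_simp [hk] at hk1
    rw [hk, mul_inv_eq_one₀ hcα.ne'] at hk1
    exact hk1
  rw [hβ', hk, this, mul_inv_cancel₀ hcα.ne', one_smul]

lemma norml_comb {α β : V} {a b : ℝ} (hα : α ∈ G.posRoots) (hβ : β ∈ G.posRoots)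
    (ha : 0 < a) (hb : 0 < b) (hγ : a • α + b • β ∈ G.posRoots) :
    ∃ t s : ℝ, 0 < t ∧ 0 < s ∧ t + s = 1 ∧
      G.norml (a • α + b • β) = t • G.norml α + s • G.norml β := by
  have hcα := G.coeffSum_pos hα
  have hcβ := G.coeffSum_pos hβ
  have hcγ := G.coeffSum_pos hγ
  have hcs : G.coeffSum (a • α + b • β) = a * G.coeffSum α + b * G.coeffSum β := by
    rw [coeffSum_add, coeffSum_smul, coeffSum_smul]
  refine ⟨a * G.coeffSum α / G.coeffSum (a • α + b • β),
    b * G.coeffSum β / G.coeffSum (a • α + b • β), ?_, ?_, ?_, ?_⟩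
  · exact div_pos (mul_pos ha hcα) hcγ
  · exact div_pos (mul_pos hb hcβ) hcγ
  · rw [← add_div, hcs, div_self (by rw [← hcs]; exact hcγ.ne')]
  · rw [norml, smul_add, smul_smul, smul_smul, norml, norml, smul_smul, smul_smul]
    congr 1
    · congr 1
      field_simp [hcα.ne', hcγ.ne']
    · congr 1
      field_simp [hcβ.ne', hcγ.ne']

end GeomRep

/-- given a basis `f 0, …, f (n-1)` of the dual space `V*`, the ordering
`α ⪯ β ↔ (f 0 ᾱ, …) ≤_lex (f 0 β̄, …)` is a reflection ordering on the positive roots. -/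
theorem stmt0 {B W V : Type*} [Group W] [AddCommGroup V] [Module ℝ V]
    {M : CoxeterMatrix B} {cs : CoxeterSystem M W} (G : GeomRep M cs V)
    (n : ℕ) (f : Module.Basis (Fin n) ℝ (Module.Dual ℝ V)) :
    G.IsReflOrdering (fun α β => lexLe (fun i => f i (G.norml α)) (fun i => f i (G.norml β))) := by
  classical
  refine ⟨fun α _ β _ => lexLe_total _ _, ?_, fun α _ β _ γ _ => lexLe_trans, ?_⟩
  · -- antisymmetry
    intro α hα β hβ h1 h2
    have hfeq := lexLe_antisymm h1 h2
    have hx : ∀ i, f i (G.norml α - G.norml β) = 0 := by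
      intro i
      have := congrFun hfeq i
      simp only [map_sub, this, sub_self]
    have hev : Module.Dual.eval ℝ V (G.norml α - G.norml β) = 0 :=
      f.ext fun i => by simpa using hx i
    have hall : ∀ φ : Module.Dual ℝ V, φ (G.norml α - G.norml β) = 0 := by
      intro φ
      have := congrArg (fun g => g φ) hev
      simpa using this
    have hsub : G.norml α - G.norml β = 0 :=
      (Module.forall_dual_apply_eq_zero_iff ℝ _).mp hall
    exact G.norml_inj hα hβ (sub_eq_zero.mp hsub)
  · -- betweenness
    intro α hα β hβ a b ha hb hγ
    obtain ⟨t, s, ht, hs, hts, hng⟩ := G.norml_comb hα hβ ha hb hγ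
    rcases lexLe_total (fun i => f i (G.norml α)) (fun i => f i (G.norml β)) with h | h
    · left
      have hfun : (fun i => f i (G.norml (a • α + b • β))) =
          fun i => t * f i (G.norml α) + s * f i (G.norml β) := by
        funext i
        rw [hng]
        simp [map_add, map_smul]
      have hb2 := lexLe_between ht hs hts h
      rw [← hfun] at hb2
      exact hb2
    · right
      have hfun : (fun i => f i (G.norml (a • α + b • β))) =
          fun i => s * f i (G.norml β) + t * f i (G.norml α) := by
        funext i
        rw [hng]
        simp [map_add, map_smul]
        ring
      have hb2 := lexLe_between hs ht (by linarith) h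
      rw [← hfun] at hb2
      exact hb2
end

section
/- Let (W,S) be a Coxeter system with a fixed reflection ordering on its positive roots, let C₁ and C₂ be cones in the span of the root system intersecting only in {0}, with C₁ and C₂ closed and convex. Then there exists a reflection ordering ⪯ on Φ⁺ such that every positive root lying in C₁ is ⪯-smaller than every positive root lying in C₂. -/
open Finset

set_option maxHeartbeats 1000000

namespace Stmt3Aux

/-- Hand-rolled lexicographic order on real sequences. -/
def LexLE (u v : ℕ → ℝ) : Prop := u = v ∨ ∃ i, (∀ j, j < i → u j = v j) ∧ u i < v i

/-- Lexicographic negativity. -/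
def LexNeg (u : ℕ → ℝ) : Prop := (∀ i, u i = 0) ∨ ∃ i, (∀ j, j < i → u j = 0) ∧ u i < 0

lemma lexLE_refl (u : ℕ → ℝ) : LexLE u u := Or.inl rfl

open Classical in
lemma lexLE_total (u v : ℕ → ℝ) : LexLE u v ∨ LexLE v u := by
  by_cases h : u = v
  · exact Or.inl (Or.inl h)
  · have hne : ∃ i, u i ≠ v i := by
      by_contra hc
      push_neg at hc
      exact h (funext hc)
    classical
    let i := Nat.find hne
    have hi : u i ≠ v i := Nat.find_spec hne
    have hj : ∀ j, j < i → u j = v j := fun j hji => by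
      by_contra hc
      exact absurd hji (not_lt.2 (Nat.find_le hc))
    rcases lt_or_gt_of_ne hi with hlt | hgt
    · exact Or.inl (Or.inr ⟨i, hj, hlt⟩)
    · exact Or.inr (Or.inr ⟨i, fun j hji => (hj j hji).symm, hgt⟩)

lemma lexLE_antisymm {u v : ℕ → ℝ} (h1 : LexLE u v) (h2 : LexLE v u) : u = v := by
  rcases h1 with h1 | ⟨i, hji, hi⟩
  · exact h1
  rcases h2 with h2 | ⟨i', hji', hi'⟩
  · exact h2.symm
  rcases lt_trichotomy i i' with h | h | h
  · exact absurd (hji' i h).symm (ne_of_lt hi)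
  · subst h; exact absurd (hi.trans hi') (lt_irrefl _)
  · exact absurd (hji i' h).symm (ne_of_lt hi')

lemma lexLE_trans {u v w : ℕ → ℝ} (h1 : LexLE u v) (h2 : LexLE v w) : LexLE u w := by
  rcases h1 with rfl | ⟨i, hji, hi⟩
  · exact h2
  rcases h2 with rfl | ⟨i', hji', hi'⟩
  · exact Or.inr ⟨i, hji, hi⟩
  rcases lt_trichotomy i i' with h | h | h
  · exact Or.inr ⟨i, fun j hj => (hji j hj).trans (hji' j (hj.trans h)), by
      rw [← hji' i h]; exact hi⟩
  · subst h; exact Or.inr ⟨i, fun j hj => (hji j hj).trans (hji' j hj), hi.trans hi'⟩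
  · exact Or.inr ⟨i', fun j hj => (hji j (hj.trans h)).trans (hji' j hj), by
      rw [hji i' h]; exact hi'⟩

lemma lexLE_combo {u v : ℕ → ℝ} (t s : ℝ) (ht : 0 < t) (hs : 0 < s) (hts : t + s = 1)
    (h : LexLE u v) :
    LexLE u (fun i => t * u i + s * v i) ∧ LexLE (fun i => t * u i + s * v i) v := by
  rcases h with rfl | ⟨i, hji, hi⟩
  · constructor
    · left; funext i; show u i = t * u i + s * u i; rw [← add_mul, hts, one_mul]
    · left; funext i; show t * u i + s * u i = u i; rw [← add_mul, hts, one_mul]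
  · constructor
    · right; refine ⟨i, fun j hj => ?_, ?_⟩
      · show u j = t * u j + s * v j; rw [hji j hj, ← add_mul, hts, one_mul]
      · show u i < t * u i + s * v i
        have h1 : t * u i + s * u i = u i := by rw [← add_mul, hts, one_mul]
        nlinarith [mul_pos hs (sub_pos.2 hi)]
    · right; refine ⟨i, fun j hj => ?_, ?_⟩
      · show t * u j + s * v j = v j; rw [hji j hj, ← add_mul, hts, one_mul]
      · show t * u i + s * v i < v i
        have h1 : t * v i + s * v i = v i := by rw [← add_mul, hts, one_mul]
        nlinarith [mul_pos ht (sub_pos.2 hi)]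

lemma lexNeg_sub_le {u v : ℕ → ℝ} (h : LexNeg (fun i => u i - v i)) : LexLE u v := by
  rcases h with h | ⟨i, hj, hi⟩
  · left; funext i; have : u i - v i = 0 := h i; linarith
  · right; refine ⟨i, fun j hjlt => ?_, ?_⟩
    · have : u j - v j = 0 := hj j hjlt; linarith
    · have : u i - v i < 0 := hi; linarith


open Module in
/-- A pointed convex cone admits a nonzero nonpositive linear functional
(in a nonzero finite-dimensional inner product space), provided it has a nonzero element. -/
lemma exists_nonpos_functional (E : Type) [NormedAddCommGroup E] [InnerProductSpace ℝ E]
    [FiniteDimensional ℝ E] (D : Set E)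
    (hadd : ∀ x ∈ D, ∀ y ∈ D, x + y ∈ D)
    (hsmul : ∀ x ∈ D, ∀ c : ℝ, 0 ≤ c → c • x ∈ D)
    (hpt : ∀ x, x ∈ D → -x ∈ D → x = 0)
    (x₀ : E) (hx₀ : x₀ ∈ D) (hx₀0 : x₀ ≠ 0) :
    ∃ g : E →ₗ[ℝ] ℝ, (∃ v, g v ≠ 0) ∧ ∀ z ∈ D, g z ≤ 0 := by
  have h0D : (0 : E) ∈ D := by
    have := hsmul x₀ hx₀ 0 le_rfl
    simpa using this
  have hconv : Convex ℝ D := by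
    intro x hx y hy a b ha hb hab
    exact hadd _ (hsmul x hx a ha) _ (hsmul y hy b hb)
  by_cases hU : Submodule.span ℝ D = ⊤
  · -- spanning case: use Hahn-Banach separation from `-x₀`
    have haff : affineSpan ℝ D = ⊤ := by
      rw [AffineSubspace.affineSpan_eq_top_iff_vectorSpan_eq_top_of_nonempty ℝ E E ⟨0, h0D⟩]
      rw [eq_top_iff, ← hU]
      refine Submodule.span_le.2 fun d hd => ?_
      have := vsub_mem_vectorSpan ℝ hd h0D
      simpa using this
    obtain ⟨x₁, hx₁⟩ := hconv.interior_nonempty_iff_affineSpan_eq_top.2 haff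
    have hp : -x₀ ∉ D := fun hc => hx₀0 (by simpa using hpt (-x₀) hc (by simpa using hx₀))
    have hpint : -x₀ ∉ interior D := fun hc => hp (interior_subset hc)
    obtain ⟨f, hf⟩ := geometric_hahn_banach_open_point hconv.interior isOpen_interior hpint
    -- f < f (-x₀) on interior D; deduce f ≤ f (-x₀) on D
    have hle : ∀ z ∈ D, f z ≤ f (-x₀) := by
      intro z hz
      by_contra hc
      push_neg at hc
      set D₀ := f z - f (-x₀) with hD₀
      have hD₀pos : 0 < D₀ := sub_pos.2 hc
      have hfx₁ : f x₁ < f (-x₀) := hf x₁ hx₁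
      have hd₀pos : 0 < f z - f x₁ := by linarith
      set a : ℝ := min 1 (D₀ / (2 * (f z - f x₁))) with ha
      have ha0 : 0 < a := lt_min one_pos (by positivity)
      have ha1 : a ≤ 1 := min_le_left _ _
      have hmem := hconv.add_smul_sub_mem_interior hz hx₁ ⟨ha0, ha1⟩
      have h2 : f (z + a • (x₁ - z)) < f (-x₀) := hf _ hmem
      have h3 : f (z + a • (x₁ - z)) = f z + a * (f x₁ - f z) := by
        simp only [map_add, map_smul, map_sub, smul_eq_mul]; try ring
      have h4 : a * (f z - f x₁) ≤ D₀ / 2 := by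
        have : a ≤ D₀ / (2 * (f z - f x₁)) := min_le_right _ _
        calc a * (f z - f x₁) ≤ D₀ / (2 * (f z - f x₁)) * (f z - f x₁) := by
              exact mul_le_mul_of_nonneg_right this hd₀pos.le
          _ = D₀ / 2 := by field_simp
      rw [h3] at h2
      linarith
    -- f ≤ 0 on D by the cone property
    have hneg : ∀ z ∈ D, f z ≤ 0 := by
      intro z hz
      by_contra hc
      push_neg at hc
      have ht : (0:ℝ) ≤ (|f (-x₀)| + 1) / f z := by positivity
      have := hle _ (hsmul z hz _ ht)
      rw [map_smul, smul_eq_mul] at this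
      have h5 : (|f (-x₀)| + 1) / f z * f z = |f (-x₀)| + 1 := by field_simp
      rw [h5] at this
      have := le_abs_self (f (-x₀))
      linarith
    refine ⟨f.toLinearMap, ⟨x₁ - (-x₀), ?_⟩, hneg⟩
    · have h6 : f x₁ < f (-x₀) := hf x₁ hx₁
      simp only [ContinuousLinearMap.coe_coe, map_sub]
      intro hc
      apply absurd h6
      simp only [not_lt]
      linarith [sub_eq_zero.1 hc]
  · -- non-spanning case: take a functional vanishing on the span
    have : ∃ y : E, y ∉ Submodule.span ℝ D := by
      by_contra hc
      push_neg at hc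
      exact hU (eq_top_iff.2 fun y _ => hc y)
    obtain ⟨y, hy⟩ := this
    set U := Submodule.span ℝ D with hUdef
    set w : E := y - (U.orthogonalProjectionOnto y : E) with hw
    have hwo : w ∈ Uᗮ := Submodule.sub_starProjection_mem_orthogonal y
    have hwne : w ≠ 0 := by
      intro hc
      apply hy
      have : y = (U.orthogonalProjectionOnto y : E) := by
        have := sub_eq_zero.1 hc
        simpa [hw] using this
      rw [this]; exact (U.orthogonalProjectionOnto y).2
    refine ⟨(innerSL ℝ w).toLinearMap, ⟨w, ?_⟩, fun z hz => ?_⟩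
    · simp only [ContinuousLinearMap.coe_coe, innerSL_apply_apply]
      exact fun hc => hwne (inner_self_eq_zero.1 hc)
    · have hzU : z ∈ U := Submodule.subset_span hz
      have h7 : @inner ℝ _ _ z w = 0 := (Submodule.mem_orthogonal U w).1 hwo z hzU
      simp only [ContinuousLinearMap.coe_coe, innerSL_apply_apply]
      rw [real_inner_comm, h7]

open Module in
/-- Master lemma: a pointed convex cone in a finite-dimensional inner product space admits a
finite flag of linear functionals which is lexicographically negative on the cone and separates
the cone from `0`. -/
lemma master (n : ℕ) : ∀ (E : Type) [NormedAddCommGroup E] [InnerProductSpace ℝ E]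
    [FiniteDimensional ℝ E], finrank ℝ E ≤ n → ∀ D : Set E,
    (∀ x ∈ D, ∀ y ∈ D, x + y ∈ D) → (∀ x ∈ D, ∀ c : ℝ, 0 ≤ c → c • x ∈ D) →
    (∀ x, x ∈ D → -x ∈ D → x = 0) →
    ∃ (k : ℕ) (g : ℕ → E →ₗ[ℝ] ℝ), (∀ i, k ≤ i → g i = 0) ∧
      ∀ z ∈ D, LexNeg (fun i => g i z) ∧ ((∀ i, g i z = 0) → z = 0) := by
  induction n with
  | zero =>
    intro E _ _ _ hrank D _ _ _
    haveI : Subsingleton E := by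
      rw [← finrank_zero_iff (R := ℝ)]
      omega
    refine ⟨0, fun _ => 0, fun _ _ => rfl, fun z _ => ⟨Or.inl fun i => rfl, fun _ => Subsingleton.elim z 0⟩⟩
  | succ n ih =>
    intro E _ _ _ hrank D hadd hsmul hpt
    by_cases hD : ∀ z ∈ D, z = (0 : E)
    · refine ⟨0, fun _ => 0, fun _ _ => rfl, fun z hz => ⟨Or.inl fun i => rfl, fun _ => hD z hz⟩⟩
    · push_neg at hD
      obtain ⟨x₀, hx₀, hx₀0⟩ := hD
      obtain ⟨g₁, ⟨v, hv⟩, hg₁D⟩ :=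
        exists_nonpos_functional E D hadd hsmul hpt x₀ hx₀ hx₀0
      set K := LinearMap.ker g₁ with hK
      have hKlt : K < ⊤ := lt_top_iff_ne_top.2 fun hc => hv (by
        have : v ∈ K := hc ▸ Submodule.mem_top
        simpa [hK, LinearMap.mem_ker] using this)
      have hrankK : finrank ℝ K ≤ n := by
        have : finrank ℝ K < finrank ℝ E := Submodule.finrank_lt hKlt.ne
        omega
      set D' : Set K := {z | (z : E) ∈ D} with hD'
      have hadd' : ∀ x ∈ D', ∀ y ∈ D', x + y ∈ D' := fun x hx y hy => hadd _ hx _ hy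
      have hsmul' : ∀ x ∈ D', ∀ c : ℝ, 0 ≤ c → c • x ∈ D' := fun x hx c hc => hsmul _ hx c hc
      have hpt' : ∀ x : K, x ∈ D' → -x ∈ D' → x = 0 := fun x hx hnx =>
        Subtype.ext (hpt _ hx hnx)
      obtain ⟨k', g', hg'0, hg'⟩ := ih K hrankK D' hadd' hsmul' hpt'
      set P := K.orthogonalProjectionOnto with hP
      set g : ℕ → E →ₗ[ℝ] ℝ := fun i => match i with
        | 0 => g₁
        | i + 1 => (g' i).comp (P.toLinearMap)
        with hg
      refine ⟨k' + 1, g, ?_, ?_⟩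
      · intro i hi
        match i, hi with
        | i + 1, hi =>
          have : g' i = 0 := hg'0 i (by omega)
          simp only [hg, this, LinearMap.zero_comp]
      · intro z hz
        rcases lt_or_eq_of_le (hg₁D z hz) with hlt | heq
        · constructor
          · exact Or.inr ⟨0, fun j hj => by omega, hlt⟩
          · intro hc
            exact absurd (hc 0) (ne_of_lt hlt)
        · have hzK : z ∈ K := by simp [hK, LinearMap.mem_ker, ← heq]
          have hzD' : (⟨z, hzK⟩ : K) ∈ D' := hz
          obtain ⟨hlex, himp⟩ := hg' _ hzD'
          have hPz : ∀ i, g (i + 1) z = g' i ⟨z, hzK⟩ := by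
            intro i
            have : P z = ⟨z, hzK⟩ := Submodule.orthogonalProjectionOnto_mem_subspace_eq_self (⟨z, hzK⟩ : K)
            simp only [hg, LinearMap.comp_apply, ContinuousLinearMap.coe_coe]
            rw [hP] at this
            rw [this]
          constructor
          · rcases hlex with h | ⟨i, hj, hi⟩
            · left
              intro i
              match i with
              | 0 => show g 0 z = 0; exact heq
              | i + 1 => show g (i+1) z = 0; rw [hPz i]; exact h i
            · right
              refine ⟨i + 1, fun j hj' => ?_, by show g (i+1) z < 0; rw [hPz i]; exact hi⟩
              match j, hj' with
              | 0, _ => show g 0 z = 0; exact heq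
              | j + 1, hj' => show g (j+1) z = 0; rw [hPz j]; exact hj j (by omega)
          · intro hc
            have : ∀ i, g' i ⟨z, hzK⟩ = 0 := fun i => by rw [← hPz i]; exact hc (i + 1)
            have := himp this
            exact congrArg Subtype.val this
end Stmt3Aux


/-- if `C₁, C₂` are closed convex cones in the span of the root system (which is
all of `V` for the standard geometric representation) with `C₁ ∩ C₂ = {0}`, then there exists
a reflection ordering for which every positive root in `C₁` is smaller than every positive
root in `C₂`. -/
theorem stmt3 {B W V : Type*} [Group W] [NormedAddCommGroup V] [NormedSpace ℝ V]
    [FiniteDimensional ℝ V]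
    {M : CoxeterMatrix B} {cs : CoxeterSystem M W} (G : GeomRep M cs V)
    (C₁ C₂ : Set V)
    (h0₁ : (0 : V) ∈ C₁) (h0₂ : (0 : V) ∈ C₂)
    (hcone₁ : ∀ x ∈ C₁, ∀ y ∈ C₁, ∀ a b : ℝ, 0 ≤ a → 0 ≤ b → a • x + b • y ∈ C₁)
    (hcone₂ : ∀ x ∈ C₂, ∀ y ∈ C₂, ∀ a b : ℝ, 0 ≤ a → 0 ≤ b → a • x + b • y ∈ C₂)
    (hconv₁ : Convex ℝ C₁) (hconv₂ : Convex ℝ C₂)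
    (hcl₁ : IsClosed C₁) (hcl₂ : IsClosed C₂)
    (hint : C₁ ∩ C₂ = {0}) :
    ∃ le : V → V → Prop, G.IsReflOrdering le ∧
      ∀ α ∈ G.posRoots ∩ C₁, ∀ β ∈ G.posRoots ∩ C₂, le α β := by
  classical
  have hsp : ⊤ ≤ Submodule.span ℝ (Set.range G.simpleRoot) := G.span_top.ge
  set b : Module.Basis B ℝ V := Module.Basis.mk G.indep hsp with hbdef
  haveI : Fintype B := FiniteDimensional.fintypeBasisIndex b
  set m := Fintype.card B with hm
  set e : B ≃ Fin m := Fintype.equivFin B with he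
  set f : V →ₗ[ℝ] ℝ := b.sumCoords with hfdef
  have hb : ∀ i, b i = G.simpleRoot i := fun i => Module.Basis.mk_apply G.indep hsp i
  have hf1 : ∀ i, f (G.simpleRoot i) = 1 := by
    intro i
    rw [← hb i, hfdef]
    exact b.sumCoords_self_apply i
  have hroot1 : ∀ v ∈ G.roots, G.form v v = 1 := by
    rintro v ⟨w, i, rfl⟩
    rw [G.form_inv]
    exact G.form_simple i
  have hposne : ∀ v ∈ G.posRoots, v ≠ 0 := by
    intro v hv hc
    have h1 := hroot1 v hv.1
    rw [hc] at h1
    simp at h1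
  have hfval : ∀ c : B →₀ ℝ, f (c.sum fun i a => a • G.simpleRoot i) = c.sum fun _ a => a := by
    intro c
    rw [map_finsuppSum]
    exact Finsupp.sum_congr fun i _ => by rw [map_smul, smul_eq_mul, hf1 i, mul_one]
  have hfpos : ∀ v ∈ G.posRoots, 0 < f v := by
    intro v hv
    obtain ⟨c, hc, hvc⟩ := hv.2
    have hge : 0 ≤ f v := by
      rw [hvc, hfval]
      exact Finset.sum_nonneg fun i _ => hc i
    rcases hge.lt_or_eq with h | h
    · exact h
    · exfalso
      apply hposne v hv
      have hz : ∀ i ∈ c.support, c i = 0 := by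
        refine (Finset.sum_eq_zero_iff_of_nonneg fun i _ => hc i).1 ?_
        rw [hvc, hfval] at h
        exact h.symm
      have hc0 : c = 0 := Finsupp.ext fun i => by
        by_cases hi : i ∈ c.support
        · exact hz i hi
        · exact Finsupp.notMem_support_iff.1 hi
      rw [hvc, hc0, Finsupp.sum_zero_index]
  have hray : ∀ α ∈ G.posRoots, ∀ β ∈ G.posRoots, (f α)⁻¹ • α = (f β)⁻¹ • β → α = β := by
    intro α hα β hβ hab
    have hfa := hfpos α hα
    have hfb := hfpos β hβ
    set t := f α * (f β)⁻¹ with htdef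
    have htpos : 0 < t := by positivity
    have hαt : α = t • β := by
      calc α = (f α) • ((f α)⁻¹ • α) := by
            rw [smul_smul, mul_inv_cancel₀ hfa.ne', one_smul]
        _ = (f α) • ((f β)⁻¹ • β) := by rw [hab]
        _ = t • β := by rw [smul_smul]
    have h1 : G.form α α = t * (t * G.form β β) := by
      rw [hαt]
      simp only [map_smul, LinearMap.smul_apply, smul_eq_mul]
    rw [hroot1 α hα.1, hroot1 β hβ.1, mul_one] at h1
    have ht1 : t = 1 := by nlinarith
    rw [hαt, ht1, one_smul]
  -- the cone of differences of normalized roots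
  set S₁ : Set V := {x | x ∈ C₁ ∧ 0 ≤ f x ∧ (f x = 0 → x = 0)} with hS₁
  set S₂ : Set V := {x | x ∈ C₂ ∧ 0 ≤ f x ∧ (f x = 0 → x = 0)} with hS₂
  set D : Set V := {v | ∃ x ∈ S₁, ∃ y ∈ S₂, v = x - y} with hDdef
  have hSadd : ∀ (C : Set V), (∀ x ∈ C, ∀ y ∈ C, ∀ a c : ℝ, 0 ≤ a → 0 ≤ c → a • x + c • y ∈ C) →
      ∀ x, (x ∈ C ∧ 0 ≤ f x ∧ (f x = 0 → x = 0)) →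
      ∀ y, (y ∈ C ∧ 0 ≤ f y ∧ (f y = 0 → y = 0)) →
        (x + y ∈ C ∧ 0 ≤ f (x + y) ∧ (f (x + y) = 0 → x + y = 0)) := by
    rintro C hC x ⟨hxC, hxf, hx0⟩ y ⟨hyC, hyf, hy0⟩
    refine ⟨by simpa using hC x hxC y hyC 1 1 zero_le_one zero_le_one, ?_, ?_⟩
    · rw [map_add]; linarith
    · intro h0
      rw [map_add] at h0
      have hx' : f x = 0 := by linarith
      have hy' : f y = 0 := by linarith
      rw [hx0 hx', hy0 hy', add_zero]
  have hSsmul : ∀ (C : Set V), (∀ x ∈ C, ∀ y ∈ C, ∀ a c : ℝ, 0 ≤ a → 0 ≤ c → a • x + c • y ∈ C) →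
      ∀ x, (x ∈ C ∧ 0 ≤ f x ∧ (f x = 0 → x = 0)) → ∀ c : ℝ, 0 ≤ c →
        (c • x ∈ C ∧ 0 ≤ f (c • x) ∧ (f (c • x) = 0 → c • x = 0)) := by
    rintro C hC x ⟨hxC, hxf, hx0⟩ c hc
    refine ⟨by simpa using hC x hxC x hxC c 0 hc le_rfl, ?_, ?_⟩
    · rw [map_smul, smul_eq_mul]; exact mul_nonneg hc hxf
    · intro h0
      rw [map_smul, smul_eq_mul] at h0
      rcases mul_eq_zero.1 h0 with h | h
      · rw [h, zero_smul]
      · rw [hx0 h, smul_zero]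
  have hDadd : ∀ x ∈ D, ∀ y ∈ D, x + y ∈ D := by
    rintro v ⟨x, hx, y, hy, rfl⟩ v' ⟨x', hx', y', hy', rfl⟩
    exact ⟨x + x', hSadd C₁ hcone₁ x hx x' hx', y + y', hSadd C₂ hcone₂ y hy y' hy', by abel⟩
  have hDsmul : ∀ x ∈ D, ∀ c : ℝ, 0 ≤ c → c • x ∈ D := by
    rintro v ⟨x, hx, y, hy, rfl⟩ c hc
    exact ⟨c • x, hSsmul C₁ hcone₁ x hx c hc, c • y, hSsmul C₂ hcone₂ y hy c hc, by
      rw [smul_sub]⟩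
  have hDpt : ∀ z, z ∈ D → -z ∈ D → z = 0 := by
    rintro z ⟨x, hx, y, hy, hz⟩ ⟨x', hx', y', hy', hz'⟩
    have h2 : (x - y) + (x' - y') = 0 := by rw [← hz, ← hz']; abel
    have hsum : x + x' = y + y' := by
      rw [sub_add_sub_comm, sub_eq_zero] at h2
      exact h2
    have hmem : x + x' ∈ C₁ ∩ C₂ := by
      constructor
      · simpa using hcone₁ x hx.1 x' hx'.1 1 1 zero_le_one zero_le_one
      · rw [hsum]
        simpa using hcone₂ y hy.1 y' hy'.1 1 1 zero_le_one zero_le_one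
    rw [hint] at hmem
    have hxx' : x + x' = 0 := hmem
    have hyy' : y + y' = 0 := by rw [← hsum]; exact hxx'
    have hfx : f x = 0 := by
      have h1 := congrArg f hxx'
      rw [map_add, map_zero] at h1
      linarith [hx.2.1, hx'.2.1]
    have hfy : f y = 0 := by
      have h1 := congrArg f hyy'
      rw [map_add, map_zero] at h1
      linarith [hy.2.1, hy'.2.1]
    rw [hz, hx.2.2 hfx, hy.2.2 hfy, sub_zero]
  -- transfer to Euclidean space and apply the master lemma
  set φ : V ≃ₗ[ℝ] EuclideanSpace ℝ (Fin m) :=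
    b.equivFun ≪≫ₗ LinearEquiv.funCongrLeft ℝ ℝ e.symm ≪≫ₗ
      (WithLp.linearEquiv 2 ℝ (Fin m → ℝ)).symm with hφ
  have hrankE : Module.finrank ℝ (EuclideanSpace ℝ (Fin m)) ≤ m := by
    rw [finrank_euclideanSpace_fin]
  obtain ⟨k, gE, hgE0, hgE⟩ := Stmt3Aux.master m (EuclideanSpace ℝ (Fin m)) hrankE (φ '' D)
    (by rintro x ⟨x', hx', rfl⟩ y ⟨y', hy', rfl⟩
        exact ⟨x' + y', hDadd _ hx' _ hy', map_add φ x' y'⟩)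
    (by rintro x ⟨x', hx', rfl⟩ c hc
        exact ⟨c • x', hDsmul _ hx' c hc, map_smul φ c x'⟩)
    (by rintro x ⟨x', hx', rfl⟩ hnx
        obtain ⟨y', hy', hyx⟩ := hnx
        have hyx' : y' = -x' := by
          apply φ.injective
          rw [hyx, map_neg]
        rw [hyx'] at hy'
        rw [hDpt x' hx' hy', map_zero])
  set g : ℕ → V →ₗ[ℝ] ℝ := fun i => (gE i).comp φ.toLinearMap with hgdef
  have hg0 : ∀ i, k ≤ i → g i = 0 := by
    intro i hi
    simp only [hgdef, hgE0 i hi, LinearMap.zero_comp]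
  have hgD : ∀ z ∈ D, Stmt3Aux.LexNeg (fun i => g i z) ∧ ((∀ i, g i z = 0) → z = 0) := by
    intro z hz
    obtain ⟨hlex, himp⟩ := hgE (φ z) ⟨z, hz, rfl⟩
    refine ⟨hlex, fun hc => ?_⟩
    have hz0 : φ z = 0 := himp hc
    exact φ.map_eq_zero_iff.1 hz0
  -- the combined flag of functionals and the ordering
  set hh : ℕ → V →ₗ[ℝ] ℝ := fun i =>
    if i < k then g i else if him : i - k < m then b.coord (e.symm ⟨i - k, him⟩) else 0
    with hhdef
  set N : V → ℕ → ℝ := fun v i => hh i ((f v)⁻¹ • v) with hNdef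
  set le : V → V → Prop := fun u v => Stmt3Aux.LexLE (N u) (N v) with hledef
  have hantisym : ∀ α ∈ G.posRoots, ∀ β ∈ G.posRoots, le α β → le β α → α = β := by
    intro α hα β hβ h1 h2
    have hNab : N α = N β := Stmt3Aux.lexLE_antisymm h1 h2
    have hcoord : ∀ j : B, b.repr ((f α)⁻¹ • α) j = b.repr ((f β)⁻¹ • β) j := by
      intro j
      have hidx := congrFun hNab (k + (e j : ℕ))
      have hik : ¬ (k + (e j : ℕ) < k) := by omega
      have him : k + (e j : ℕ) - k < m := by
        have := (e j).isLt
        omega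
      have hsymm : e.symm ⟨k + (e j : ℕ) - k, him⟩ = j := by
        have heq : (⟨k + (e j : ℕ) - k, him⟩ : Fin m) = e j := by
          ext
          simp
        rw [heq, Equiv.symm_apply_apply]
      simp only [hNdef, hhdef, if_neg hik, dif_pos him, hsymm, Module.Basis.coord_apply] at hidx
      exact hidx
    have hhat : (f α)⁻¹ • α = (f β)⁻¹ • β := by
      apply b.repr.injective
      ext j
      exact hcoord j
    exact hray α hα β hβ hhat
  have haxiom4 : ∀ α ∈ G.posRoots, ∀ β ∈ G.posRoots, ∀ a c : ℝ, 0 < a → 0 < c →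
      a • α + c • β ∈ G.posRoots →
      (le α (a • α + c • β) ∧ le (a • α + c • β) β) ∨
      (le β (a • α + c • β) ∧ le (a • α + c • β) α) := by
    intro α hα β hβ a c ha hc hγ
    have hfα := hfpos α hα
    have hfβ := hfpos β hβ
    have hfγ := hfpos _ hγ
    have hfγval : f (a • α + c • β) = a * f α + c * f β := by
      rw [map_add, map_smul, map_smul, smul_eq_mul, smul_eq_mul]
    have hfα' := hfα.ne'
    have hfβ' := hfβ.ne'
    have hfγ' := hfγ.ne'
    set t := a * f α / f (a • α + c • β) with htdef
    set s := c * f β / f (a • α + c • β) with hsdef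
    have htpos : 0 < t := by positivity
    have hspos : 0 < s := by positivity
    have hts : t + s = 1 := by
      rw [htdef, hsdef, ← add_div, ← hfγval, div_self hfγ']
    have hcomb : ∀ i, N (a • α + c • β) i = t * N α i + s * N β i := by
      intro i
      simp only [hNdef]
      rw [map_smul, map_smul, map_smul, smul_eq_mul, smul_eq_mul, smul_eq_mul]
      have hγi : hh i (a • α + c • β) = a * hh i α + c * hh i β := by
        rw [map_add, map_smul, map_smul, smul_eq_mul, smul_eq_mul]
      rw [hγi, htdef, hsdef]
      field_simp
    have hcombfun : N (a • α + c • β) = fun i => t * N α i + s * N β i := funext hcomb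
    rcases Stmt3Aux.lexLE_total (N α) (N β) with h | h
    · left
      obtain ⟨h1, h2⟩ := Stmt3Aux.lexLE_combo t s htpos hspos hts h
      constructor
      · show Stmt3Aux.LexLE (N α) (N (a • α + c • β))
        rw [hcombfun]
        exact h1
      · show Stmt3Aux.LexLE (N (a • α + c • β)) (N β)
        rw [hcombfun]
        exact h2
    · right
      have hcombfun' : N (a • α + c • β) = fun i => s * N β i + t * N α i := by
        rw [hcombfun]
        funext i
        ring
      obtain ⟨h1, h2⟩ := Stmt3Aux.lexLE_combo s t hspos htpos (by linarith) h
      constructor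
      · show Stmt3Aux.LexLE (N β) (N (a • α + c • β))
        rw [hcombfun']
        exact h1
      · show Stmt3Aux.LexLE (N (a • α + c • β)) (N α)
        rw [hcombfun']
        exact h2
  have hmain : ∀ α ∈ G.posRoots ∩ C₁, ∀ β ∈ G.posRoots ∩ C₂, le α β := by
    rintro α ⟨hαP, hαC⟩ β ⟨hβP, hβC⟩
    have hfα := hfpos α hαP
    have hfβ := hfpos β hβP
    have hhatα : ((f α)⁻¹ • α ∈ C₁ ∧ 0 ≤ f ((f α)⁻¹ • α) ∧ (f ((f α)⁻¹ • α) = 0 → (f α)⁻¹ • α = 0)) := by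
      refine ⟨?_, ?_, ?_⟩
      · have := hcone₁ α hαC α hαC (f α)⁻¹ 0 (by positivity) le_rfl
        simpa using this
      · rw [map_smul, smul_eq_mul, inv_mul_cancel₀ hfα.ne']
        norm_num
      · intro h0
        rw [map_smul, smul_eq_mul, inv_mul_cancel₀ hfα.ne'] at h0
        norm_num at h0
    have hhatβ : ((f β)⁻¹ • β ∈ C₂ ∧ 0 ≤ f ((f β)⁻¹ • β) ∧ (f ((f β)⁻¹ • β) = 0 → (f β)⁻¹ • β = 0)) := by
      refine ⟨?_, ?_, ?_⟩
      · have := hcone₂ β hβC β hβC (f β)⁻¹ 0 (by positivity) le_rfl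
        simpa using this
      · rw [map_smul, smul_eq_mul, inv_mul_cancel₀ hfβ.ne']
        norm_num
      · intro h0
        rw [map_smul, smul_eq_mul, inv_mul_cancel₀ hfβ.ne'] at h0
        norm_num at h0
    have hzD : (f α)⁻¹ • α - (f β)⁻¹ • β ∈ D := ⟨_, hhatα, _, hhatβ, rfl⟩
    obtain ⟨hlex, himp⟩ := hgD _ hzD
    rcases hlex with hz0 | ⟨i₀, hj, hi₀⟩
    · have hz : (f α)⁻¹ • α - (f β)⁻¹ • β = 0 := himp fun i => hz0 i
      have hhat : (f α)⁻¹ • α = (f β)⁻¹ • β := sub_eq_zero.1 hz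
      show Stmt3Aux.LexLE (N α) (N β)
      left
      funext i
      simp only [hNdef, hhat]
    · have hi₀k : i₀ < k := by
        by_contra hcon
        push_neg at hcon
        have hz0 : g i₀ = 0 := hg0 i₀ hcon
        have : g i₀ ((f α)⁻¹ • α - (f β)⁻¹ • β) < 0 := hi₀
        rw [hz0] at this
        simp at this
      show Stmt3Aux.LexLE (N α) (N β)
      right
      refine ⟨i₀, fun j hji => ?_, ?_⟩
      · have hjk : j < k := lt_trans hji hi₀k
        have hgj : g j ((f α)⁻¹ • α - (f β)⁻¹ • β) = 0 := hj j hji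
        have hsub : hh j ((f α)⁻¹ • α) - hh j ((f β)⁻¹ • β) = 0 := by
          rw [← map_sub]
          simp only [hhdef, if_pos hjk]
          exact hgj
        have := sub_eq_zero.1 hsub
        simpa only [hNdef] using this
      · have hgi : g i₀ ((f α)⁻¹ • α - (f β)⁻¹ • β) < 0 := hi₀
        have hsub : hh i₀ ((f α)⁻¹ • α) - hh i₀ ((f β)⁻¹ • β) < 0 := by
          rw [← map_sub]
          simp only [hhdef, if_pos hi₀k]
          exact hgi
        show N α i₀ < N β i₀
        simp only [hNdef]
        linarith
  refine ⟨le, ⟨?_, hantisym, ?_, haxiom4⟩, hmain⟩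
  · intro α _ β _
    exact Stmt3Aux.lexLE_total (N α) (N β)
  · intro α _ β _ γ _ h1 h2
    exact Stmt3Aux.lexLE_trans h1 h2
end

section
/- Fix n, r ≥ 1 and ε > 0, and let x₁,…,x_r : [0,ε) → ℝⁿ be continuous. For I ⊆ {1,…,r} and t ∈ [0,ε), let F_I(t) = conv{x_i(t) : i ∈ I}, and let P(t) = F_{{1,…,r}}(t). Assume that for every t ∈ (0,ε) the points x_i(t) are distinct vertices of P(t), and that if F_I(t₀) is a k-dimensional face of P(t₀) for some t₀ ∈ (0,ε) then F_I(t) is a k-dimensional face of P(t) for all t ∈ (0,ε). If F(t) = F_I(t) is a face of P(t) for all t ∈ (0,ε), then every point of the topological boundary of F(0) (relative to its affine span, when F(0) is full-dimensional therein) lies in F_J(0) for some J ⊆ I with F_J(t) a proper face of F(t) for t ∈ (0,ε). -/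
open Set

/-- The convex hull of the points `x i t` for `i ∈ I`. -/
def movFace {n r : ℕ} (x : Fin r → ℝ → EuclideanSpace ℝ (Fin n)) (I : Set (Fin r)) (t : ℝ) :
    Set (EuclideanSpace ℝ (Fin n)) :=
  convexHull ℝ ((fun i => x i t) '' I)

/-- The moving polytope `P(t) = conv{x₁(t), …, x_r(t)}`. -/
def movPoly {n r : ℕ} (x : Fin r → ℝ → EuclideanSpace ℝ (Fin n)) (t : ℝ) :
    Set (EuclideanSpace ℝ (Fin n)) :=
  movFace x Set.univ t

/-- The dimension of a subset of Euclidean space: the dimension of its affine span. -/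
noncomputable def movDim {n : ℕ} (s : Set (EuclideanSpace ℝ (Fin n))) : ℕ :=
  Module.finrank ℝ (affineSpan ℝ s).direction
section Helpers

variable {n r : ℕ} {x : Fin r → ℝ → EuclideanSpace ℝ (Fin n)}

open Finset in
private lemma fiber_aux {ι : Type*} (tf : Finset ι) (g : ι → Fin r) (w : ι → ℝ)
    (v : Fin r → EuclideanSpace ℝ (Fin n)) :
    ((∑ j : Fin r, ∑ i ∈ tf.filter (fun i => g i = j), w i) = ∑ i ∈ tf, w i) ∧
    ((∑ j : Fin r, (∑ i ∈ tf.filter (fun i => g i = j), w i) • v j) = ∑ i ∈ tf, w i • v (g i)) := by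
  classical
  constructor
  · exact Finset.sum_fiberwise_of_maps_to (fun i _ => Finset.mem_univ _) w
  · rw [← Finset.sum_fiberwise_of_maps_to (fun i _ => Finset.mem_univ (g i))
      (fun i => w i • v (g i))]
    refine Finset.sum_congr rfl fun j _ => ?_
    rw [Finset.sum_smul]
    refine Finset.sum_congr rfl fun i hi => ?_
    rw [(Finset.mem_filter.1 hi).2]

lemma mem_movFace {I : Set (Fin r)} {t : ℝ} {z : EuclideanSpace ℝ (Fin n)} :
    z ∈ movFace x I t ↔ ∃ w : Fin r → ℝ, (∀ i, 0 ≤ w i) ∧ (∀ i, i ∉ I → w i = 0) ∧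
      ∑ i, w i = 1 ∧ ∑ i, w i • x i t = z := by
  classical
  constructor
  · intro hz
    rw [movFace, Set.image_eq_range, convexHull_range_eq_exists_affineCombination] at hz
    obtain ⟨s, w, hw0, hw1, hac⟩ := hz
    rw [Finset.affineCombination_eq_linear_combination s _ w hw1] at hac
    refine ⟨fun j => ∑ i ∈ s.filter (fun i : I => (i : Fin r) = j), w i, ?_, ?_, ?_, ?_⟩
    · intro j
      exact Finset.sum_nonneg fun i hi => hw0 i (Finset.mem_filter.1 hi).1
    · intro j hj
      refine Finset.sum_eq_zero fun i hi => absurd ?_ hj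
      rw [← (Finset.mem_filter.1 hi).2]; exact i.2
    · rw [(fiber_aux s (fun i : I => (i : Fin r)) w (fun j => x j t)).1, hw1]
    · rw [(fiber_aux s (fun i : I => (i : Fin r)) w (fun j => x j t)).2]; exact hac
  · rintro ⟨w, hw0, hwI, hw1, rfl⟩
    have hsub : (Finset.univ.filter (· ∈ I)) ⊆ Finset.univ := Finset.subset_univ _
    have hsum : ∑ i ∈ Finset.univ.filter (· ∈ I), w i = 1 := by
      rw [← hw1]
      exact Finset.sum_subset hsub (fun i _ hi => hwI i (by simpa using hi))
    have := Finset.centerMass_mem_convexHull (Finset.univ.filter (· ∈ I))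
      (w := w) (fun i hi => hw0 i) (by rw [hsum]; norm_num)
      (z := fun i => x i t) (fun i hi => Set.mem_image_of_mem _ (by simpa using hi))
    rw [Finset.centerMass_eq_of_sum_1 _ _ hsum] at this
    have heq : ∑ i ∈ Finset.univ.filter (· ∈ I), w i • x i t = ∑ i, w i • x i t :=
      Finset.sum_subset hsub (fun i _ hi => by rw [hwI i (by simpa using hi), zero_smul])
    rw [heq] at this
    exact this

end Helpers
section Helpers2

variable {n r : ℕ} {x : Fin r → ℝ → EuclideanSpace ℝ (Fin n)}

lemma mem_span_movFace {I : Set (Fin r)} {t : ℝ} {z : EuclideanSpace ℝ (Fin n)} :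
    z ∈ (affineSpan ℝ (movFace x I t) : Set (EuclideanSpace ℝ (Fin n))) ↔
      ∃ μ : Fin r → ℝ, (∀ i, i ∉ I → μ i = 0) ∧ ∑ i, μ i = 1 ∧ ∑ i, μ i • x i t = z := by
  classical
  rw [movFace, affineSpan_convexHull]
  constructor
  · intro hz
    rw [Set.image_eq_range] at hz
    obtain ⟨s, w, hw1, hac⟩ := eq_affineCombination_of_mem_affineSpan hz
    rw [Finset.affineCombination_eq_linear_combination s _ w hw1] at hac
    refine ⟨fun j => ∑ i ∈ s.filter (fun i : I => (i : Fin r) = j), w i, ?_, ?_, ?_⟩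
    · intro j hj
      refine Finset.sum_eq_zero fun i hi => absurd ?_ hj
      rw [← (Finset.mem_filter.1 hi).2]; exact i.2
    · rw [(fiber_aux s (fun i : I => (i : Fin r)) w (fun j => x j t)).1, hw1]
    · rw [(fiber_aux s (fun i : I => (i : Fin r)) w (fun j => x j t)).2]; exact hac.symm
  · rintro ⟨μ, hμI, hμ1, rfl⟩
    have hI : I.Nonempty := by
      by_contra hI
      rw [Set.not_nonempty_iff_eq_empty] at hI
      subst hI
      have : ∀ i : Fin r, μ i = 0 := fun i => hμI i (by simp)
      simp [this] at hμ1
    obtain ⟨i₀, hi₀⟩ := hI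
    have hq₀ : x i₀ t ∈ affineSpan ℝ ((fun i => x i t) '' I) :=
      mem_affineSpan ℝ (Set.mem_image_of_mem _ hi₀)
    have hdir : (∑ j, μ j • (x j t - x i₀ t)) ∈
        (affineSpan ℝ ((fun i => x i t) '' I)).direction := by
      refine Submodule.sum_mem _ fun j _ => ?_
      by_cases hj : j ∈ I
      · refine Submodule.smul_mem _ _ ?_
        have := AffineSubspace.vsub_mem_direction
          (mem_affineSpan ℝ (Set.mem_image_of_mem (fun i => x i t) hj)) hq₀
        simpa [vsub_eq_sub] using this
      · rw [hμI j hj, zero_smul]; exact Submodule.zero_mem _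
    have hrep : (∑ j, μ j • x j t) = (∑ j, μ j • (x j t - x i₀ t)) +ᵥ x i₀ t := by
      rw [vadd_eq_add]
      rw [show (∑ j, μ j • (x j t - x i₀ t)) = ∑ j, (μ j • x j t - μ j • x i₀ t) by
        refine Finset.sum_congr rfl fun j _ => by rw [smul_sub]]
      rw [Finset.sum_sub_distrib, ← Finset.sum_smul, hμ1, one_smul]
      abel
    rw [hrep]
    exact AffineSubspace.vadd_mem_of_mem_direction hdir hq₀

lemma movFace_mono {I J : Set (Fin r)} (h : J ⊆ I) (t : ℝ) :
    movFace x J t ⊆ movFace x I t :=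
  convexHull_mono (Set.image_mono h)

lemma movFace_subset_movPoly (I : Set (Fin r)) (t : ℝ) :
    movFace x I t ⊆ movPoly x t :=
  movFace_mono (Set.subset_univ I) t

lemma movFace_convex (I : Set (Fin r)) (t : ℝ) : Convex ℝ (movFace x I t) :=
  convex_convexHull ℝ _

lemma movFace_isCompact (I : Set (Fin r)) (t : ℝ) : IsCompact (movFace x I t) :=
  ((I.toFinite.image _).isCompact_convexHull ℝ)

lemma movFace_isClosed (I : Set (Fin r)) (t : ℝ) : IsClosed (movFace x I t) :=
  (movFace_isCompact I t).isClosed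

lemma movFace_empty (t : ℝ) : movFace x (∅ : Set (Fin r)) t = ∅ := by
  simp [movFace]

lemma movFace_nonempty {I : Set (Fin r)} (hI : I.Nonempty) (t : ℝ) :
    (movFace x I t).Nonempty := by
  obtain ⟨i, hi⟩ := hI
  exact ⟨x i t, subset_convexHull ℝ _ (Set.mem_image_of_mem _ hi)⟩

lemma movFace_nonempty_iff {I : Set (Fin r)} {t : ℝ} :
    (movFace x I t).Nonempty ↔ I.Nonempty := by
  refine ⟨fun ⟨z, hz⟩ => ?_, fun h => movFace_nonempty h t⟩
  by_contra hI
  rw [Set.not_nonempty_iff_eq_empty] at hI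
  subst hI
  rw [movFace_empty] at hz
  exact hz

end Helpers2
section ArgMax

variable {n r : ℕ} {x : Fin r → ℝ → EuclideanSpace ℝ (Fin n)}

/-- The set of indices in `I` maximizing `l` at the vertices. -/
def argmaxSet (x : Fin r → ℝ → EuclideanSpace ℝ (Fin n)) (I : Set (Fin r)) (t : ℝ)
    (l : EuclideanSpace ℝ (Fin n) →L[ℝ] ℝ) : Set (Fin r) :=
  {i | i ∈ I ∧ ∀ j ∈ I, l (x j t) ≤ l (x i t)}

lemma argmaxSet_subset (I : Set (Fin r)) (t : ℝ) (l : EuclideanSpace ℝ (Fin n) →L[ℝ] ℝ) :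
    argmaxSet x I t l ⊆ I := fun _ h => h.1

lemma argmaxSet_nonempty {I : Set (Fin r)} (hI : I.Nonempty) (t : ℝ)
    (l : EuclideanSpace ℝ (Fin n) →L[ℝ] ℝ) : (argmaxSet x I t l).Nonempty := by
  classical
  have hfin : (I.toFinite.toFinset).Nonempty := by
    obtain ⟨i, hi⟩ := hI
    exact ⟨i, I.toFinite.mem_toFinset.2 hi⟩
  obtain ⟨i, hi, hmax⟩ := Finset.exists_max_image (I.toFinite.toFinset)
    (fun i => l (x i t)) hfin
  refine ⟨i, by simpa [Set.Finite.mem_toFinset] using hi, fun j hj => hmax j ?_⟩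
  simpa [Set.Finite.mem_toFinset] using hj

lemma le_argmax {I : Set (Fin r)} {t : ℝ} {l : EuclideanSpace ℝ (Fin n) →L[ℝ] ℝ}
    {i₁ : Fin r} (hi₁ : i₁ ∈ argmaxSet x I t l) {z : EuclideanSpace ℝ (Fin n)}
    (hz : z ∈ movFace x I t) : l z ≤ l (x i₁ t) := by
  obtain ⟨w, hw0, hwI, hw1, rfl⟩ := mem_movFace.1 hz
  rw [map_sum]
  have : ∀ i : Fin r, l (w i • x i t) ≤ w i * l (x i₁ t) := by
    intro i
    rw [map_smul, smul_eq_mul]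
    by_cases hi : i ∈ I
    · exact mul_le_mul_of_nonneg_left (hi₁.2 i hi) (hw0 i)
    · simp [hwI i hi]
  calc ∑ i, l (w i • x i t) ≤ ∑ i, w i * l (x i₁ t) := Finset.sum_le_sum fun i _ => this i
    _ = (∑ i, w i) * l (x i₁ t) := by rw [Finset.sum_mul]
    _ = l (x i₁ t) := by rw [hw1, one_mul]

/-- The exposed face of `movFace x I t` determined by `l` is `movFace` of the argmax set. -/
lemma exposed_movFace_eq {I : Set (Fin r)} (hI : I.Nonempty) (t : ℝ)
    (l : EuclideanSpace ℝ (Fin n) →L[ℝ] ℝ) :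
    {z ∈ movFace x I t | ∀ y ∈ movFace x I t, l y ≤ l z} = movFace x (argmaxSet x I t l) t := by
  classical
  obtain ⟨i₁, hi₁⟩ := argmaxSet_nonempty (x := x) hI t l
  have hv : x i₁ t ∈ movFace x I t :=
    subset_convexHull ℝ _ (Set.mem_image_of_mem _ hi₁.1)
  ext z
  constructor
  · rintro ⟨hzF, hzmax⟩
    have hlz : l z = l (x i₁ t) :=
      le_antisymm (le_argmax hi₁ hzF) (hzmax _ hv)
    obtain ⟨w, hw0, hwI, hw1, rfl⟩ := mem_movFace.1 hzF
    -- each term w i * (l (x i₁ t) - l (x i t)) is nonneg and they sum to 0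
    have hsum0 : ∑ i, w i * (l (x i₁ t) - l (x i t)) = 0 := by
      have hlz' : ∑ i, w i * l (x i t) = l (x i₁ t) := by
        rw [← hlz, map_sum]
        refine Finset.sum_congr rfl fun i _ => by rw [map_smul, smul_eq_mul]
      have : ∑ i, w i * (l (x i₁ t) - l (x i t))
          = (∑ i, w i) * l (x i₁ t) - ∑ i, w i * l (x i t) := by
        rw [Finset.sum_mul, ← Finset.sum_sub_distrib]
        exact Finset.sum_congr rfl fun i _ => by ring
      rw [this, hw1, one_mul, hlz', sub_self]
    have hterm : ∀ i ∈ Finset.univ, 0 ≤ w i * (l (x i₁ t) - l (x i t)) := by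
      intro i _
      by_cases hi : i ∈ I
      · exact mul_nonneg (hw0 i) (sub_nonneg.2 (hi₁.2 i hi))
      · simp [hwI i hi]
    have hzero := (Finset.sum_eq_zero_iff_of_nonneg hterm).1 hsum0
    refine mem_movFace.2 ⟨w, hw0, ?_, hw1, rfl⟩
    intro i hiA
    by_cases hi : i ∈ I
    · -- i ∈ I but not argmax: l (x i t) < l (x i₁ t)
      by_contra hwne
      have hlt : l (x i t) < l (x i₁ t) := by
        rcases lt_or_eq_of_le (hi₁.2 i hi) with h | h
        · exact h
        · exact absurd ⟨hi, fun j hj => h ▸ hi₁.2 j hj⟩ hiA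
      have := hzero i (Finset.mem_univ i)
      rcases mul_eq_zero.1 this with h | h
      · exact hwne h
      · exact absurd h (sub_ne_zero.2 (ne_of_gt hlt))
    · exact hwI i hi
  · intro hz
    have hzF : z ∈ movFace x I t := movFace_mono (argmaxSet_subset I t l) t hz
    refine ⟨hzF, fun y hy => ?_⟩
    obtain ⟨w, hw0, hwJ, hw1, rfl⟩ := mem_movFace.1 hz
    have hlz : l (∑ i, w i • x i t) = l (x i₁ t) := by
      rw [map_sum]
      have : ∀ i : Fin r, l (w i • x i t) = w i * l (x i₁ t) := by
        intro i
        rw [map_smul, smul_eq_mul]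
        by_cases hi : i ∈ argmaxSet x I t l
        · have h1 : l (x i t) = l (x i₁ t) :=
            le_antisymm (hi₁.2 i hi.1) (hi.2 i₁ hi₁.1)
          rw [h1]
        · simp [hwJ i hi]
      rw [Finset.sum_congr rfl fun i _ => this i, ← Finset.sum_mul, hw1, one_mul]
    rw [hlz]
    exact le_argmax hi₁ hy

lemma isExposed_argmax {I : Set (Fin r)} (hI : I.Nonempty) (t : ℝ)
    (l : EuclideanSpace ℝ (Fin n) →L[ℝ] ℝ) :
    IsExposed ℝ (movFace x I t) (movFace x (argmaxSet x I t l) t) :=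
  fun _ => ⟨l, (exposed_movFace_eq hI t l).symm⟩

end ArgMax
section DimIntrinsic

variable {n : ℕ}

local notation "E" => EuclideanSpace ℝ (Fin n)

/-- A proper exposed subset has strictly smaller dimension. -/
lemma movDim_lt_of_exposed {B C : Set (EuclideanSpace ℝ (Fin n))}
    (hBC : IsExposed ℝ C B) (hne : B ≠ C) (hBne : B.Nonempty) : movDim B < movDim C := by
  obtain ⟨l, hl⟩ := hBC hBne
  obtain ⟨b, hb⟩ := hBne
  have hbC : b ∈ C := (hl ▸ hb).1
  have hbmax : ∀ y ∈ C, l y ≤ l b := (hl ▸ hb).2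
  -- get a ∈ C with l a < l b
  have hsub : B ⊆ C := hBC.subset
  obtain ⟨a, haC, haB⟩ : ∃ a, a ∈ C ∧ a ∉ B := by
    by_contra h
    push_neg at h
    exact hne (Set.Subset.antisymm hsub fun c hc => h c hc)
  have hab : l a < l b := by
    have : ¬(a ∈ C ∧ ∀ y ∈ C, l y ≤ l a) := by rw [← Set.mem_setOf_eq (p := fun x => x ∈ C ∧ ∀ y ∈ C, l y ≤ l x), ← hl]; exact haB
    push_neg at this
    obtain ⟨y, hy, hya⟩ := this haC
    exact lt_of_lt_of_le hya (hbmax y hy)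
  -- direction of span B inside ker l ⊓ vectorSpan C
  have hBker : (affineSpan ℝ B).direction ≤
      (LinearMap.ker (l : EuclideanSpace ℝ (Fin n) →ₗ[ℝ] ℝ)) ⊓ vectorSpan ℝ C := by
    refine le_inf ?_ ?_
    · rw [direction_affineSpan, vectorSpan_def]
      refine Submodule.span_le.2 ?_
      rintro v ⟨p, hp, q, hq, rfl⟩
      have hp' : l p = l b := le_antisymm (hbmax p (hsub hp)) ((hl ▸ hp).2 b hbC)
      have hq' : l q = l b := le_antisymm (hbmax q (hsub hq)) ((hl ▸ hq).2 b hbC)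
      simp only [SetLike.mem_coe, LinearMap.mem_ker, vsub_eq_sub]
      simp [map_sub, hp', hq']
    · rw [direction_affineSpan]
      exact vectorSpan_mono ℝ hsub
  have hlt : (LinearMap.ker (l : EuclideanSpace ℝ (Fin n) →ₗ[ℝ] ℝ)) ⊓ vectorSpan ℝ C
      < vectorSpan ℝ C := by
    refine lt_of_le_of_ne inf_le_right ?_
    intro h
    have hmem : b - a ∈ vectorSpan ℝ C := by
      have := vsub_mem_vectorSpan ℝ hbC haC
      simpa [vsub_eq_sub] using this
    rw [← h] at hmem
    have : l (b - a) = 0 := hmem.1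
    rw [map_sub] at this
    linarith
  calc movDim B ≤ Module.finrank ℝ
        ((LinearMap.ker (l : EuclideanSpace ℝ (Fin n) →ₗ[ℝ] ℝ)) ⊓ vectorSpan ℝ C :
          Submodule ℝ (EuclideanSpace ℝ (Fin n))) := Submodule.finrank_mono hBker
    _ < Module.finrank ℝ (vectorSpan ℝ C) := Submodule.finrank_lt_finrank_of_lt hlt
    _ = movDim C := by rw [movDim, direction_affineSpan]

/-- Sufficient condition for membership in the intrinsic interior. -/
lemma mem_intrinsicInterior_of_ball {A : Set (EuclideanSpace ℝ (Fin n))} {q : EuclideanSpace ℝ (Fin n)}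
    (hqA : q ∈ A) {ρ : ℝ} (hρ : 0 < ρ)
    (h : ∀ y ∈ Metric.ball q ρ, y ∈ (affineSpan ℝ A : Set (EuclideanSpace ℝ (Fin n))) → y ∈ A) :
    q ∈ intrinsicInterior ℝ A := by
  have hq : q ∈ affineSpan ℝ A := subset_affineSpan ℝ A hqA
  refine mem_intrinsicInterior.2 ⟨⟨q, hq⟩, ?_, rfl⟩
  have hop : IsOpen ((↑) ⁻¹' (Metric.ball q ρ) : Set (affineSpan ℝ A)) :=
    Metric.isOpen_ball.preimage continuous_subtype_val
  have hsub : ((↑) ⁻¹' (Metric.ball q ρ) : Set (affineSpan ℝ A)) ⊆ (↑) ⁻¹' A := by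
    rintro ⟨y, hy⟩ hmem
    exact h y hmem hy
  have hqmem : (⟨q, hq⟩ : affineSpan ℝ A) ∈ ((↑) ⁻¹' (Metric.ball q ρ) : Set (affineSpan ℝ A)) := by
    simp only [Set.mem_preimage]
    exact Metric.mem_ball_self hρ
  exact interior_maximal hsub hop hqmem

/-- Membership in the intrinsic interior gives a relative ball inside the set. -/
lemma ball_of_mem_intrinsicInterior {A : Set (EuclideanSpace ℝ (Fin n))}
    {q : EuclideanSpace ℝ (Fin n)} (hq : q ∈ intrinsicInterior ℝ A) :
    ∃ ρ > 0, ∀ y ∈ Metric.ball q ρ,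
      y ∈ (affineSpan ℝ A : Set (EuclideanSpace ℝ (Fin n))) → y ∈ A := by
  obtain ⟨⟨q', hq'⟩, hint, rfl⟩ := mem_intrinsicInterior.1 hq
  obtain ⟨ρ, hρ, hball⟩ := Metric.isOpen_iff.1 isOpen_interior _ hint
  refine ⟨ρ, hρ, fun y hy hyspan => ?_⟩
  have hyA : (⟨y, hyspan⟩ : affineSpan ℝ A) ∈ (Subtype.val ⁻¹' A : Set (affineSpan ℝ A)) := by
    refine interior_subset (hball ?_)
    rw [Metric.mem_ball, Subtype.dist_eq]
    exact hy
  exact hyA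

lemma not_mem_intrinsicFrontier_of_mem_intrinsicInterior {A : Set (EuclideanSpace ℝ (Fin n))}
    {q : EuclideanSpace ℝ (Fin n)} (hq : q ∈ intrinsicInterior ℝ A) :
    q ∉ intrinsicFrontier ℝ A := by
  rintro ⟨y, hyf, hyq⟩
  obtain ⟨y', hyi, hy'q⟩ := mem_intrinsicInterior.1 hq
  have heq : y = y' := Subtype.coe_injective (hyq.trans hy'q.symm)
  subst heq
  exact hyf.2 hyi

end DimIntrinsic
section Support

open scoped Pointwise

variable {n : ℕ}

/-- A point of a convex set not in its intrinsic interior admits a supporting functional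
which is not constant on the set. -/
lemma exists_support_functional {A : Set (EuclideanSpace ℝ (Fin n))} (hA : Convex ℝ A)
    {z : EuclideanSpace ℝ (Fin n)} (hzA : z ∈ A) (hz : z ∉ intrinsicInterior ℝ A) :
    ∃ l : EuclideanSpace ℝ (Fin n) →L[ℝ] ℝ,
      (∀ y ∈ A, l y ≤ l z) ∧ {a ∈ A | ∀ y ∈ A, l y ≤ l a} ≠ A := by
  classical
  set W := (affineSpan ℝ A).direction with hW
  set T : Set (EuclideanSpace ℝ (Fin n)) := A + (Wᗮ : Set (EuclideanSpace ℝ (Fin n))) with hT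
  have hTconv : Convex ℝ T := hA.add Wᗮ.convex
  have hAT : A ⊆ T := by
    intro a ha
    exact ⟨a, ha, 0, Submodule.zero_mem _, by simp⟩
  -- z is not in the interior of T
  have hzint : z ∉ interior T := by
    intro hzi
    apply hz
    obtain ⟨ρ, hρ, hball⟩ := Metric.isOpen_iff.1 isOpen_interior z hzi
    refine mem_intrinsicInterior_of_ball hzA hρ (fun y hy hyspan => ?_)
    obtain ⟨a, haA, u, hu, hau⟩ := hball hy |> interior_subset
    have hau' : a + u = y := hau
    have hyaW : y - a ∈ W := by
      have := AffineSubspace.vsub_mem_direction hyspan (subset_affineSpan ℝ A haA)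
      simpa [vsub_eq_sub] using this
    have huW : u ∈ W := by
      have h2 : u = y - a := by rw [← hau']; abel
      rwa [h2]
    have hu0 : u = 0 := by
      have h1 : (inner ℝ u u : ℝ) = 0 := (Submodule.mem_orthogonal W u).1 hu u huW
      exact inner_self_eq_zero.1 h1
    rw [hu0, add_zero] at hau'
    rwa [← hau']
  -- a point of A in the interior of T
  obtain ⟨p, hp⟩ := Set.Nonempty.intrinsicInterior hA ⟨z, hzA⟩
  have hpA : p ∈ A := intrinsicInterior_subset hp
  obtain ⟨ρ, hρ, hrel⟩ := ball_of_mem_intrinsicInterior hp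
  have hballT : Metric.ball p ρ ⊆ T := by
    intro e he
    set v := e - p with hv
    set w : EuclideanSpace ℝ (Fin n) := (W.orthogonalProjectionOnto v : EuclideanSpace ℝ (Fin n))
      with hwdef
    have hwW : w ∈ W := SetLike.coe_mem _
    have huperp : v - w ∈ Wᗮ := W.sub_starProjection_mem_orthogonal v
    have hwnorm : ‖w‖ ≤ ‖v‖ := by
      calc ‖w‖ ≤ ‖W.orthogonalProjectionOnto‖ * ‖v‖ := (W.orthogonalProjectionOnto).le_opNorm v
        _ ≤ 1 * ‖v‖ := by
            exact mul_le_mul_of_nonneg_right (Submodule.orthogonalProjectionOnto_norm_le W) (norm_nonneg v)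
        _ = ‖v‖ := one_mul _
    have hpw_span : p + w ∈ affineSpan ℝ A := by
      have := AffineSubspace.vadd_mem_of_mem_direction (hW ▸ hwW) (subset_affineSpan ℝ A hpA)
      simpa [vadd_eq_add, add_comm] using this
    have hpw_ball : p + w ∈ Metric.ball p ρ := by
      rw [Metric.mem_ball, dist_eq_norm, add_sub_cancel_left]
      calc ‖w‖ ≤ ‖v‖ := hwnorm
        _ = dist e p := by rw [dist_eq_norm]
        _ < ρ := he
    have hpwA : p + w ∈ A := hrel _ hpw_ball hpw_span
    refine ⟨p + w, hpwA, v - w, huperp, ?_⟩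
    show p + w + (v - w) = e
    rw [hv]; abel
  have hpint : p ∈ interior T :=
    interior_maximal hballT Metric.isOpen_ball (Metric.mem_ball_self hρ)
  -- Hahn-Banach separation
  obtain ⟨f, hf⟩ := geometric_hahn_banach_open_point hTconv.interior isOpen_interior hzint
  -- f a ≤ f z for all a ∈ T
  have hfT : ∀ a ∈ T, f a ≤ f z := by
    intro a ha
    have hseq : ∀ s : ℝ, s ∈ Set.Ioc (0:ℝ) 1 → f (s • p + (1 - s) • a) ≤ f z := by
      intro s hs
      exact le_of_lt (hf _ (hTconv.combo_interior_closure_mem_interior hpint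
        (subset_closure ha) hs.1 (by linarith [hs.2]) (by ring)))
    have hcont : Filter.Tendsto (fun s : ℝ => f (s • p + (1 - s) • a)) (nhdsWithin 0 (Set.Ioi 0))
        (nhds (f a)) := by
      have hc : Continuous (fun s : ℝ => f (s • p + (1 - s) • a)) := by
        apply f.continuous.comp
        exact (continuous_id.smul continuous_const).add
          ((continuous_const.sub continuous_id).smul continuous_const)
      have h3 := (hc.tendsto 0).mono_left (nhdsWithin_le_nhds (s := Set.Ioi (0:ℝ)))
      simpa using h3
    refine le_of_tendsto hcont ?_
    filter_upwards [Ioc_mem_nhdsGT_of_mem (Set.mem_Ico.2 ⟨le_refl (0:ℝ), zero_lt_one⟩)]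
      with s hs
    exact hseq s hs
  refine ⟨f, fun y hy => hfT y (hAT hy), ?_⟩
  intro hface
  have hpmem : p ∈ {a ∈ A | ∀ y ∈ A, f y ≤ f a} := by rw [hface]; exact hpA
  have hle : f z ≤ f p := hpmem.2 z hzA
  exact absurd (hf p hpint) (not_lt.2 hle)

end Support
section Trans

variable {n r : ℕ} {x : Fin r → ℝ → EuclideanSpace ℝ (Fin n)}

/-- Transitivity of exposedness for our polytopes: an exposed subset of an exposed face of
`movPoly x t` is exposed in `movPoly x t`. Moreover it is of the form `movFace x J t`. -/
lemma exposed_trans {t : ℝ} (hr : 0 < r) {I : Set (Fin r)} {B : Set (EuclideanSpace ℝ (Fin n))}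
    (hIP : IsExposed ℝ (movPoly x t) (movFace x I t))
    (hB : IsExposed ℝ (movFace x I t) B) (hBne : B.Nonempty) :
    ∃ J : Set (Fin r), B = movFace x J t ∧ IsExposed ℝ (movPoly x t) B := by
  classical
  have huniv : (Set.univ : Set (Fin r)).Nonempty := ⟨⟨0, hr⟩, Set.mem_univ _⟩
  have hFne : (movFace x I t).Nonempty := hBne.mono hB.subset
  obtain ⟨l₁, hl₁⟩ := hIP hFne
  obtain ⟨l₂, hl₂⟩ := hB hBne
  -- identify `movFace x I t` with the argmax face of `l₁`
  have hEq1 : movFace x I t = movFace x (argmaxSet x Set.univ t l₁) t := by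
    rw [hl₁]
    exact exposed_movFace_eq (x := x) huniv t l₁
  set I₁ : Set (Fin r) := argmaxSet x Set.univ t l₁ with hI₁def
  have hI₁ne : I₁.Nonempty := argmaxSet_nonempty huniv t l₁
  obtain ⟨i₁, hi₁⟩ := hI₁ne
  -- identify `B` with the argmax face of `l₂` within `I₁`
  have hEq2 : B = movFace x (argmaxSet x I₁ t l₂) t := by
    rw [hl₂, hEq1]
    exact exposed_movFace_eq (x := x) ⟨i₁, hi₁⟩ t l₂
  set J₁ : Set (Fin r) := argmaxSet x I₁ t l₂ with hJ₁def
  have hJ₁ne : J₁.Nonempty := argmaxSet_nonempty ⟨i₁, hi₁⟩ t l₂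
  obtain ⟨i₂, hi₂⟩ := hJ₁ne
  set M₁ : ℝ := l₁ (x i₁ t) with hM₁
  set M₂ : ℝ := l₂ (x i₂ t) with hM₂
  have hI₁char : ∀ j : Fin r, j ∈ I₁ ↔ l₁ (x j t) = M₁ := by
    intro j
    constructor
    · intro hj
      exact le_antisymm (hi₁.2 j (Set.mem_univ _)) (hj.2 i₁ (Set.mem_univ _))
    · intro hj
      exact ⟨Set.mem_univ _, fun k _ => hj ▸ hi₁.2 k (Set.mem_univ _)⟩
  have hJ₁char : ∀ j ∈ I₁, (j ∈ J₁ ↔ l₂ (x j t) = M₂) := by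
    intro j hjI
    constructor
    · intro hj
      exact le_antisymm (hi₂.2 j hjI) (hj.2 i₂ hi₂.1)
    · intro hj
      exact ⟨hjI, fun k hk => hj ▸ hi₂.2 k hk⟩
  have hle₁ : ∀ j : Fin r, l₁ (x j t) ≤ M₁ := fun j => hi₁.2 j (Set.mem_univ _)
  have hle₂ : ∀ j ∈ I₁, l₂ (x j t) ≤ M₂ := fun j hj => hi₂.2 j hj
  -- choose δ
  obtain ⟨δ, hδpos, hδ⟩ : ∃ δ : ℝ, 0 < δ ∧
      ∀ j : Fin r, j ∉ I₁ → l₁ (x j t) + δ * l₂ (x j t) < M₁ + δ * M₂ := by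
    set Sb : Finset (Fin r) := Finset.univ.filter (fun i => i ∉ I₁) with hSb
    rcases Sb.eq_empty_or_nonempty with hS | hS
    · refine ⟨1, one_pos, fun j hj => absurd hj ?_⟩
      have := Finset.eq_empty_iff_forall_notMem.1 hS j
      simp only [hSb, Finset.mem_filter, Finset.mem_univ, true_and] at this
      simpa using this
    · obtain ⟨ib, hib, hmin⟩ := Finset.exists_min_image Sb (fun i => M₁ - l₁ (x i t)) hS
      have hibI : ib ∉ I₁ := (Finset.mem_filter.1 hib).2
      set γ : ℝ := M₁ - l₁ (x ib t) with hγ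
      have hγpos : 0 < γ := by
        have h1 : l₁ (x ib t) ≤ M₁ := hle₁ ib
        rcases lt_or_eq_of_le h1 with h | h
        · linarith
        · exact absurd ((hI₁char ib).2 h) hibI
      obtain ⟨ic, _, hmax⟩ := Finset.exists_max_image Finset.univ
        (fun i => l₂ (x i t) - M₂) ⟨i₁, Finset.mem_univ _⟩
      set C : ℝ := max 0 (l₂ (x ic t) - M₂) with hC
      have hC0 : 0 ≤ C := le_max_left _ _
      refine ⟨γ / (C + 1), div_pos hγpos (by linarith), fun j hj => ?_⟩
      have h1 : γ ≤ M₁ - l₁ (x j t) := hmin j (Finset.mem_filter.2 ⟨Finset.mem_univ _, hj⟩)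
      have h2 : l₂ (x j t) - M₂ ≤ C :=
        le_trans (hmax j (Finset.mem_univ _)) (le_max_right _ _)
      have h3 : γ / (C + 1) * (l₂ (x j t) - M₂) ≤ γ / (C + 1) * C :=
        mul_le_mul_of_nonneg_left h2 (le_of_lt (div_pos hγpos (by linarith)))
      have h4 : γ / (C + 1) * C < γ := by
        rw [div_mul_eq_mul_div, div_lt_iff₀ (by linarith : (0:ℝ) < C + 1)]
        nlinarith
      nlinarith
  set l : EuclideanSpace ℝ (Fin n) →L[ℝ] ℝ := l₁ + δ • l₂ with hldef
  have hlval : ∀ v : EuclideanSpace ℝ (Fin n), l v = l₁ v + δ * l₂ v := by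
    intro v
    simp [hldef, smul_eq_mul]
  have hkey : ∀ j : Fin r, (j ∈ J₁ → l (x j t) = M₁ + δ * M₂) ∧
      (j ∉ J₁ → l (x j t) < M₁ + δ * M₂) := by
    intro j
    constructor
    · intro hj
      rw [hlval, (hI₁char j).1 hj.1, (hJ₁char j hj.1).1 hj]
    · intro hj
      by_cases hjI : j ∈ I₁
      · have h1 : l₂ (x j t) ≤ M₂ := hle₂ j hjI
        have h2 : l₂ (x j t) ≠ M₂ := fun h => hj ((hJ₁char j hjI).2 h)
        have h3 : l₁ (x j t) = M₁ := (hI₁char j).1 hjI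
        rw [hlval, h3]
        have : l₂ (x j t) < M₂ := lt_of_le_of_ne h1 h2
        nlinarith
      · rw [hlval]
        exact hδ j hjI
  have hargmax : argmaxSet x Set.univ t l = J₁ := by
    ext j
    constructor
    · intro hj
      by_contra hjJ
      have h1 : l (x j t) < M₁ + δ * M₂ := (hkey j).2 hjJ
      have h2 : l (x i₂ t) = M₁ + δ * M₂ := (hkey i₂).1 hi₂
      have h3 : l (x i₂ t) ≤ l (x j t) := hj.2 i₂ (Set.mem_univ _)
      linarith
    · intro hj
      refine ⟨Set.mem_univ _, fun k _ => ?_⟩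
      have h1 : l (x j t) = M₁ + δ * M₂ := (hkey j).1 hj
      rcases Classical.em (k ∈ J₁) with hk | hk
      · rw [h1, (hkey k).1 hk]
      · rw [h1]
        exact le_of_lt ((hkey k).2 hk)
  refine ⟨J₁, hEq2, fun _ => ⟨l, ?_⟩⟩
  rw [hEq2]
  have := exposed_movFace_eq (x := x) huniv t l
  rw [hargmax] at this
  exact this.symm

end Trans
section Transfer

variable {n r : ℕ} {x : Fin r → ℝ → EuclideanSpace ℝ (Fin n)}

/-- If `movFace x J t₀` is a proper exposed face of `movFace x I t₀` at one time `t₀`,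
then it is so at every time `t ∈ (0, ε)`. -/
lemma good_transfer (hr : 0 < r) {ε : ℝ}
    (hconst : ∀ (I : Set (Fin r)) (k : ℕ), ∀ t₀ ∈ Set.Ioo 0 ε,
      (IsExposed ℝ (movPoly x t₀) (movFace x I t₀) ∧ movDim (movFace x I t₀) = k) →
      ∀ t ∈ Set.Ioo 0 ε,
        IsExposed ℝ (movPoly x t) (movFace x I t) ∧ movDim (movFace x I t) = k)
    {I : Set (Fin r)} (hI : I.Nonempty)
    (hface : ∀ t ∈ Set.Ioo 0 ε, IsExposed ℝ (movPoly x t) (movFace x I t))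
    {J : Set (Fin r)} (hJI : J ⊆ I) {t₀ : ℝ} (ht₀ : t₀ ∈ Set.Ioo 0 ε)
    (hexp : IsExposed ℝ (movFace x I t₀) (movFace x J t₀))
    (hne : movFace x J t₀ ≠ movFace x I t₀) :
    ∀ t ∈ Set.Ioo 0 ε,
      IsExposed ℝ (movFace x I t) (movFace x J t) ∧ movFace x J t ≠ movFace x I t := by
  rcases J.eq_empty_or_nonempty with rfl | hJne
  · intro t ht
    rw [movFace_empty]
    exact ⟨isExposed_empty, Ne.symm (movFace_nonempty hI t).ne_empty⟩
  · have hJt₀ : (movFace x J t₀).Nonempty := movFace_nonempty hJne t₀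
    obtain ⟨J', _, hPexp⟩ := exposed_trans hr (hface t₀ ht₀) hexp hJt₀
    have h1 := hconst J (movDim (movFace x J t₀)) t₀ ht₀ ⟨hPexp, rfl⟩
    have h2 := hconst I (movDim (movFace x I t₀)) t₀ ht₀ ⟨hface t₀ ht₀, rfl⟩
    have hklt : movDim (movFace x J t₀) < movDim (movFace x I t₀) :=
      movDim_lt_of_exposed hexp hne hJt₀
    intro t ht
    obtain ⟨hPt, hdimJ⟩ := h1 t ht
    obtain ⟨_, hdimI⟩ := h2 t ht
    refine ⟨hPt.mono (movFace_subset_movPoly I t) (movFace_mono hJI t), ?_⟩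
    intro heq
    rw [heq, hdimI] at hdimJ
    omega

end Transfer
section Approx

variable {n r : ℕ} {x : Fin r → ℝ → EuclideanSpace ℝ (Fin n)}

/-- Crossing point of a segment from inside a closed convex set to an outside point of its
affine span is not in the intrinsic interior. -/
lemma exists_crossing {A : Set (EuclideanSpace ℝ (Fin n))} (hconv : Convex ℝ A)
    (hclosed : IsClosed A) {a b : EuclideanSpace ℝ (Fin n)} (ha : a ∈ A)
    (hbspan : b ∈ (affineSpan ℝ A : Set (EuclideanSpace ℝ (Fin n)))) (hb : b ∉ A) :
    ∃ z ∈ A, z ∈ segment ℝ a b ∧ z ∉ intrinsicInterior ℝ A := by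
  set S : Set ℝ := Set.Icc (0:ℝ) 1 ∩ (fun s : ℝ => a + s • (b - a)) ⁻¹' A with hSdef
  have hS0 : (0:ℝ) ∈ S := ⟨⟨le_refl 0, zero_le_one⟩, by simpa using ha⟩
  have hSbdd : BddAbove S := ⟨1, fun s hs => hs.1.2⟩
  have hScont : Continuous (fun s : ℝ => a + s • (b - a)) := by continuity
  have hSclosed : IsClosed S := isClosed_Icc.inter (hclosed.preimage hScont)
  set s₀ : ℝ := sSup S with hs₀def
  have hs₀S : s₀ ∈ S := hSclosed.csSup_mem ⟨0, hS0⟩ hSbdd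
  set z : EuclideanSpace ℝ (Fin n) := a + s₀ • (b - a) with hzdef
  have hzA : z ∈ A := hs₀S.2
  have hzseg : z ∈ segment ℝ a b := by
    rw [segment_eq_image']
    exact ⟨s₀, hs₀S.1, rfl⟩
  refine ⟨z, hzA, hzseg, ?_⟩
  intro hzint
  obtain ⟨ρ, hρ, hrel⟩ := ball_of_mem_intrinsicInterior hzint
  have hba : b ≠ a := fun h => hb (h ▸ ha)
  have hbanorm : 0 < ‖b - a‖ := by
    rw [norm_pos_iff]
    exact sub_ne_zero.2 hba
  have hs₀lt : s₀ < 1 := by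
    rcases lt_or_eq_of_le hs₀S.1.2 with h | h
    · exact h
    · exfalso
      apply hb
      have hzb : z = b := by rw [hzdef, h]; module
      rw [← hzb]
      exact hzA
  obtain ⟨d, hdpos, hd1, hd2⟩ : ∃ d : ℝ, 0 < d ∧ d ≤ 1 - s₀ ∧ d ≤ ρ / ‖b - a‖ :=
    ⟨min (1 - s₀) (ρ / ‖b - a‖), lt_min (by linarith) (div_pos hρ hbanorm),
      min_le_left _ _, min_le_right _ _⟩
  have hs₀0 : 0 ≤ s₀ := hs₀S.1.1
  have hs'range : s₀ + d / 2 ∈ Set.Icc (0:ℝ) 1 := ⟨by linarith, by linarith⟩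
  have hy'span : a + (s₀ + d / 2) • (b - a) ∈ affineSpan ℝ A := by
    have haspan : a ∈ affineSpan ℝ A := subset_affineSpan ℝ A ha
    have h5 := AffineSubspace.smul_vsub_vadd_mem (affineSpan ℝ A) (s₀ + d / 2)
      hbspan haspan haspan
    simpa [vsub_eq_sub, vadd_eq_add, add_comm] using h5
  have hy'ball : a + (s₀ + d / 2) • (b - a) ∈ Metric.ball z ρ := by
    rw [Metric.mem_ball, dist_eq_norm]
    have hdiff : a + (s₀ + d / 2) • (b - a) - z = (d / 2) • (b - a) := by
      rw [hzdef, add_smul]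
      abel
    rw [hdiff, norm_smul, Real.norm_eq_abs, abs_of_pos (by linarith : (0:ℝ) < d / 2)]
    have h2 : d / 2 * ‖b - a‖ ≤ ρ / ‖b - a‖ / 2 * ‖b - a‖ := by nlinarith
    have h3 : ρ / ‖b - a‖ / 2 * ‖b - a‖ = ρ / 2 := by field_simp
    linarith
  have hy'A : a + (s₀ + d / 2) • (b - a) ∈ A := hrel _ hy'ball hy'span
  have hs'S : s₀ + d / 2 ∈ S := ⟨hs'range, hy'A⟩
  have hle : s₀ + d / 2 ≤ s₀ := le_csSup hSbdd hs'S
  linarith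

/-- Distance bound for convex combinations with the same weights at two times. -/
lemma dist_combo_le {w : Fin r → ℝ} (hw0 : ∀ i, 0 ≤ w i) (hw1 : ∑ i, w i = 1)
    {t s : ℝ} {η : ℝ} (hη : ∀ i, dist (x i t) (x i s) ≤ η) :
    dist (∑ i, w i • x i t) (∑ i, w i • x i s) ≤ η := by
  rw [dist_eq_norm, ← Finset.sum_sub_distrib]
  calc ‖∑ i, (w i • x i t - w i • x i s)‖ ≤ ∑ i, ‖w i • x i t - w i • x i s‖ :=
        norm_sum_le _ _
    _ = ∑ i, w i * ‖x i t - x i s‖ := by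
        refine Finset.sum_congr rfl fun i _ => ?_
        rw [← smul_sub, norm_smul, Real.norm_eq_abs, abs_of_nonneg (hw0 i)]
    _ ≤ ∑ i, w i * η := by
        refine Finset.sum_le_sum fun i _ => ?_
        refine mul_le_mul_of_nonneg_left ?_ (hw0 i)
        rw [← dist_eq_norm]
        exact hη i
    _ = η := by rw [← Finset.sum_mul, hw1, one_mul]

/-- Distance bound for affine combinations with signed weights. -/
lemma dist_combo_le' (μ : Fin r → ℝ) {t s : ℝ} {η : ℝ} (hη0 : 0 ≤ η)
    (hη : ∀ i, dist (x i t) (x i s) ≤ η) :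
    dist (∑ i, μ i • x i t) (∑ i, μ i • x i s) ≤ (∑ i, |μ i|) * η := by
  rw [dist_eq_norm, ← Finset.sum_sub_distrib]
  calc ‖∑ i, (μ i • x i t - μ i • x i s)‖ ≤ ∑ i, ‖μ i • x i t - μ i • x i s‖ :=
        norm_sum_le _ _
    _ = ∑ i, |μ i| * ‖x i t - x i s‖ := by
        refine Finset.sum_congr rfl fun i _ => ?_
        rw [← smul_sub, norm_smul, Real.norm_eq_abs]
    _ ≤ ∑ i, |μ i| * η := by
        refine Finset.sum_le_sum fun i _ => ?_
        refine mul_le_mul_of_nonneg_left ?_ (abs_nonneg _)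
        rw [← dist_eq_norm]
        exact hη i
    _ = (∑ i, |μ i|) * η := by rw [← Finset.sum_mul]

/-- There are arbitrarily small positive times at which all points are close to their
position at time `0`. -/
lemma exists_small_time {ε : ℝ} (hε : 0 < ε) (hcont : ∀ i, ContinuousOn (x i) (Set.Ico 0 ε))
    {η : ℝ} (hη : 0 < η) :
    ∃ t ∈ Set.Ioo 0 ε, ∀ i, dist (x i t) (x i 0) < η := by
  have h0cl : (0:ℝ) ∈ closure (Set.Ioo 0 ε) := by
    rw [closure_Ioo (ne_of_lt hε)]
    exact ⟨le_refl 0, le_of_lt hε⟩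
  haveI hNB : (nhdsWithin (0:ℝ) (Set.Ioo 0 ε)).NeBot :=
    mem_closure_iff_nhdsWithin_neBot.1 h0cl
  have hev : ∀ i : Fin r, ∀ᶠ t in nhdsWithin (0:ℝ) (Set.Ioo 0 ε),
      dist (x i t) (x i 0) < η := by
    intro i
    have h1 : ContinuousWithinAt (x i) (Set.Ico 0 ε) 0 :=
      (hcont i) 0 ⟨le_refl 0, hε⟩
    have h2 : Filter.Tendsto (x i) (nhdsWithin (0:ℝ) (Set.Ioo 0 ε)) (nhds (x i 0)) :=
      h1.mono_left (nhdsWithin_mono 0 Set.Ioo_subset_Ico_self)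
    exact (Metric.tendsto_nhds.1 h2) η hη
  have hall : ∀ᶠ t in nhdsWithin (0:ℝ) (Set.Ioo 0 ε),
      (∀ i, dist (x i t) (x i 0) < η) ∧ t ∈ Set.Ioo 0 ε :=
    (Filter.eventually_all.2 hev).and self_mem_nhdsWithin
  obtain ⟨t, ht1, ht2⟩ := hall.exists
  exact ⟨t, ht2, ht1⟩

/-- Limit of points of `movFace x J (t m)` along times converging to `0` lies in
`movFace x J 0`. -/
lemma mem_movFace_zero_of_tendsto {J : Set (Fin r)} {y : EuclideanSpace ℝ (Fin n)}
    (tseq : ℕ → ℝ) (c : ℕ → ℝ) (hc : Filter.Tendsto c Filter.atTop (nhds 0))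
    (hdist : ∀ m, ∀ i, dist (x i (tseq m)) (x i 0) ≤ c m)
    (ym : ℕ → EuclideanSpace ℝ (Fin n)) (hym : ∀ m, ym m ∈ movFace x J (tseq m))
    (hlim : Filter.Tendsto ym Filter.atTop (nhds y)) :
    y ∈ movFace x J 0 := by
  classical
  choose w hw0 hwJ hw1 hwy using fun m => mem_movFace.1 (hym m)
  set D : Set (Fin r → ℝ) := stdSimplex ℝ (Fin r) ∩ {v | ∀ i, i ∉ J → v i = 0} with hD
  have hDcomp : IsCompact D := by
    refine (isCompact_stdSimplex ℝ (Fin r)).of_isClosed_subset ?_ Set.inter_subset_left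
    refine (isClosed_stdSimplex ℝ (Fin r)).inter ?_
    have : {v : Fin r → ℝ | ∀ i, i ∉ J → v i = 0}
        = ⋂ (i : Fin r) (_ : i ∉ J), (fun v : Fin r → ℝ => v i) ⁻¹' {0} := by
      ext v; simp [Set.mem_iInter]
    rw [this]
    exact isClosed_iInter fun i => isClosed_iInter fun _ =>
      IsClosed.preimage (continuous_apply i) isClosed_singleton
  have hwD : ∀ m, w m ∈ D := fun m => ⟨⟨fun i => hw0 m i, hw1 m⟩, fun i hi => hwJ m i hi⟩
  obtain ⟨wlim, hwlimD, φ, hφ, hwconv⟩ := hDcomp.tendsto_subseq hwD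
  have hxconv : ∀ i : Fin r,
      Filter.Tendsto (fun m => x i (tseq (φ m))) Filter.atTop (nhds (x i 0)) := by
    intro i
    rw [tendsto_iff_dist_tendsto_zero]
    refine squeeze_zero (fun m => dist_nonneg) (fun m => hdist (φ m) i) ?_
    exact hc.comp hφ.tendsto_atTop
  have hwiconv : ∀ i : Fin r,
      Filter.Tendsto (fun m => w (φ m) i) Filter.atTop (nhds (wlim i)) := by
    intro i
    exact ((continuous_apply i).continuousAt.tendsto).comp hwconv
  have hsumconv : Filter.Tendsto (fun m => ∑ i, w (φ m) i • x i (tseq (φ m)))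
      Filter.atTop (nhds (∑ i, wlim i • x i 0)) := by
    refine tendsto_finset_sum _ fun i _ => ?_
    exact (hwiconv i).smul (hxconv i)
  have hyconv : Filter.Tendsto (fun m => ym (φ m)) Filter.atTop (nhds y) :=
    hlim.comp hφ.tendsto_atTop
  have heq : (fun m => ∑ i, w (φ m) i • x i (tseq (φ m))) = fun m => ym (φ m) := by
    funext m
    exact hwy (φ m)
  rw [heq] at hsumconv
  have hyeq : y = ∑ i, wlim i • x i 0 := tendsto_nhds_unique hyconv hsumconv
  exact mem_movFace.2 ⟨wlim, fun i => hwlimD.1.1 i, hwlimD.2, hwlimD.1.2, hyeq.symm⟩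

end Approx
/-- with continuously moving points whose convex hulls `P(t)` have the points
as distinct vertices for `t ∈ (0,ε)` and constant face dimensions on `(0,ε)`, if
`F(t) = F_I(t)` is a face of `P(t)` for all `t ∈ (0,ε)`, then every point of the intrinsic
(relative) boundary of `F_I(0)` lies in `F_J(0)` for some `J ⊆ I` with `F_J(t)` a proper
face of `F_I(t)` for all `t ∈ (0,ε)`. -/
theorem stmt16 {n r : ℕ} (hn : 1 ≤ n) (hr : 1 ≤ r) (ε : ℝ) (hε : 0 < ε)
    (x : Fin r → ℝ → EuclideanSpace ℝ (Fin n))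
    (hcont : ∀ i, ContinuousOn (x i) (Set.Ico 0 ε))
    (hdistinct : ∀ t ∈ Set.Ioo 0 ε, ∀ i j : Fin r, i ≠ j → x i t ≠ x j t)
    (hvert : ∀ t ∈ Set.Ioo 0 ε, ∀ i : Fin r, x i t ∈ Set.extremePoints ℝ (movPoly x t))
    (hconst : ∀ (I : Set (Fin r)) (k : ℕ), ∀ t₀ ∈ Set.Ioo 0 ε,
      (IsExposed ℝ (movPoly x t₀) (movFace x I t₀) ∧ movDim (movFace x I t₀) = k) →
      ∀ t ∈ Set.Ioo 0 ε,
        IsExposed ℝ (movPoly x t) (movFace x I t) ∧ movDim (movFace x I t) = k)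
    (I : Set (Fin r))
    (hface : ∀ t ∈ Set.Ioo 0 ε, IsExposed ℝ (movPoly x t) (movFace x I t)) :
    ∀ q ∈ intrinsicFrontier ℝ (movFace x I 0),
      ∃ J ⊆ I, (∀ t ∈ Set.Ioo 0 ε,
          IsExposed ℝ (movFace x I t) (movFace x J t) ∧ movFace x J t ≠ movFace x I t) ∧
        q ∈ movFace x J 0 := by
  classical
  intro q hq
  by_contra hcon
  push_neg at hcon
  -- `I` is nonempty
  rcases I.eq_empty_or_nonempty with rfl | hI
  · rw [movFace_empty, intrinsicFrontier_empty] at hq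
    exact absurd hq (Set.notMem_empty q)
  have hqF : q ∈ movFace x I 0 := intrinsicFrontier_subset (movFace_isClosed I 0) hq
  -- the "good" faces and the distance δ
  set good : Set (Fin r) → Prop := fun J => J ⊆ I ∧ ∀ t ∈ Set.Ioo 0 ε,
      IsExposed ℝ (movFace x I t) (movFace x J t) ∧ movFace x J t ≠ movFace x I t
    with hgooddef
  set K : Set (EuclideanSpace ℝ (Fin n)) := ⋃ J ∈ {J : Set (Fin r) | good J}, movFace x J 0
    with hKdef
  have hKclosed : IsClosed K :=
    Set.Finite.isClosed_biUnion (Set.toFinite _) (fun J _ => movFace_isClosed J 0)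
  have hqK : q ∉ K := by
    intro hqmem
    obtain ⟨J, hJ, hqJ⟩ := Set.mem_iUnion₂.1 hqmem
    exact hcon J hJ.1 hJ.2 hqJ
  obtain ⟨δ, hδpos, hδ⟩ : ∃ δ : ℝ, 0 < δ ∧
      ∀ J : Set (Fin r), good J → ∀ y ∈ movFace x J 0, δ ≤ dist q y := by
    rcases K.eq_empty_or_nonempty with hK | hK
    · refine ⟨1, one_pos, fun J hJ y hy => absurd ?_ (hK ▸ Set.notMem_empty y)⟩
      exact Set.mem_biUnion hJ hy
    · refine ⟨Metric.infDist q K, (hKclosed.notMem_iff_infDist_pos hK).1 hqK, ?_⟩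
      intro J hJ y hy
      exact Metric.infDist_le_dist_of_mem (Set.mem_biUnion hJ hy)
  -- weights of q
  obtain ⟨lam, hlam0, hlamI, hlam1, hlamq⟩ := mem_movFace.1 hqF
  -- main claim: a relative ball around q is in the face
  have hmain : ∀ y ∈ Metric.ball q (δ/4),
      y ∈ (affineSpan ℝ (movFace x I 0) : Set (EuclideanSpace ℝ (Fin n))) →
        y ∈ movFace x I 0 := by
    intro y hyb hyspan
    obtain ⟨μ, hμI, hμ1, hμy⟩ := mem_span_movFace.1 hyspan
    obtain ⟨C, hC1, hCge⟩ : ∃ C : ℝ, 1 ≤ C ∧ (∑ i, |μ i|) ≤ C := by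
      refine ⟨(∑ i, |μ i|) + 1, ?_, by linarith⟩
      have h0 : (0:ℝ) ≤ ∑ i, |μ i| := Finset.sum_nonneg fun i _ => abs_nonneg _
      linarith
    obtain ⟨c, hcpos, hcle, hclim⟩ : ∃ c : ℕ → ℝ, (∀ m, 0 < c m) ∧
        (∀ m, c m ≤ δ/(8*C)) ∧ Filter.Tendsto c Filter.atTop (nhds 0) := by
      refine ⟨fun m => min (δ/(8*C)) (1/(m+1)), fun m => lt_min (by positivity) (by positivity),
        fun m => min_le_left _ _, ?_⟩
      refine squeeze_zero (fun m => (lt_min (by positivity) (by positivity)).le)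
        (fun m => min_le_right _ _) ?_
      exact tendsto_one_div_add_atTop_nhds_zero_nat
    have hηle : ∀ m, c m ≤ δ/8 := by
      intro m
      refine le_trans (hcle m) ?_
      rw [div_le_div_iff₀ (by positivity) (by norm_num)]
      nlinarith
    have hts : ∀ m : ℕ, ∃ t ∈ Set.Ioo 0 ε, ∀ i, dist (x i t) (x i 0) < c m :=
      fun m => exists_small_time hε hcont (hcpos m)
    choose tseq htmem htdist using hts
    -- the approximated point is in the moving face for every m
    have hymem : ∀ m, (∑ i, μ i • x i (tseq m)) ∈ movFace x I (tseq m) := by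
      intro m
      by_contra hynot
      have ht : tseq m ∈ Set.Ioo 0 ε := htmem m
      have hqt : (∑ i, lam i • x i (tseq m)) ∈ movFace x I (tseq m) :=
        mem_movFace.2 ⟨lam, hlam0, hlamI, hlam1, rfl⟩
      have hyspan_t : (∑ i, μ i • x i (tseq m)) ∈
          (affineSpan ℝ (movFace x I (tseq m)) : Set (EuclideanSpace ℝ (Fin n))) :=
        mem_span_movFace.2 ⟨μ, hμI, hμ1, rfl⟩
      obtain ⟨z, hzF, hzseg, hzint⟩ := exists_crossing (movFace_convex I (tseq m))
        (movFace_isClosed I (tseq m)) hqt hyspan_t hynot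
      obtain ⟨l, hlmax, hlneq⟩ := exists_support_functional (movFace_convex I (tseq m))
        hzF hzint
      have hfaceeq := exposed_movFace_eq (x := x) hI (tseq m) l
      have hzJ : z ∈ movFace x (argmaxSet x I (tseq m) l) (tseq m) := by
        rw [← hfaceeq]; exact ⟨hzF, hlmax⟩
      have hJneq : movFace x (argmaxSet x I (tseq m) l) (tseq m) ≠ movFace x I (tseq m) := by
        rw [← hfaceeq]; exact hlneq
      have hJexp : IsExposed ℝ (movFace x I (tseq m))
          (movFace x (argmaxSet x I (tseq m) l) (tseq m)) := isExposed_argmax hI (tseq m) l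
      have hgoodJ : good (argmaxSet x I (tseq m) l) :=
        ⟨argmaxSet_subset I (tseq m) l,
          good_transfer hr hconst hI hface (argmaxSet_subset I (tseq m) l) ht hJexp hJneq⟩
      obtain ⟨w, hw0, hwJ, hw1, hwz⟩ := mem_movFace.1 hzJ
      have hz₀ : (∑ i, w i • x i 0) ∈ movFace x (argmaxSet x I (tseq m) l) 0 :=
        mem_movFace.2 ⟨w, hw0, hwJ, hw1, rfl⟩
      have hδz₀ : δ ≤ dist q (∑ i, w i • x i 0) := hδ _ hgoodJ _ hz₀
      have hbound : ∀ i, dist (x i (tseq m)) (x i 0) ≤ δ/8 :=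
        fun i => le_trans (htdist m i).le (hηle m)
      -- dist z z₀ ≤ δ/8
      have hdz : dist z (∑ i, w i • x i 0) ≤ δ/8 := by
        rw [← hwz]
        exact dist_combo_le hw0 hw1 hbound
      -- dist q qt ≤ δ/8
      have hdq : dist q (∑ i, lam i • x i (tseq m)) ≤ δ/8 := by
        rw [← hlamq, dist_comm]
        exact dist_combo_le hlam0 hlam1 hbound
      -- dist y yt ≤ δ/8
      have hdy : dist y (∑ i, μ i • x i (tseq m)) ≤ δ/8 := by
        rw [← hμy, dist_comm]
        have h1 := dist_combo_le' (x := x) μ (le_of_lt (hcpos m))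
          (fun i => (htdist m i).le)
        have h2 : (∑ i, |μ i|) * c m ≤ δ/8 := by
          have h3 : (∑ i, |μ i|) * c m ≤ C * c m :=
            mul_le_mul_of_nonneg_right hCge (hcpos m).le
          have h4 : C * c m ≤ C * (δ/(8*C)) :=
            mul_le_mul_of_nonneg_left (hcle m) (by linarith)
          have h5 : C * (δ/(8*C)) = δ/8 := by
            field_simp
          linarith
        exact le_trans h1 h2
      -- z is on the segment [qt, yt]
      have hdseg : dist (∑ i, lam i • x i (tseq m)) z ≤
          dist (∑ i, lam i • x i (tseq m)) (∑ i, μ i • x i (tseq m)) := by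
        have := dist_add_dist_of_mem_segment hzseg
        have h0 := dist_nonneg (x := z) (y := ∑ i, μ i • x i (tseq m))
        linarith
      -- triangle inequalities
      have t1 := dist_triangle q (∑ i, lam i • x i (tseq m)) z
      have t2 := dist_triangle (∑ i, lam i • x i (tseq m)) q y
      have t3 := dist_triangle (∑ i, lam i • x i (tseq m)) y (∑ i, μ i • x i (tseq m))
      have t4 := dist_triangle q z (∑ i, w i • x i 0)
      have hqy : dist q y < δ/4 := by
        rw [dist_comm]
        exact Metric.mem_ball.1 hyb
      have hcomm1 : dist (∑ i, lam i • x i (tseq m)) q = dist q (∑ i, lam i • x i (tseq m)) :=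
        dist_comm _ _
      linarith
    -- pass to the limit
    have hylim : Filter.Tendsto (fun m => ∑ i, μ i • x i (tseq m)) Filter.atTop (nhds y) := by
      rw [tendsto_iff_dist_tendsto_zero]
      have hb : ∀ m, dist (∑ i, μ i • x i (tseq m)) y ≤ (∑ i, |μ i|) * c m := by
        intro m
        rw [dist_comm, ← hμy, dist_comm]
        exact dist_combo_le' (x := x) μ (hcpos m).le (fun i => (htdist m i).le)
      refine squeeze_zero (fun m => dist_nonneg) hb ?_
      have := hclim.const_mul (∑ i, |μ i|)
      simpa using this
    exact mem_movFace_zero_of_tendsto tseq c hclim (fun m i => (htdist m i).le)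
      _ hymem hylim
  have hqint : q ∈ intrinsicInterior ℝ (movFace x I 0) :=
    mem_intrinsicInterior_of_ball hqF (by positivity) hmain
  exact not_mem_intrinsicFrontier_of_mem_intrinsicInterior hqint hq
end

section
/- With the setup of continuously moving points x₁,…,x_r : [0,ε) → ℝⁿ, assume: for t ∈ (0,ε) the points are distinct vertices of P(t) = conv{x_i(t)}; the combinatorial face structure of P(t) is constant for t ∈ (0,ε); and the direction of every edge of P(t) is constant in t ∈ (0,ε) (if F_I(t), |I| = 2, is an edge, then F_I(t′) is parallel to F_I(t″) for all t′, t″ ∈ (0,ε)). Then for every k-dimensional face F of P(0), there exists I ⊆ {1,…,r} such that F_I(t) is a k-dimensional face of P(t) for all t ∈ (0,ε) and F_I(0) = F. -/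
set_option maxHeartbeats 1600000
open Set Filter Topology


namespace Stmt17Aux


variable {n r : ℕ}

/-- The index set of maximizers of the functional `g` over the point family `p` restricted
to the index set `J`. -/
noncomputable def amax (p : Fin r → EuclideanSpace ℝ (Fin n)) (J : Finset (Fin r))
    (g : EuclideanSpace ℝ (Fin n) →L[ℝ] ℝ) : Finset (Fin r) :=
  J.filter (fun i => ∀ j ∈ J, g (p j) ≤ g (p i))

/-- Convex hull of the points of `p` indexed by `J`. -/
def hull (p : Fin r → EuclideanSpace ℝ (Fin n)) (J : Finset (Fin r)) :
    Set (EuclideanSpace ℝ (Fin n)) :=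
  convexHull ℝ (p '' ↑J)

theorem amax_subset (p : Fin r → EuclideanSpace ℝ (Fin n)) (J : Finset (Fin r))
    (g : EuclideanSpace ℝ (Fin n) →L[ℝ] ℝ) : amax p J g ⊆ J :=
  Finset.filter_subset _ _

theorem hull_mono {p : Fin r → EuclideanSpace ℝ (Fin n)} {J K : Finset (Fin r)} (h : J ⊆ K) :
    hull p J ⊆ hull p K :=
  convexHull_mono (Set.image_mono (by exact_mod_cast h))

theorem convex_hull' (p : Fin r → EuclideanSpace ℝ (Fin n)) (J : Finset (Fin r)) :
    Convex ℝ (hull p J) := convex_convexHull _ _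

theorem mem_hull_self {p : Fin r → EuclideanSpace ℝ (Fin n)} {J : Finset (Fin r)} {i : Fin r}
    (hi : i ∈ J) : p i ∈ hull p J :=
  subset_convexHull _ _ ⟨i, by simpa using hi, rfl⟩

theorem g_le_on_hull {p : Fin r → EuclideanSpace ℝ (Fin n)} {J : Finset (Fin r)}
    {g : EuclideanSpace ℝ (Fin n) →L[ℝ] ℝ} {M : ℝ} (hM : ∀ j ∈ J, g (p j) ≤ M) :
    ∀ z ∈ hull p J, g z ≤ M := by
  intro z hz
  have h1 : hull p J ⊆ {w | g w ≤ M} := by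
    apply convexHull_min _ (convex_halfSpace_le (g.toLinearMap.isLinear) M)
    rintro _ ⟨j, hj, rfl⟩
    exact hM j (by simpa using hj)
  exact h1 hz

theorem g_ge_on_hull {p : Fin r → EuclideanSpace ℝ (Fin n)} {J : Finset (Fin r)}
    {g : EuclideanSpace ℝ (Fin n) →L[ℝ] ℝ} {M : ℝ} (hM : ∀ j ∈ J, M ≤ g (p j)) :
    ∀ z ∈ hull p J, M ≤ g z := by
  intro z hz
  have h1 : hull p J ⊆ {w | M ≤ g w} := by
    apply convexHull_min _ (convex_halfSpace_ge (g.toLinearMap.isLinear) M)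
    rintro _ ⟨j, hj, rfl⟩
    exact hM j (by simpa using hj)
  exact h1 hz

theorem amax_val {p : Fin r → EuclideanSpace ℝ (Fin n)} {J : Finset (Fin r)}
    {g : EuclideanSpace ℝ (Fin n) →L[ℝ] ℝ} {i j : Fin r} (hi : i ∈ amax p J g)
    (hj : j ∈ amax p J g) : g (p i) = g (p j) := by
  rw [amax, Finset.mem_filter] at hi hj
  exact le_antisymm (hj.2 i hi.1) (hi.2 j hj.1)

/-- The exposed face of a polytope determined by `g` is the hull of the argmax points. -/
theorem face_eq (p : Fin r → EuclideanSpace ℝ (Fin n)) (J : Finset (Fin r))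
    (g : EuclideanSpace ℝ (Fin n) →L[ℝ] ℝ) :
    {y ∈ hull p J | ∀ z ∈ hull p J, g z ≤ g y} = hull p (amax p J g) := by
  rcases J.eq_empty_or_nonempty with rfl | hJ
  · simp [hull, amax]
  obtain ⟨i₀, hi₀J, hi₀⟩ := J.exists_max_image (fun j => g (p j)) hJ
  have hi₀m : i₀ ∈ amax p J g := Finset.mem_filter.2 ⟨hi₀J, hi₀⟩
  set M := g (p i₀) with hM
  have hvalm : ∀ i ∈ amax p J g, g (p i) = M := fun i hi => amax_val hi hi₀m
  have hle : ∀ z ∈ hull p J, g z ≤ M := g_le_on_hull (fun j hj => hi₀ j hj)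
  have hhullM : ∀ y ∈ hull p (amax p J g), g y = M := by
    intro y hy
    exact le_antisymm
      (g_le_on_hull (fun j hj => le_of_eq (hvalm j hj)) y hy)
      (g_ge_on_hull (fun j hj => ge_of_eq (hvalm j hj)) y hy)
  apply Set.Subset.antisymm
  · rintro y ⟨hyJ, hymax⟩
    have hyM : g y = M :=
      le_antisymm (hle y hyJ) (hymax _ (mem_hull_self hi₀J))
    set Jl := J.filter (fun i => ¬ ∀ j ∈ J, g (p j) ≤ g (p i)) with hJl
    have hsplit : amax p J g ∪ Jl = J := J.filter_union_filter_not_eq _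
    rcases Jl.eq_empty_or_nonempty with hJle | hJlne
    · have hamJ : amax p J g = J := by
        conv_rhs => rw [← hsplit, hJle, Finset.union_empty]
      rwa [hamJ]
    · -- every point of hull Jl has value < M
      obtain ⟨j₁, hj₁Jl, hj₁⟩ := Jl.exists_max_image (fun j => g (p j)) hJlne
      have hj₁lt : g (p j₁) < M := by
        have h2 := Finset.mem_filter.1 hj₁Jl
        push_neg at h2
        obtain ⟨j₂, hj₂J, hj₂⟩ := h2.2
        exact lt_of_lt_of_le hj₂ (hi₀ j₂ hj₂J)
      have hltJl : ∀ v ∈ hull p Jl, g v < M :=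
        fun v hv => lt_of_le_of_lt (g_le_on_hull (fun j hj => hj₁ j hj) v hv) hj₁lt
      -- split the hull
      have hcoe : (↑J : Set (Fin r)) = (↑(amax p J g) : Set (Fin r)) ∪ ↑Jl := by
        rw [← Finset.coe_union, hsplit]
      have himg : p '' (↑J : Set (Fin r)) = p '' ↑(amax p J g) ∪ p '' ↑Jl := by
        rw [hcoe, Set.image_union]
      have hmne : (p '' (↑(amax p J g) : Set (Fin r))).Nonempty :=
        ⟨p i₀, ⟨i₀, by simpa using hi₀m, rfl⟩⟩
      have hlne : (p '' (↑Jl : Set (Fin r))).Nonempty :=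
        ⟨p j₁, ⟨j₁, by simpa using hj₁Jl, rfl⟩⟩
      have hyJoin : y ∈ convexJoin ℝ (hull p (amax p J g)) (hull p Jl) := by
        have : hull p J = convexJoin ℝ (hull p (amax p J g)) (hull p Jl) := by
          rw [hull, himg, convexHull_union hmne hlne]; rfl
        rwa [this] at hyJ
      rw [mem_convexJoin] at hyJoin
      obtain ⟨a, ha, b, hb, hseg⟩ := hyJoin
      rw [segment_eq_image₂] at hseg
      obtain ⟨⟨s, t⟩, ⟨hs, ht, hst⟩, rfl⟩ := hseg
      have hga : g a = M := hhullM a ha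
      have hgb : g b < M := hltJl b hb
      have hval : g (s • a + t • b) = s * M + t * g b := by
        simp [hga]
      have ht0 : t = 0 := by
        by_contra htne
        have htpos : 0 < t := lt_of_le_of_ne ht (Ne.symm htne)
        have : g (s • a + t • b) < M := by
          rw [hval]
          calc s * M + t * g b < s * M + t * M := by
                exact add_lt_add_right (by exact (mul_lt_mul_iff_right₀ htpos).2 hgb) _
            _ = M := by rw [← add_mul, hst, one_mul]
        rw [hyM] at this; exact lt_irrefl _ this
      have hs1 : s = 1 := by rw [← hst, ht0, add_zero]
      rw [ht0, hs1]
      simpa using ha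
  · intro y hy
    refine ⟨hull_mono (amax_subset p J g) hy, ?_⟩
    intro z hz
    rw [hhullM y hy]
    exact hle z hz

/-- The hull of the argmax points is an exposed subset. -/
theorem isExposed_hull_amax (p : Fin r → EuclideanSpace ℝ (Fin n)) (J : Finset (Fin r))
    (g : EuclideanSpace ℝ (Fin n) →L[ℝ] ℝ) :
    IsExposed ℝ (hull p J) (hull p (amax p J g)) := by
  intro _
  exact ⟨g, (face_eq p J g).symm⟩

/-- An extreme point among distinct points admits a strictly separating functional. -/
theorem exists_exposer (p : Fin r → EuclideanSpace ℝ (Fin n)) (hp : Function.Injective p)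
    (i : Fin r) (hext : p i ∈ Set.extremePoints ℝ (hull p Finset.univ)) :
    ∃ w : EuclideanSpace ℝ (Fin n) →L[ℝ] ℝ, ∀ j : Fin r, j ≠ i → w (p j) < w (p i) := by
  set C := hull p (Finset.univ.erase i) with hC
  by_cases hiC : p i ∈ C
  · exfalso
    have hsub : hull p Finset.univ ⊆ C := by
      apply convexHull_min _ (convex_convexHull ℝ _)
      rintro _ ⟨j, hj, rfl⟩
      by_cases hji : j = i
      · subst hji; exact hiC
      · exact mem_hull_self (Finset.mem_erase.2 ⟨hji, Finset.mem_univ _⟩)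
    have heq : hull p Finset.univ = C :=
      Set.Subset.antisymm hsub (hull_mono (Finset.erase_subset _ _))
    have h1 : p i ∈ Set.extremePoints ℝ C := heq ▸ hext
    have h2 : p i ∈ p '' ↑(Finset.univ.erase i) := extremePoints_convexHull_subset h1
    obtain ⟨j, hj, hje⟩ := h2
    have : j = i := hp hje
    rw [this] at hj
    simp at hj
  · have hC_closed : IsClosed C :=
      ((Set.toFinite (p '' ↑(Finset.univ.erase i))).isCompact_convexHull ℝ).isClosed
    obtain ⟨w, u, hw1, hw2⟩ :=
      geometric_hahn_banach_closed_point (convex_convexHull ℝ _) hC_closed hiC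
    refine ⟨w, fun j hj => ?_⟩
    exact lt_trans (hw1 _ (mem_hull_self (Finset.mem_erase.2 ⟨hj, Finset.mem_univ _⟩))) hw2

/-- Exact argmax of `u` on an exact face `J` is an exact argmax over everything
for a suitable combined functional. -/
theorem amax_glue (p : Fin r → EuclideanSpace ℝ (Fin n))
    (g u : EuclideanSpace ℝ (Fin n) →L[ℝ] ℝ) (J : Finset (Fin r))
    (hJ : J = amax p Finset.univ g) (hJne : J.Nonempty) :
    ∃ δ : ℝ, 0 < δ ∧ amax p Finset.univ (g + δ • u) = amax p J u := by
  classical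
  have hJmem : ∀ i : Fin r, i ∈ J ↔ ∀ j : Fin r, g (p j) ≤ g (p i) := by
    intro i
    rw [hJ, amax, Finset.mem_filter]
    simp
  obtain ⟨i₀, hi₀⟩ := id hJne
  set M := g (p i₀) with hMdef
  have hMmax : ∀ j : Fin r, g (p j) ≤ M := (hJmem i₀).1 hi₀
  have hMval : ∀ i ∈ J, g (p i) = M := by
    intro i hi
    exact le_antisymm (hMmax i) ((hJmem i).1 hi i₀)
  have hnotJ : ∀ j : Fin r, j ∉ J → g (p j) < M := by
    intro j hj
    rcases lt_or_eq_of_le (hMmax j) with h | h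
    · exact h
    · exfalso; apply hj; rw [hJmem]; intro k; rw [h]; exact hMmax k
  obtain ⟨iu, hiuJ, hiu⟩ := J.exists_max_image (fun j => u (p j)) hJne
  set Mu := u (p iu) with hMudef
  set B := Finset.univ.filter (fun j => j ∉ J ∧ Mu < u (p j)) with hBdef
  set δ := if hB : B.Nonempty
    then (B.inf' hB (fun j => (M - g (p j)) / (u (p j) - Mu))) / 2 else 1 with hδdef
  have hδpos : 0 < δ := by
    rw [hδdef]
    split_ifs with hB
    · apply half_pos
      rw [Finset.lt_inf'_iff]
      intro j hj
      rw [hBdef, Finset.mem_filter] at hj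
      exact div_pos (sub_pos.2 (hnotJ j hj.2.1)) (sub_pos.2 hj.2.2)
    · norm_num
  have hkey : ∀ j : Fin r, j ∉ J → g (p j) + δ * u (p j) < M + δ * Mu := by
    intro j hj
    rcases le_or_gt (u (p j)) Mu with h | h
    · have := hnotJ j hj
      nlinarith
    · have hjB : j ∈ B := by
        rw [hBdef, Finset.mem_filter]
        exact ⟨Finset.mem_univ _, hj, h⟩
      have hBne : B.Nonempty := ⟨j, hjB⟩
      have hδlt : δ < (M - g (p j)) / (u (p j) - Mu) := by
        rw [hδdef, dif_pos hBne]
        calc B.inf' hBne (fun j => (M - g (p j)) / (u (p j) - Mu)) / 2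
            < B.inf' hBne (fun j => (M - g (p j)) / (u (p j) - Mu)) := by
              apply half_lt_self
              rw [Finset.lt_inf'_iff]
              intro k hk
              rw [hBdef, Finset.mem_filter] at hk
              exact div_pos (sub_pos.2 (hnotJ k hk.2.1)) (sub_pos.2 hk.2.2)
          _ ≤ (M - g (p j)) / (u (p j) - Mu) := Finset.inf'_le _ hjB
      have h2 : δ * (u (p j) - Mu) < M - g (p j) := (lt_div_iff₀ (sub_pos.2 h)).1 hδlt
      linarith
  refine ⟨δ, hδpos, ?_⟩
  have hval : ∀ k : Fin r, (g + δ • u) (p k) = g (p k) + δ * u (p k) := by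
    intro k; simp
  ext s
  rw [amax, amax, Finset.mem_filter, Finset.mem_filter]
  constructor
  · rintro ⟨-, hs⟩
    have hsJ : s ∈ J := by
      by_contra hsJ
      have h1 := hs iu (Finset.mem_univ _)
      rw [hval, hval, hMval iu hiuJ] at h1
      exact absurd h1 (not_le.2 (hkey s hsJ))
    refine ⟨hsJ, fun j hj => ?_⟩
    have h1 := hs j (Finset.mem_univ _)
    rw [hval, hval, hMval s hsJ, hMval j hj] at h1
    have := (add_le_add_iff_left M).1 h1
    exact le_of_mul_le_mul_left this hδpos
  · rintro ⟨hsJ, hs⟩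
    have hsMu : u (p s) = Mu := le_antisymm (hiu s hsJ) (hs iu hiuJ)
    refine ⟨Finset.mem_univ _, fun j _ => ?_⟩
    rw [hval, hval, hMval s hsJ, hsMu]
    by_cases hjJ : j ∈ J
    · rw [hMval j hjJ]
      exact add_le_add_right (mul_le_mul_of_nonneg_left (hiu j hjJ) hδpos.le) M
    · exact (hkey j hjJ).le

/-- The "shooting" computation: starting from a vertex `i` of the face `J`, the combined
functional `w + lam • u` exposes within `J` exactly `i` together with the argmin-ratio points. -/
theorem amax_shoot (p : Fin r → EuclideanSpace ℝ (Fin n)) (J : Finset (Fin r)) {i : Fin r}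
    (hiJ : i ∈ J) (w u : EuclideanSpace ℝ (Fin n) →L[ℝ] ℝ)
    (hw : ∀ s ∈ J, s ≠ i → w (p s) < w (p i)) {lam : ℝ} (hlam : 0 < lam)
    (hmin : ∀ s ∈ J, u (p i) < u (p s) →
      lam * (u (p s) - u (p i)) ≤ w (p i) - w (p s)) :
    insert i ((J.filter (fun s => u (p i) < u (p s))).filter
        (fun s => w (p i) - w (p s) = lam * (u (p s) - u (p i))))
      = amax p J (w + lam • u) := by
  classical
  have hval : ∀ k : Fin r, (w + lam • u) (p k) = w (p k) + lam * u (p k) := by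
    intro k; simp
  have hle : ∀ j ∈ J, (w + lam • u) (p j) ≤ (w + lam • u) (p i) := by
    intro j hj
    rw [hval, hval]
    by_cases hji : j = i
    · rw [hji]
    · by_cases hjA : u (p i) < u (p j)
      · have h1 := hmin j hj hjA
        nlinarith
      · push_neg at hjA
        have h2 := hw j hj hji
        nlinarith
  ext s
  rw [amax, Finset.mem_filter, Finset.mem_insert, Finset.mem_filter, Finset.mem_filter]
  constructor
  · rintro (rfl | ⟨⟨hsJ, hsA⟩, hseq⟩)
    · exact ⟨hiJ, hle⟩
    · refine ⟨hsJ, fun j hj => ?_⟩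
      have h1 : (w + lam • u) (p s) = (w + lam • u) (p i) := by
        rw [hval, hval]
        linarith [hseq]
      rw [h1]
      exact hle j hj
  · rintro ⟨hsJ, hs⟩
    by_cases hsi : s = i
    · exact Or.inl hsi
    · right
      have h1 : (w + lam • u) (p s) = (w + lam • u) (p i) :=
        le_antisymm (hle s hsJ) (hs i hiJ)
      rw [hval, hval] at h1
      have hsA : u (p i) < u (p s) := by
        by_contra hsA
        push_neg at hsA
        have := hw s hsJ hsi
        nlinarith
      exact ⟨⟨hsJ, hsA⟩, by linarith⟩
/-- A step of an improving edge path: an exposed edge of the big polytope inside the index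
set `J`, along which `u` strictly increases. -/
def Step (p : Fin r → EuclideanSpace ℝ (Fin n)) (J : Finset (Fin r))
    (u : EuclideanSpace ℝ (Fin n) →L[ℝ] ℝ) (a b : Fin r) : Prop :=
  u (p a) < u (p b) ∧ a ∈ J ∧ b ∈ J ∧
    IsExposed ℝ (hull p Finset.univ) (convexHull ℝ {p a, p b})

theorem path_lemma (p : Fin r → EuclideanSpace ℝ (Fin n)) (hp : Function.Injective p)
    (hw : ∀ i : Fin r, ∃ w : EuclideanSpace ℝ (Fin n) →L[ℝ] ℝ,
      ∀ j : Fin r, j ≠ i → w (p j) < w (p i)) :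
    ∀ (N : ℕ) (J : Finset (Fin r)) (g : EuclideanSpace ℝ (Fin n) →L[ℝ] ℝ) (i : Fin r)
      (u : EuclideanSpace ℝ (Fin n) →L[ℝ] ℝ),
      J = amax p Finset.univ g → i ∈ J →
      J.card * (r + 1) + (J.filter fun s => u (p i) < u (p s)).card ≤ N →
      ∃ js, js ∈ amax p J u ∧ Relation.ReflTransGen (Step p J u) i js := by
  intro N
  induction N with
  | zero =>
    intro J g i u hJf hi hm
    exfalso
    have h1 : 1 ≤ J.card := Finset.card_pos.2 ⟨i, hi⟩
    have h2 : r + 1 ≤ J.card * (r + 1) := Nat.le_mul_of_pos_left _ h1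
    omega
  | succ N IH =>
    intro J g i u hJf hi hm
    classical
    by_cases hmax : i ∈ amax p J u
    · exact ⟨i, hmax, Relation.ReflTransGen.refl⟩
    have hiu2 : ∃ j ∈ J, u (p i) < u (p j) := by
      by_contra h
      push_neg at h
      exact hmax (Finset.mem_filter.2 ⟨hi, fun j hj => h j hj⟩)
    set A := J.filter (fun s => u (p i) < u (p s)) with hAdef
    have hA : A.Nonempty := by
      obtain ⟨j, hj, hju⟩ := hiu2
      exact ⟨j, Finset.mem_filter.2 ⟨hj, hju⟩⟩
    have hcardJ : J.card ≤ r := by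
      have := Finset.card_le_card (Finset.subset_univ J)
      simpa using this
    -- the continuation: once we found a proper exact subface T of J containing i
    -- with a u-improving element, we can conclude by two recursive calls.
    have hcont : ∀ (T : Finset (Fin r)) (G : EuclideanSpace ℝ (Fin n) →L[ℝ] ℝ),
        T = amax p Finset.univ G → T ⊆ J → T ≠ J → i ∈ T →
        (∃ s ∈ T, u (p i) < u (p s)) →
        ∃ js, js ∈ amax p J u ∧ Relation.ReflTransGen (Step p J u) i js := by
      rintro T G hTf hTJ hTne hiT ⟨s0, hs0T, hs0u⟩
      have hcard : T.card < J.card :=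
        Finset.card_lt_card (Finset.ssubset_iff_subset_ne.2 ⟨hTJ, hTne⟩)
      have hcardT : T.card ≤ r := le_trans (Finset.card_le_card hTJ) hcardJ
      have hmT : T.card * (r + 1) + (T.filter fun s => u (p i) < u (p s)).card ≤ N := by
        have e1 : (T.filter fun s => u (p i) < u (p s)).card ≤ r :=
          le_trans (Finset.card_le_card (Finset.filter_subset _ _)) hcardT
        have e2 : T.card * (r + 1) + (r + 1) ≤ J.card * (r + 1) := by
          have : (T.card + 1) * (r + 1) ≤ J.card * (r + 1) :=
            Nat.mul_le_mul_right _ hcard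
          calc T.card * (r + 1) + (r + 1) = (T.card + 1) * (r + 1) := by ring
            _ ≤ J.card * (r + 1) := this
        have e3 : J.card * (r + 1) ≤ N + 1 := le_trans (Nat.le_add_right _ _) hm
        omega
      obtain ⟨j₁, hj₁, hrtg₁⟩ := IH T G i u hTf hiT hmT
      have hj₁T : j₁ ∈ T := Finset.mem_filter.1 hj₁ |>.1
      have hj₁J : j₁ ∈ J := hTJ hj₁T
      have hrtgJ : Relation.ReflTransGen (Step p J u) i j₁ :=
        Relation.ReflTransGen.mono (p := Step p J u) (fun a b hab => ⟨hab.1, hTJ hab.2.1, hTJ hab.2.2.1, hab.2.2.2⟩) i j₁ hrtg₁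
      have hj₁u : u (p i) < u (p j₁) :=
        lt_of_lt_of_le hs0u ((Finset.mem_filter.1 hj₁).2 s0 hs0T)
      have hmJ : J.card * (r + 1) + (J.filter fun s => u (p j₁) < u (p s)).card ≤ N := by
        have hss : (J.filter fun s => u (p j₁) < u (p s)) ⊂
            (J.filter fun s => u (p i) < u (p s)) := by
          refine Finset.ssubset_iff_of_subset ?_ |>.2 ?_
          · intro s hs
            rw [Finset.mem_filter] at hs ⊢
            exact ⟨hs.1, lt_trans hj₁u hs.2⟩
          · exact ⟨j₁, Finset.mem_filter.2 ⟨hj₁J, hj₁u⟩, by simp⟩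
        have hcc := Finset.card_lt_card hss
        rw [← hAdef] at hcc
        omega
      obtain ⟨js, hjs, hrtg₂⟩ := IH J g j₁ u hJf hj₁J hmJ
      exact ⟨js, hjs, hrtgJ.trans hrtg₂⟩
    -- the exposer of the vertex i
    obtain ⟨w, hwi⟩ := hw i
    have hwJ : ∀ s ∈ J, s ≠ i → w (p s) < w (p i) := fun s _ hs => hwi s hs
    have hJne : J.Nonempty := ⟨i, hi⟩
    -- ratios and the first shoot
    have hden : ∀ s ∈ A, 0 < u (p s) - u (p i) := by
      intro s hs
      have := (Finset.mem_filter.1 hs).2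
      linarith
    have hAnei : ∀ s ∈ A, s ≠ i := by
      intro s hs h
      rw [h] at hs
      exact absurd (Finset.mem_filter.1 hs).2 (lt_irrefl _)
    have hnum : ∀ s ∈ A, 0 < w (p i) - w (p s) := by
      intro s hs
      have := hwJ s (Finset.mem_filter.1 hs).1 (hAnei s hs)
      linarith
    set ρ := fun s => (w (p i) - w (p s)) / (u (p s) - u (p i)) with hρdef
    set lam := A.inf' hA ρ with hlamdef
    have hlampos : 0 < lam := by
      rw [hlamdef, Finset.lt_inf'_iff]
      intro s hs
      exact div_pos (hnum s hs) (hden s hs)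
    have hmin : ∀ s ∈ J, u (p i) < u (p s) →
        lam * (u (p s) - u (p i)) ≤ w (p i) - w (p s) := by
      intro s hsJ hsu
      have hsA : s ∈ A := Finset.mem_filter.2 ⟨hsJ, hsu⟩
      have h1 : lam ≤ ρ s := Finset.inf'_le _ hsA
      rw [hρdef] at h1
      exact (le_div_iff₀ (hden s hsA)).1 h1
    set T := insert i (A.filter
      (fun s => w (p i) - w (p s) = lam * (u (p s) - u (p i)))) with hTdef
    have hTeq : T = amax p J (w + lam • u) := by
      rw [hTdef, hAdef]
      exact amax_shoot p J hi w u hwJ hlampos hmin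
    obtain ⟨sm, hsmA, hsm⟩ := Finset.exists_mem_eq_inf' hA ρ
    have hsmtie : sm ∈ A.filter
        (fun s => w (p i) - w (p s) = lam * (u (p s) - u (p i))) := by
      refine Finset.mem_filter.2 ⟨hsmA, ?_⟩
      have h2 : lam = (w (p i) - w (p sm)) / (u (p sm) - u (p i)) := by
        rw [hlamdef, hsm]
      exact ((eq_div_iff (hden sm hsmA).ne').1 h2).symm
    have hTsub : T ⊆ J := by
      rw [hTdef]
      intro s hs
      rcases Finset.mem_insert.1 hs with rfl | hs
      · exact hi
      · exact (Finset.mem_filter.1 (Finset.mem_filter.1 hs).1).1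
    obtain ⟨δ, hδpos, hglue⟩ := amax_glue p g (w + lam • u) J hJf hJne
    have hTface : T = amax p Finset.univ (g + δ • (w + lam • u)) := by
      rw [hTeq, ← hglue]
    by_cases hTJ : T = J
    · -- all of J \ {i} is improving and ties; collinearity case analysis
      have hall : ∀ s ∈ J, s ≠ i → s ∈ A ∧
          w (p i) - w (p s) = lam * (u (p s) - u (p i)) := by
        intro s hsJ hsi
        have : s ∈ T := hTJ ▸ hsJ
        rw [hTdef] at this
        rcases Finset.mem_insert.1 this with rfl | hmem
        · exact absurd rfl hsi
        · have := Finset.mem_filter.1 hmem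
          exact ⟨this.1, this.2⟩
      by_cases hcol : ∀ s₁ ∈ A, ∀ s₂ ∈ A,
          (w (p i) - w (p s₁)) • (p s₂ - p i) = (w (p i) - w (p s₂)) • (p s₁ - p i)
      · -- collinear case: a single edge step to the farthest point suffices
        obtain ⟨s₁, hs₁A⟩ := id hA
        set d₀ := p s₁ - p i with hd₀
        set τ := fun s => (w (p i) - w (p s)) / (w (p i) - w (p s₁)) with hτdef
        have ha1 : w (p i) - w (p s₁) ≠ 0 := (hnum s₁ hs₁A).ne'
        have hrel : ∀ s ∈ A, p s - p i = τ s • d₀ := by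
          intro s hs
          have h1 := hcol s₁ hs₁A s hs
          calc p s - p i
              = (w (p i) - w (p s₁))⁻¹ • ((w (p i) - w (p s₁)) • (p s - p i)) := by
                rw [smul_smul, inv_mul_cancel₀ ha1, one_smul]
            _ = (w (p i) - w (p s₁))⁻¹ • ((w (p i) - w (p s)) • d₀) := by rw [h1]
            _ = τ s • d₀ := by
                rw [smul_smul]
                congr 1
                simp only [hτdef]
                rw [div_eq_inv_mul]
        have hτpos : ∀ s ∈ A, 0 < τ s :=
          fun s hs => div_pos (hnum s hs) (hnum s₁ hs₁A)
        obtain ⟨z, hzA, hz⟩ := A.exists_max_image τ hA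
        have hzJ : z ∈ J := (Finset.mem_filter.1 hzA).1
        have hud : u d₀ = u (p s₁) - u (p i) := by rw [hd₀, map_sub]
        have hudpos : 0 < u d₀ := by
          rw [hud]; exact hden s₁ hs₁A
        have hval : ∀ s ∈ A, u (p s) - u (p i) = τ s * u d₀ := by
          intro s hs
          have : u (p s) - u (p i) = u (p s - p i) := (map_sub u _ _).symm
          rw [this, hrel s hs, map_smul, smul_eq_mul]
        have hzmax : z ∈ amax p J u := by
          rw [amax, Finset.mem_filter]
          refine ⟨hzJ, fun j hj => ?_⟩
          by_cases hji : j = i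
          · rw [hji]
            exact le_of_lt (Finset.mem_filter.1 hzA).2
          · have hjA : j ∈ A := (hall j hj hji).1
            have h1 := hval j hjA
            have h2 := hval z hzA
            have h3 : τ j ≤ τ z := hz j hjA
            nlinarith
        have hiz : p z - p i = τ z • d₀ := hrel z hzA
        have hseg : ∀ s ∈ J, p s ∈ segment ℝ (p i) (p z) := by
          intro s hs
          by_cases hsi : s = i
          · rw [hsi]; exact left_mem_segment _ _ _
          · have hsA : s ∈ A := (hall s hs hsi).1
            rw [segment_eq_image']
            refine ⟨τ s / τ z, ⟨le_of_lt (div_pos (hτpos s hsA) (hτpos z hzA)),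
              div_le_one_of_le₀ (hz s hsA) (hτpos z hzA).le⟩, ?_⟩
            show p i + (τ s / τ z) • (p z - p i) = p s
            rw [hiz, smul_smul, div_mul_cancel₀ _ (hτpos z hzA).ne']
            rw [← hrel s hsA]
            abel
        have hJhull : hull p J = convexHull ℝ {p i, p z} := by
          rw [convexHull_pair]
          apply Set.Subset.antisymm
          · apply convexHull_min _ (convex_segment _ _)
            rintro _ ⟨s, hs, rfl⟩
            exact hseg s (by simpa using hs)
          · rw [← convexHull_pair]
            apply convexHull_min _ (convex_convexHull ℝ _)
            rintro y hy
            rcases hy with rfl | hy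
            · exact mem_hull_self hi
            · rw [Set.mem_singleton_iff] at hy
              rw [hy]
              exact mem_hull_self hzJ
        have hexp : IsExposed ℝ (hull p Finset.univ) (convexHull ℝ {p i, p z}) := by
          rw [← hJhull]
          have h5 := isExposed_hull_amax p Finset.univ g
          have h6 : hull p (amax p Finset.univ g) = hull p J := by rw [← hJf]
          rwa [h6] at h5
        exact ⟨z, hzmax, Relation.ReflTransGen.single
          ⟨(Finset.mem_filter.1 hzA).2, hi, hzJ, hexp⟩⟩
      · -- perturbation case: break the tie and get a proper subface
        push_neg at hcol
        obtain ⟨s₁, hs₁A, s₂, hs₂A, hz12⟩ := hcol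
        set zv := (w (p i) - w (p s₁)) • (p s₂ - p i)
          - (w (p i) - w (p s₂)) • (p s₁ - p i) with hzv
        have hzvne : zv ≠ 0 := sub_ne_zero.2 hz12
        set q := (innerSL ℝ) zv with hqdef
        have hqzv : 0 < q zv := by
          rw [hqdef, innerSL_apply_apply, real_inner_self_eq_norm_sq]
          have : 0 < ‖zv‖ := norm_pos_iff.2 hzvne
          positivity
        set η := A.inf' hA (fun s => (u (p s) - u (p i)) / (|q (p i) - q (p s)| + 1))
          with hηdef
        have hηpos : 0 < η := by
          rw [hηdef, Finset.lt_inf'_iff]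
          intro s hs
          exact div_pos (hden s hs) (by positivity)
        set u' := u + η • q with hu'def
        have hu'val : ∀ k : Fin r, u' (p k) = u (p k) + η * q (p k) := by
          intro k; rw [hu'def]; simp
        have hA'A : J.filter (fun s => u' (p i) < u' (p s)) = A := by
          ext s
          rw [Finset.mem_filter]
          constructor
          · rintro ⟨hsJ, hsu⟩
            by_cases hsi : s = i
            · rw [hsi] at hsu; exact absurd hsu (lt_irrefl _)
            · exact (hall s hsJ hsi).1
          · intro hsA
            refine ⟨(Finset.mem_filter.1 hsA).1, ?_⟩
            have h1 : η ≤ (u (p s) - u (p i)) / (|q (p i) - q (p s)| + 1) := by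
              rw [hηdef]; exact Finset.inf'_le _ hsA
            have h2 : η * (|q (p i) - q (p s)| + 1) ≤ u (p s) - u (p i) :=
              (le_div_iff₀ (by positivity)).1 h1
            have h3 : q (p i) - q (p s) ≤ |q (p i) - q (p s)| := le_abs_self _
            have h4 : (0:ℝ) ≤ |q (p i) - q (p s)| := abs_nonneg _
            rw [hu'val, hu'val]
            nlinarith
        have hden' : ∀ s ∈ A, 0 < u' (p s) - u' (p i) := by
          intro s hs
          have : s ∈ J.filter (fun s => u' (p i) < u' (p s)) := hA'A ▸ hs
          have := (Finset.mem_filter.1 this).2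
          linarith
        set ρ' := fun s => (w (p i) - w (p s)) / (u' (p s) - u' (p i)) with hρ'def
        set lam' := A.inf' hA ρ' with hlam'def
        have hlam'pos : 0 < lam' := by
          rw [hlam'def, Finset.lt_inf'_iff]
          intro s hs
          exact div_pos (hnum s hs) (hden' s hs)
        have hmin' : ∀ s ∈ J, u' (p i) < u' (p s) →
            lam' * (u' (p s) - u' (p i)) ≤ w (p i) - w (p s) := by
          intro s hsJ hsu
          have hsA : s ∈ A := by
            rw [← hA'A]
            exact Finset.mem_filter.2 ⟨hsJ, hsu⟩
          have h1 : lam' ≤ ρ' s := by rw [hlam'def]; exact Finset.inf'_le _ hsA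
          rw [hρ'def] at h1
          exact (le_div_iff₀ (hden' s hsA)).1 h1
        set T' := insert i (A.filter
          (fun s => w (p i) - w (p s) = lam' * (u' (p s) - u' (p i)))) with hT'def
        have hT'eq : T' = amax p J (w + lam' • u') := by
          rw [hT'def, ← hA'A]
          exact amax_shoot p J hi w u' hwJ hlam'pos hmin'
        obtain ⟨δ', hδ'pos, hglue'⟩ := amax_glue p g (w + lam' • u') J hJf hJne
        have hT'face : T' = amax p Finset.univ (g + δ' • (w + lam' • u')) := by
          rw [hT'eq, ← hglue']
        have hT'sub : T' ⊆ J := by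
          rw [hT'def]
          intro s hs
          rcases Finset.mem_insert.1 hs with rfl | hs
          · exact hi
          · exact (Finset.mem_filter.1 (Finset.mem_filter.1 hs).1).1
        obtain ⟨sm', hsm'A, hsm'⟩ := Finset.exists_mem_eq_inf' hA ρ'
        have hsm'tie : sm' ∈ A.filter
            (fun s => w (p i) - w (p s) = lam' * (u' (p s) - u' (p i))) := by
          refine Finset.mem_filter.2 ⟨hsm'A, ?_⟩
          have h2 : lam' = (w (p i) - w (p sm')) / (u' (p sm') - u' (p i)) := by
            rw [hlam'def, hsm']
          exact ((eq_div_iff (hden' sm' hsm'A).ne').1 h2).symm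
        have hT'ne : T' ≠ J := by
          intro hT'J
          have htie : ∀ s ∈ A, w (p i) - w (p s) = lam' * (u' (p s) - u' (p i)) := by
            intro s hsA
            have hsJ : s ∈ J := (Finset.mem_filter.1 hsA).1
            have hsT' : s ∈ T' := hT'J ▸ hsJ
            rw [hT'def] at hsT'
            rcases Finset.mem_insert.1 hsT' with h | h
            · exact absurd h (hAnei s hsA)
            · exact (Finset.mem_filter.1 h).2
          -- derive the contradiction q zv = 0
          set a1 := w (p i) - w (p s₁) with ha1d
          set a2 := w (p i) - w (p s₂) with ha2d
          set b1 := u (p s₁) - u (p i) with hb1d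
          set b2 := u (p s₂) - u (p i) with hb2d
          set c1 := q (p s₁) - q (p i) with hc1d
          set c2 := q (p s₂) - q (p i) with hc2d
          have hold1 : a1 = lam * b1 := (hall s₁ (Finset.mem_filter.1 hs₁A).1
            (hAnei s₁ hs₁A)).2
          have hold2 : a2 = lam * b2 := (hall s₂ (Finset.mem_filter.1 hs₂A).1
            (hAnei s₂ hs₂A)).2
          have hnew1 : a1 = lam' * (b1 + η * c1) := by
            have := htie s₁ hs₁A
            rw [hu'val, hu'val] at this
            rw [ha1d, hb1d, hc1d]
            rw [this]; ring
          have hnew2 : a2 = lam' * (b2 + η * c2) := by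
            have := htie s₂ hs₂A
            rw [hu'val, hu'val] at this
            rw [ha2d, hb2d, hc2d]
            rw [this]; ring
          have hcross : a1 * c2 = a2 * c1 := by
            have e1 : a1 * (b2 + η * c2) = a2 * (b1 + η * c1) := by
              rw [hnew1, hnew2]; ring
            have e2 : a1 * b2 = a2 * b1 := by rw [hold1, hold2]; ring
            have e3 : η * (a1 * c2 - a2 * c1) = 0 := by linear_combination e1 - e2
            have := mul_eq_zero.1 e3
            rcases this with h | h
            · exact absurd h hηpos.ne'
            · linarith
          have hqzv0 : q zv = 0 := by
            rw [hzv, map_sub, map_smul, map_smul, map_sub, map_sub]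
            rw [smul_eq_mul, smul_eq_mul]
            rw [← hc1d, ← hc2d]
            linarith [hcross]
          rw [hqzv0] at hqzv
          exact lt_irrefl _ hqzv
        exact hcont T' _ hT'face hT'sub hT'ne (Finset.mem_insert_self _ _)
          ⟨sm', by rw [hT'def]; exact Finset.mem_insert_of_mem hsm'tie,
            (Finset.mem_filter.1 hsm'A).2⟩
    · exact hcont T _ hTface hTsub hTJ (Finset.mem_insert_self _ _)
        ⟨sm, by rw [hTdef]; exact Finset.mem_insert_of_mem hsmtie,
          (Finset.mem_filter.1 hsmA).2⟩



/-- If an exposed subset `G` of `P` is contained in `G' ⊆ P` with no larger affine dimension,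
then `G' ⊆ G`. -/
theorem nested_exposed_subset {P G G' : Set (EuclideanSpace ℝ (Fin n))}
    (hG : IsExposed ℝ P G) (hGne : G.Nonempty) (hGG' : G ⊆ G') (hG'P : G' ⊆ P)
    (hdim : Module.finrank ℝ (affineSpan ℝ G').direction ≤
      Module.finrank ℝ (affineSpan ℝ G).direction) :
    G' ⊆ G := by
  obtain ⟨g, hgeq⟩ := hG hGne
  have hle : affineSpan ℝ G ≤ affineSpan ℝ G' := affineSpan_mono _ hGG'
  have hdirle : (affineSpan ℝ G).direction ≤ (affineSpan ℝ G').direction :=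
    AffineSubspace.direction_le hle
  have hdir : (affineSpan ℝ G).direction = (affineSpan ℝ G').direction :=
    Submodule.eq_of_le_of_finrank_le hdirle hdim
  obtain ⟨y₀, hy₀⟩ := hGne
  have hspan : affineSpan ℝ G = affineSpan ℝ G' := by
    apply AffineSubspace.ext_of_direction_eq hdir
    exact ⟨y₀, mem_affineSpan _ hy₀, mem_affineSpan _ (hGG' hy₀)⟩
  have hy₀' := hy₀
  rw [hgeq] at hy₀'
  obtain ⟨hy₀P, hy₀max⟩ := hy₀'
  set M := g y₀ with hM
  have hGM : ∀ z ∈ G, g z = M := by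
    intro z hz
    rw [hgeq] at hz
    exact le_antisymm (hy₀max z hz.1) (hz.2 y₀ hy₀P)
  have hspanM : ∀ y ∈ affineSpan ℝ G, g y = M := by
    intro y hy
    refine affineSpan_induction (p := fun z => g z = M) hy hGM ?_
    intro c u v s hu hv hs
    have hc : g (c • (u -ᵥ v) +ᵥ s) = c * (g u - g v) + g s := by
      simp [vsub_eq_sub, vadd_eq_add, map_add, map_smul, map_sub]
    rw [hc, hu, hv, hs]
    ring
  intro y hyG'
  have hyspan : y ∈ affineSpan ℝ G := by
    rw [hspan]
    exact mem_affineSpan _ hyG'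
  have hyM : g y = M := hspanM y hyspan
  rw [hgeq]
  refine ⟨hG'P hyG', fun z hz => ?_⟩
  rw [hyM]
  exact hy₀max z hz


end Stmt17Aux

open Stmt17Aux

/-- with continuously moving points, distinct vertices, constant combinatorial
face structure on `(0,ε)`, and constant edge directions on `(0,ε)`, every `k`-dimensional
face `F` of `P(0)` is the limit `F_I(0)` of a family of `k`-dimensional faces `F_I(t)` of
`P(t)`. -/
theorem stmt17 {n r : ℕ} (hn : 1 ≤ n) (hr : 1 ≤ r) (ε : ℝ) (hε : 0 < ε)
    (x : Fin r → ℝ → EuclideanSpace ℝ (Fin n))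
    (hcont : ∀ i, ContinuousOn (x i) (Set.Ico 0 ε))
    (hdistinct : ∀ t ∈ Set.Ioo 0 ε, ∀ i j : Fin r, i ≠ j → x i t ≠ x j t)
    (hvert : ∀ t ∈ Set.Ioo 0 ε, ∀ i : Fin r, x i t ∈ Set.extremePoints ℝ (movPoly x t))
    (hconst : ∀ (I : Set (Fin r)) (k : ℕ), ∀ t₀ ∈ Set.Ioo 0 ε,
      (IsExposed ℝ (movPoly x t₀) (movFace x I t₀) ∧ movDim (movFace x I t₀) = k) →
      ∀ t ∈ Set.Ioo 0 ε,
        IsExposed ℝ (movPoly x t) (movFace x I t) ∧ movDim (movFace x I t) = k)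
    (hedges : ∀ i j : Fin r, i ≠ j →
      (∀ t ∈ Set.Ioo 0 ε, IsExposed ℝ (movPoly x t) (movFace x {i, j} t)) →
      ∀ t₀ ∈ Set.Ioo 0 ε, ∀ t₁ ∈ Set.Ioo 0 ε,
        ∃ c : ℝ, x j t₁ - x i t₁ = c • (x j t₀ - x i t₀)) :
    ∀ (F : Set (EuclideanSpace ℝ (Fin n))) (k : ℕ),
      IsExposed ℝ (movPoly x 0) F → movDim F = k →
      ∃ I : Set (Fin r),
        (∀ t ∈ Set.Ioo 0 ε,
          IsExposed ℝ (movPoly x t) (movFace x I t) ∧ movDim (movFace x I t) = k) ∧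
        movFace x I 0 = F := by
  classical
  intro F k hFexp hFdim
  -- trivial case: the empty face
  rcases Set.eq_empty_or_nonempty F with rfl | hFne
  · refine ⟨∅, ?_, ?_⟩
    · intro t ht
      have h1 : movFace x ∅ t = (∅ : Set (EuclideanSpace ℝ (Fin n))) := by
        simp [movFace]
      rw [h1]
      refine ⟨isExposed_empty, ?_⟩
      rw [← hFdim]
    · simp [movFace]
  -- basic infrastructure
  have hrne : Nonempty (Fin r) := ⟨⟨0, hr⟩⟩
  set t₁ : ℝ := ε / 2 with ht₁def
  have ht₁ : t₁ ∈ Set.Ioo 0 ε := ⟨by positivity, by rw [ht₁def]; linarith⟩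
  have hNB : (𝓝[Set.Ioo 0 ε] (0:ℝ)).NeBot := by
    rw [← mem_closure_iff_nhdsWithin_neBot, closure_Ioo hε.ne]
    exact ⟨le_refl 0, hε.le⟩
  have htendx : ∀ i : Fin r, Filter.Tendsto (x i) (𝓝[Set.Ioo 0 ε] 0) (𝓝 (x i 0)) := by
    intro i
    have h1 : Set.Ioo (0:ℝ) ε ⊆ Set.Ico 0 ε := Set.Ioo_subset_Ico_self
    have h2 := (hcont i 0 ⟨le_refl 0, hε⟩).tendsto
    exact h2.mono_left (nhdsWithin_mono _ h1)
  have hpigeon : ∀ {α : Type} [Finite α] (L : Filter ℝ) [L.NeBot] (f : ℝ → α),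
      ∃ a, ∃ᶠ t in L, f t = a := by
    intro α _ L _ f
    by_contra hcon
    push_neg at hcon
    have h1 : ∀ᶠ t in L, ∀ a : α, ¬ f t = a := Filter.eventually_all.2 hcon
    obtain ⟨t, ht⟩ := h1.exists
    exact ht (f t) rfl
  have hevIoo : ∀ᶠ t in 𝓝[Set.Ioo 0 ε] (0:ℝ), t ∈ Set.Ioo 0 ε := self_mem_nhdsWithin
  have hPoly : ∀ t : ℝ, movPoly x t = hull (fun i => x i t) Finset.univ := by
    intro t
    rw [movPoly, movFace, hull, Finset.coe_univ]
  have hface : ∀ (K : Finset (Fin r)) (t : ℝ), movFace x ↑K t = hull (fun i => x i t) K := by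
    intro K t; rfl
  have hpairs : ∀ (a b : Fin r) (t : ℝ),
      movFace x {a, b} t = convexHull ℝ {x a t, x b t} := by
    intro a b t
    rw [movFace, Set.image_pair]
  have hinj : ∀ t ∈ Set.Ioo 0 ε, Function.Injective (fun i => x i t) := by
    intro t ht a b hab
    by_contra hne
    exact hdistinct t ht a b hne hab
  have hexpw : ∀ t ∈ Set.Ioo 0 ε, ∀ i : Fin r,
      ∃ w : EuclideanSpace ℝ (Fin n) →L[ℝ] ℝ,
        ∀ j : Fin r, j ≠ i → w (x j t) < w (x i t) := by
    intro t ht i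
    have h1 := hvert t ht i
    rw [hPoly t] at h1
    exact exists_exposer (fun i => x i t) (hinj t ht) i h1
  -- membership of points in the moving polytope
  have hmemP : ∀ (t : ℝ) (j : Fin r), x j t ∈ movPoly x t := by
    intro t j
    rw [hPoly t]
    exact mem_hull_self (Finset.mem_univ j)
  -- edge direction data
  set dd : Fin r → Fin r → EuclideanSpace ℝ (Fin n) := fun a b => x b t₁ - x a t₁ with hdd
  set cc : Fin r → Fin r → ℝ → ℝ := fun a b t =>
    (inner ℝ (dd a b) (x b t - x a t) : ℝ) / (inner ℝ (dd a b) (dd a b) : ℝ) with hcc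
  have hccval : ∀ (a b : Fin r), dd a b ≠ 0 → ∀ (t : ℝ) (c : ℝ),
      x b t - x a t = c • dd a b → cc a b t = c := by
    intro a b hne t c hc
    rw [hcc]
    simp only
    rw [hc, real_inner_smul_right, mul_div_assoc, div_self, mul_one]
    exact fun h => hne ((inner_self_eq_zero (𝕜 := ℝ)).1 h)
  have hedgedata : ∀ a b : Fin r, a ≠ b →
      (∀ t ∈ Set.Ioo 0 ε, IsExposed ℝ (movPoly x t) (convexHull ℝ {x a t, x b t})) →
      (dd a b ≠ 0) ∧
      (∀ t ∈ Set.Ioo 0 ε, x b t - x a t = cc a b t • dd a b ∧ cc a b t ≠ 0) ∧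
      (x b 0 - x a 0 = cc a b 0 • dd a b) ∧
      ((∀ t ∈ Set.Ioo 0 ε, 0 < cc a b t) ∨ (∀ t ∈ Set.Ioo 0 ε, cc a b t < 0)) := by
    intro a b hab hexp
    have hddne : dd a b ≠ 0 := by
      rw [hdd]
      exact sub_ne_zero.2 (Ne.symm (hdistinct t₁ ht₁ a b hab))
    have hpairexp : ∀ t ∈ Set.Ioo 0 ε, IsExposed ℝ (movPoly x t) (movFace x {a, b} t) := by
      intro t ht; rw [hpairs]; exact hexp t ht
    have hrep : ∀ t ∈ Set.Ioo 0 ε, ∃ c : ℝ, x b t - x a t = c • dd a b := by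
      intro t ht
      obtain ⟨c, hc⟩ := hedges a b hab hpairexp t₁ ht₁ t ht
      exact ⟨c, by rw [hc, hdd]⟩
    have hIooD : ∀ t ∈ Set.Ioo 0 ε, x b t - x a t = cc a b t • dd a b ∧ cc a b t ≠ 0 := by
      intro t ht
      obtain ⟨c, hcrep⟩ := hrep t ht
      have h1 : cc a b t = c := hccval a b hddne t c hcrep
      constructor
      · rw [h1]; exact hcrep
      · rw [h1]
        intro h0
        rw [h0, zero_smul] at hcrep
        exact (sub_ne_zero.2 (Ne.symm (hdistinct t ht a b hab))) hcrep
    have hdifftend : Filter.Tendsto (fun t => x b t - x a t) (𝓝[Set.Ioo 0 ε] 0)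
        (𝓝 (x b 0 - x a 0)) := (htendx b).sub (htendx a)
    have hcctend : Filter.Tendsto (cc a b) (𝓝[Set.Ioo 0 ε] 0) (𝓝 (cc a b 0)) := by
      rw [hcc]
      simp only
      exact (Filter.Tendsto.inner tendsto_const_nhds hdifftend).div_const _
    have h0eq : x b 0 - x a 0 = cc a b 0 • dd a b := by
      have h2 : Filter.Tendsto (fun t => cc a b t • dd a b) (𝓝[Set.Ioo 0 ε] 0)
          (𝓝 (cc a b 0 • dd a b)) := hcctend.smul_const _
      have h3 : (fun t => x b t - x a t) =ᶠ[𝓝[Set.Ioo 0 ε] 0]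
          (fun t => cc a b t • dd a b) := hevIoo.mono (fun t ht => (hIooD t ht).1)
      exact tendsto_nhds_unique (hdifftend.congr' h3) h2
    have hccont : ContinuousOn (cc a b) (Set.Ioo 0 ε) := by
      rw [hcc]
      simp only
      apply ContinuousOn.div_const
      apply ContinuousOn.inner continuousOn_const
      exact ((hcont b).mono Set.Ioo_subset_Ico_self).sub
        ((hcont a).mono Set.Ioo_subset_Ico_self)
    refine ⟨hddne, hIooD, h0eq, ?_⟩
    by_cases hpos : ∀ t ∈ Set.Ioo 0 ε, 0 < cc a b t
    · exact Or.inl hpos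
    · push_neg at hpos
      obtain ⟨t₂, ht₂, ht₂le⟩ := hpos
      have ht₂neg : cc a b t₂ < 0 := lt_of_le_of_ne ht₂le ((hIooD t₂ ht₂).2)
      refine Or.inr (fun t₃ ht₃ => ?_)
      by_contra ht₃pos'
      push_neg at ht₃pos'
      have ht₃pos : 0 < cc a b t₃ := lt_of_le_of_ne ht₃pos' (Ne.symm (hIooD t₃ ht₃).2)
      have hsub : Set.uIcc t₂ t₃ ⊆ Set.Ioo 0 ε :=
        (Set.ordConnected_Ioo).uIcc_subset ht₂ ht₃
      have h0mem : (0:ℝ) ∈ Set.uIcc (cc a b t₂) (cc a b t₃) :=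
        Set.mem_uIcc.2 (Or.inl ⟨ht₂neg.le, ht₃pos.le⟩)
      obtain ⟨t₀, ht₀, hcc0⟩ := intermediate_value_uIcc (hccont.mono hsub) h0mem
      exact ((hIooD t₀ (hsub ht₀)).2) hcc0
  -- sign-corrected edge directions
  set sgn : Fin r → Fin r → ℝ := fun a b => if 0 < cc a b t₁ then 1 else -1 with hsgn
  set edir : Fin r → Fin r → EuclideanSpace ℝ (Fin n) := fun a b => sgn a b • dd a b with hedir
  set acc : Fin r → Fin r → ℝ → ℝ := fun a b t => sgn a b * cc a b t with hacc
  have hsgnsq : ∀ a b : Fin r, sgn a b * sgn a b = 1 := by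
    intro a b
    rw [hsgn]
    simp only
    split_ifs <;> norm_num
  have hsmulgen : ∀ (a b : Fin r) (c : ℝ), c • dd a b = (sgn a b * c) • edir a b := by
    intro a b c
    rw [hedir]
    simp only
    rw [smul_smul]
    rw [mul_comm (sgn a b) c, mul_assoc, hsgnsq, mul_one]
  have hedgepos : ∀ a b : Fin r, a ≠ b →
      (∀ t ∈ Set.Ioo 0 ε, IsExposed ℝ (movPoly x t) (convexHull ℝ {x a t, x b t})) →
      (∀ t ∈ Set.Ioo 0 ε, 0 < acc a b t ∧ x b t - x a t = acc a b t • edir a b) ∧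
      (x b 0 - x a 0 = acc a b 0 • edir a b) := by
    intro a b hab hexp
    obtain ⟨hddne, hIooD, h0eq, hsign⟩ := hedgedata a b hab hexp
    have hsgnpos : ∀ t ∈ Set.Ioo 0 ε, 0 < acc a b t := by
      rcases hsign with hsign | hsign
      · intro t ht
        rw [hacc, hsgn]
        simp only
        rw [if_pos (hsign t₁ ht₁), one_mul]
        exact hsign t ht
      · intro t ht
        rw [hacc, hsgn]
        simp only
        rw [if_neg (not_lt.2 (hsign t₁ ht₁).le)]
        have := hsign t ht
        nlinarith
    refine ⟨fun t ht => ⟨hsgnpos t ht, ?_⟩, ?_⟩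
    · rw [(hIooD t ht).1, hsmulgen, hacc]
    · rw [h0eq, hsmulgen, hacc]
  have huniv_ne : (Finset.univ : Finset (Fin r)).Nonempty := ⟨⟨0, hr⟩, Finset.mem_univ _⟩
  have hexp_of_face : ∀ (K : Finset (Fin r)) (t : ℝ)
      (g : EuclideanSpace ℝ (Fin n) →L[ℝ] ℝ),
      K = amax (fun i => x i t) Finset.univ g →
      IsExposed ℝ (movPoly x t) (movFace x ↑K t) := by
    intro K t g hKg
    rw [hPoly t, hface K t, hKg]
    exact isExposed_hull_amax _ _ _
  have d1 : ∀ (K : Finset (Fin r)) (t₂ : ℝ), t₂ ∈ Set.Ioo 0 ε →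
      (∃ g, K = amax (fun i => x i t₂) Finset.univ g) →
      ∀ t ∈ Set.Ioo 0 ε, IsExposed ℝ (movPoly x t) (movFace x ↑K t) ∧
        movDim (movFace x ↑K t) = movDim (movFace x ↑K t₂) := by
    rintro K t₂ ht₂ ⟨g, hKg⟩ t ht
    exact hconst ↑K (movDim (movFace x ↑K t₂)) t₂ ht₂ ⟨hexp_of_face K t₂ g hKg, rfl⟩ t ht
  have hamax_ne : ∀ (t : ℝ) (J : Finset (Fin r)) (g : EuclideanSpace ℝ (Fin n) →L[ℝ] ℝ),
      J.Nonempty → (amax (fun i => x i t) J g).Nonempty := by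
    intro t J g hJ
    obtain ⟨i₀, hi₀, hmax⟩ := J.exists_max_image (fun j => g (x j t)) hJ
    exact ⟨i₀, Finset.mem_filter.2 ⟨hi₀, hmax⟩⟩
  have hmovmono : ∀ (K K' : Finset (Fin r)) (t : ℝ), K ⊆ K' →
      movFace x ↑K t ⊆ movFace x ↑K' t := by
    intro K K' t h
    rw [hface, hface]
    exact hull_mono h
  have hmovsubP : ∀ (K : Finset (Fin r)) (t : ℝ), movFace x ↑K t ⊆ movPoly x t := by
    intro K t
    rw [hPoly, hface]
    exact hull_mono (Finset.subset_univ K)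
  have hmem_face : ∀ (K : Finset (Fin r)) (t : ℝ) (j : Fin r), j ∈ K →
      x j t ∈ movFace x ↑K t := by
    intro K t j hj
    rw [hface]
    exact mem_hull_self hj
  have hface_ne : ∀ (K : Finset (Fin r)) (t : ℝ), K.Nonempty →
      (movFace x ↑K t).Nonempty := by
    rintro K t ⟨j, hj⟩
    exact ⟨x j t, hmem_face K t j hj⟩
  have hinsert_eq : ∀ (K : Finset (Fin r)) (t : ℝ) (j : Fin r),
      x j t ∈ movFace x ↑K t → movFace x ↑(insert j K) t = movFace x ↑K t := by
    intro K t j hj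
    apply Set.Subset.antisymm
    · rw [hface (insert j K) t, hull]
      apply convexHull_min _ (convex_convexHull ℝ _)
      rintro _ ⟨s, hs, rfl⟩
      rw [Finset.mem_coe, Finset.mem_insert] at hs
      rcases hs with rfl | hs
      · exact hj
      · exact hmem_face K t _ hs
    · exact hmovmono _ _ _ (Finset.subset_insert _ _)
  have d2 : ∀ (K : Finset (Fin r)), K.Nonempty → ∀ (t₂ : ℝ), t₂ ∈ Set.Ioo 0 ε →
      (∃ g, K = amax (fun i => x i t₂) Finset.univ g) →
      ∀ (j : Fin r) (t : ℝ), t ∈ Set.Ioo 0 ε → x j t ∈ movFace x ↑K t →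
      ∀ (t' : ℝ), t' ∈ Set.Ioo 0 ε → x j t' ∈ movFace x ↑K t' := by
    intro K hKne t₂ ht₂ hKg j t ht hjt t' ht'
    have hIns := hinsert_eq K t j hjt
    have hKexp := (d1 K t₂ ht₂ hKg t ht).1
    have hInsExp : IsExposed ℝ (movPoly x t) (movFace x ↑(insert j K) t) := by
      rw [hIns]; exact hKexp
    have hconsIns := hconst ↑(insert j K) (movDim (movFace x ↑(insert j K) t)) t ht
      ⟨hInsExp, rfl⟩ t' ht'
    have hconsK := hconst ↑K (movDim (movFace x ↑K t)) t ht ⟨hKexp, rfl⟩ t' ht'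
    have hdimeq : movDim (movFace x ↑(insert j K) t') ≤ movDim (movFace x ↑K t') := by
      rw [hconsIns.2, hconsK.2, hIns]
    have hsub : movFace x ↑(insert j K) t' ⊆ movFace x ↑K t' :=
      nested_exposed_subset hconsK.1 (hface_ne K t' hKne)
        (hmovmono _ _ _ (Finset.subset_insert _ _)) (hmovsubP _ _) hdimeq
    exact hsub (hmem_face (insert j K) t' j (Finset.mem_insert_self _ _))
  have d4 : ∀ (K : Finset (Fin r)) (t₂ : ℝ), t₂ ∈ Set.Ioo 0 ε →
      (∃ g, K = amax (fun i => x i t₂) Finset.univ g) →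
      ∀ t ∈ Set.Ioo 0 ε, ∃ g, K = amax (fun i => x i t) Finset.univ g := by
    intro K t₂ ht₂ hKg t ht
    obtain ⟨g₂, hKg₂⟩ := hKg
    have hKne : K.Nonempty := by
      rw [hKg₂]
      exact hamax_ne t₂ Finset.univ g₂ huniv_ne
    have hKexp := (d1 K t₂ ht₂ ⟨g₂, hKg₂⟩ t ht).1
    obtain ⟨g, hgeq⟩ := hKexp (hface_ne K t hKne)
    refine ⟨g, ?_⟩
    ext s
    constructor
    · intro hs
      have h1 : x s t ∈ movFace x ↑K t := hmem_face K t s hs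
      rw [hgeq] at h1
      refine Finset.mem_filter.2 ⟨Finset.mem_univ _, fun j _ => ?_⟩
      exact h1.2 _ (hmemP t j)
    · intro hs
      have h1 : x s t ∈ movFace x ↑K t := by
        rw [hgeq]
        refine ⟨hmemP t s, ?_⟩
        have h2 : ∀ j : Fin r, g (x j t) ≤ g (x s t) := fun j =>
          (Finset.mem_filter.1 hs).2 j (Finset.mem_univ _)
        intro z hz
        rw [hPoly t] at hz
        exact g_le_on_hull (fun j _ => h2 j) z hz
      have h3 : x s t₂ ∈ movFace x ↑K t₂ := d2 K hKne t₂ ht₂ ⟨g₂, hKg₂⟩ s t ht h1 t₂ ht₂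
      have h4 : movFace x ↑K t₂ = {y ∈ movPoly x t₂ |
          ∀ z ∈ movPoly x t₂, g₂ z ≤ g₂ y} := by
        rw [hface, hKg₂, ← face_eq, ← hPoly]
      rw [h4] at h3
      rw [hKg₂]
      refine Finset.mem_filter.2 ⟨Finset.mem_univ _, fun j _ => ?_⟩
      exact h3.2 _ (hmemP t₂ j)
  -- the crux: points of a face J that are q-equal at time 0 to the frequent argmax face K'
  -- collapse onto K' at time 0
  have crux_pt : ∀ (q : EuclideanSpace ℝ (Fin n) →L[ℝ] ℝ) (J K' : Finset (Fin r)),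
      (∀ t ∈ Set.Ioo 0 ε, ∃ g, J = amax (fun i => x i t) Finset.univ g) →
      (∃ᶠ t in 𝓝[Set.Ioo 0 ε] 0, amax (fun i => x i t) J q = K') →
      ∀ i ∈ J, (∀ j ∈ K', q (x j 0) = q (x i 0)) →
      ∃ js ∈ K', x i 0 = x js 0 := by
    intro q J K' hJform hfreq i hiJ hqeq
    set R : ℝ := ∑ ab : Fin r × Fin r,
      (if 0 < q (edir ab.1 ab.2) then ‖edir ab.1 ab.2‖ / q (edir ab.1 ab.2) else 0) with hR
    have hRbound : ∀ a b : Fin r, 0 < q (edir a b) → ‖edir a b‖ / q (edir a b) ≤ R := by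
      intro a b h
      have h5 := Finset.single_le_sum (f := fun ab : Fin r × Fin r =>
          (if 0 < q (edir ab.1 ab.2) then ‖edir ab.1 ab.2‖ / q (edir ab.1 ab.2) else 0))
        (fun ab _ => by
          split_ifs with h'
          · positivity
          · exact le_refl _) (Finset.mem_univ (a, b))
      dsimp only at h5
      rw [if_pos h] at h5
      exact h5
    have hkey : ∀ t ∈ Set.Ioo 0 ε, amax (fun i => x i t) J q = K' →
        ∃ js ∈ K', ‖x js t - x i t‖ ≤ R * (q (x js t) - q (x i t)) := by
      intro t ht hamax
      obtain ⟨g, hJg⟩ := hJform t ht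
      obtain ⟨js, hjs, hrtg⟩ := path_lemma (fun i => x i t) (hinj t ht)
        (hexpw t ht) (J.card * (r+1) + (J.filter (fun s => q (x i t) < q (x s t))).card)
        J g i q hJg hiJ (le_refl _)
      refine ⟨js, hamax ▸ hjs, ?_⟩
      have hstepineq : ∀ b, Relation.ReflTransGen (Step (fun i => x i t) J q) i b →
          ‖x b t - x i t‖ ≤ R * (q (x b t) - q (x i t)) := by
        intro b hb
        induction hb with
        | refl => simp
        | tail hab hbc ih =>
          rename_i b' c'
          obtain ⟨hqlt, hb'J, hc'J, hexp⟩ := hbc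
          have hne : b' ≠ c' := by
            intro h
            rw [h] at hqlt
            exact lt_irrefl _ hqlt
          have h1 : IsExposed ℝ (movPoly x t) (convexHull ℝ {x b' t, x c' t}) := by
            rw [hPoly t]
            exact hexp
          have hexpall : ∀ t' ∈ Set.Ioo 0 ε,
              IsExposed ℝ (movPoly x t') (convexHull ℝ {x b' t', x c' t'}) := by
            intro t' ht'
            have h2 : IsExposed ℝ (movPoly x t) (movFace x {b', c'} t) := by
              rw [hpairs]
              exact h1
            have h3 := (hconst {b', c'} (movDim (movFace x {b', c'} t)) t ht
              ⟨h2, rfl⟩ t' ht').1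
            rwa [hpairs] at h3
          obtain ⟨hIoopos, h0⟩ := hedgepos b' c' hne hexpall
          obtain ⟨hpos, hdiff⟩ := hIoopos t ht
          have hqdiff : q (x c' t) - q (x b' t) = acc b' c' t * q (edir b' c') := by
            rw [← map_sub, hdiff, map_smul, smul_eq_mul]
          have hqltval : (0:ℝ) < q (x c' t) - q (x b' t) := by
            have : q (x b' t) < q (x c' t) := hqlt
            linarith
          have hqedirpos : 0 < q (edir b' c') := by
            rw [hqdiff] at hqltval
            by_contra hle
            push_neg at hle
            nlinarith
          have hnorm : ‖x c' t - x b' t‖ = acc b' c' t * ‖edir b' c'‖ := by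
            rw [hdiff, norm_smul, Real.norm_eq_abs, abs_of_pos hpos]
          have hstep2 : ‖x c' t - x b' t‖ ≤ R * (q (x c' t) - q (x b' t)) := by
            rw [hnorm, hqdiff]
            have h3 := hRbound b' c' hqedirpos
            rw [div_le_iff₀ hqedirpos] at h3
            calc acc b' c' t * ‖edir b' c'‖
                ≤ acc b' c' t * (R * q (edir b' c')) :=
                  mul_le_mul_of_nonneg_left h3 hpos.le
              _ = R * (acc b' c' t * q (edir b' c')) := by ring
          have htri : ‖x c' t - x i t‖ ≤ ‖x b' t - x i t‖ + ‖x c' t - x b' t‖ := by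
            have h4 := dist_triangle (x c' t) (x b' t) (x i t)
            rw [dist_eq_norm, dist_eq_norm, dist_eq_norm] at h4
            linarith
          calc ‖x c' t - x i t‖ ≤ ‖x b' t - x i t‖ + ‖x c' t - x b' t‖ := htri
            _ ≤ R * (q (x b' t) - q (x i t)) + R * (q (x c' t) - q (x b' t)) :=
              add_le_add ih hstep2
            _ = R * (q (x c' t) - q (x i t)) := by ring
      exact hstepineq js hrtg
    haveI hGNB : (𝓝[Set.Ioo 0 ε] (0:ℝ) ⊓
        𝓟 {t | amax (fun i => x i t) J q = K'}).NeBot :=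
      Filter.frequently_iff_neBot.1 hfreq
    have hGle : (𝓝[Set.Ioo 0 ε] (0:ℝ) ⊓ 𝓟 {t | amax (fun i => x i t) J q = K'}) ≤
        𝓝[Set.Ioo 0 ε] 0 := inf_le_left
    have hGIoo : ∀ᶠ t in (𝓝[Set.Ioo 0 ε] (0:ℝ) ⊓
        𝓟 {t | amax (fun i => x i t) J q = K'}), t ∈ Set.Ioo 0 ε :=
      hevIoo.filter_mono hGle
    have hGK : ∀ᶠ t in (𝓝[Set.Ioo 0 ε] (0:ℝ) ⊓
        𝓟 {t | amax (fun i => x i t) J q = K'}), amax (fun i => x i t) J q = K' :=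
      Filter.le_principal_iff.1 inf_le_right
    have hQ : ∀ᶠ t in (𝓝[Set.Ioo 0 ε] (0:ℝ) ⊓
        𝓟 {t | amax (fun i => x i t) J q = K'}),
        ∃ js ∈ K', ‖x js t - x i t‖ ≤ R * (q (x js t) - q (x i t)) := by
      filter_upwards [hGIoo, hGK] with t h1 h2
      exact hkey t h1 h2
    have hjsex : ∃ js ∈ K', ∃ᶠ t in (𝓝[Set.Ioo 0 ε] (0:ℝ) ⊓
        𝓟 {t | amax (fun i => x i t) J q = K'}),
        ‖x js t - x i t‖ ≤ R * (q (x js t) - q (x i t)) := by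
      by_contra hcon
      push_neg at hcon
      have h1 : ∀ᶠ t in (𝓝[Set.Ioo 0 ε] (0:ℝ) ⊓
          𝓟 {t | amax (fun i => x i t) J q = K'}),
          ∀ js ∈ K', ¬ (‖x js t - x i t‖ ≤ R * (q (x js t) - q (x i t))) :=
        (Filter.eventually_all_finset K').2 (fun js hjs => (hcon js hjs).mono fun t ht => not_le.2 ht)
      obtain ⟨t, ht1, ht2⟩ := (hQ.and h1).exists
      obtain ⟨js, hjs1, hjs2⟩ := ht1
      exact ht2 js hjs1 hjs2
    obtain ⟨js, hjsK, hfreq2⟩ := hjsex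
    refine ⟨js, hjsK, ?_⟩
    haveI hG'NB : ((𝓝[Set.Ioo 0 ε] (0:ℝ) ⊓
        𝓟 {t | amax (fun i => x i t) J q = K'}) ⊓
        𝓟 {t | ‖x js t - x i t‖ ≤ R * (q (x js t) - q (x i t))}).NeBot :=
      Filter.frequently_iff_neBot.1 hfreq2
    have hle2 : ((𝓝[Set.Ioo 0 ε] (0:ℝ) ⊓
        𝓟 {t | amax (fun i => x i t) J q = K'}) ⊓
        𝓟 {t | ‖x js t - x i t‖ ≤ R * (q (x js t) - q (x i t))}) ≤
        𝓝[Set.Ioo 0 ε] 0 := le_trans inf_le_left hGle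
    have hnormtend : Filter.Tendsto (fun t => ‖x js t - x i t‖)
        ((𝓝[Set.Ioo 0 ε] (0:ℝ) ⊓ 𝓟 {t | amax (fun i => x i t) J q = K'}) ⊓
          𝓟 {t | ‖x js t - x i t‖ ≤ R * (q (x js t) - q (x i t))})
        (𝓝 ‖x js 0 - x i 0‖) :=
      (((htendx js).sub (htendx i)).norm).mono_left hle2
    have hqtend : Filter.Tendsto (fun t => R * (q (x js t) - q (x i t)))
        ((𝓝[Set.Ioo 0 ε] (0:ℝ) ⊓ 𝓟 {t | amax (fun i => x i t) J q = K'}) ⊓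
          𝓟 {t | ‖x js t - x i t‖ ≤ R * (q (x js t) - q (x i t))})
        (𝓝 (R * (q (x js 0) - q (x i 0)))) := by
      apply Filter.Tendsto.const_mul
      apply Filter.Tendsto.sub
      · exact ((q.continuous.tendsto _).comp (htendx js)).mono_left hle2
      · exact ((q.continuous.tendsto _).comp (htendx i)).mono_left hle2
    have hev : ∀ᶠ t in ((𝓝[Set.Ioo 0 ε] (0:ℝ) ⊓
        𝓟 {t | amax (fun i => x i t) J q = K'}) ⊓
        𝓟 {t | ‖x js t - x i t‖ ≤ R * (q (x js t) - q (x i t))}),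
        ‖x js t - x i t‖ ≤ R * (q (x js t) - q (x i t)) :=
      Filter.le_principal_iff.1 inf_le_right
    have hineq : ‖x js 0 - x i 0‖ ≤ R * (q (x js 0) - q (x i 0)) :=
      le_of_tendsto_of_tendsto hnormtend hqtend hev
    rw [hqeq js hjsK] at hineq
    simp only [sub_self, mul_zero] at hineq
    have h6 : x js 0 - x i 0 = 0 := norm_le_zero_iff.1 hineq
    have h7 : x js 0 = x i 0 := by
      rwa [sub_eq_zero] at h6
    exact h7.symm
  -- the exposing functional of F at time 0
  obtain ⟨l, hlF⟩ := hFexp hFne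
  have hFI₀ : F = movFace x ↑(amax (fun i => x i 0) Finset.univ l) 0 := by
    rw [hface, ← face_eq, ← hPoly, ← hlF]
  set I₀ := amax (fun i => x i 0) Finset.univ l with hI₀
  have hFconv : Convex ℝ F := by
    rw [hFI₀, hface]
    exact convex_hull' _ _
  have hFsubP : F ⊆ movPoly x 0 := by
    rw [hlF]
    exact fun y hy => hy.1
  have hFval : ∀ y ∈ F, ∀ z ∈ movPoly x 0, l z ≤ l y := by
    intro y hy
    rw [hlF] at hy
    exact hy.2
  have hFvaleq : ∀ y ∈ F, ∀ y' ∈ F, l y = l y' := fun y hy y' hy' =>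
    le_antisymm (hFval y' hy' y (hFsubP hy)) (hFval y hy y' (hFsubP hy'))
  have hI₀ptsF : ∀ i ∈ I₀, x i 0 ∈ F := by
    intro i hi
    rw [hFI₀]
    exact hmem_face _ _ _ hi
  have hunivform : ∀ t ∈ Set.Ioo 0 ε, ∃ g,
      (Finset.univ : Finset (Fin r)) = amax (fun i => x i t) Finset.univ g := by
    intro t ht
    refine ⟨0, ?_⟩
    ext s
    simp [amax]
  -- K₀ : the frequent argmax of l near 0
  obtain ⟨K₀, hK₀freq⟩ := hpigeon (𝓝[Set.Ioo 0 ε] 0)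
    (fun t => amax (fun i => x i t) Finset.univ l)
  have hK₀pts : ∀ j ∈ K₀, x j 0 ∈ F := by
    intro j hj
    haveI hGNB : (𝓝[Set.Ioo 0 ε] (0:ℝ) ⊓
        𝓟 {t | amax (fun i => x i t) Finset.univ l = K₀}).NeBot :=
      Filter.frequently_iff_neBot.1 hK₀freq
    have hbound : ∀ kk : Fin r, l (x kk 0) ≤ l (x j 0) := by
      intro kk
      have h1 : ∀ᶠ t in (𝓝[Set.Ioo 0 ε] (0:ℝ) ⊓
          𝓟 {t | amax (fun i => x i t) Finset.univ l = K₀}),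
          amax (fun i => x i t) Finset.univ l = K₀ :=
        Filter.le_principal_iff.1 inf_le_right
      have hev : ∀ᶠ t in (𝓝[Set.Ioo 0 ε] (0:ℝ) ⊓
          𝓟 {t | amax (fun i => x i t) Finset.univ l = K₀}),
          l (x kk t) ≤ l (x j t) := by
        filter_upwards [h1] with t hteq
        have h2 : j ∈ amax (fun i => x i t) Finset.univ l := by
          rw [hteq]; exact hj
        exact (Finset.mem_filter.1 h2).2 kk (Finset.mem_univ _)
      exact le_of_tendsto_of_tendsto
        (((l.continuous.tendsto _).comp (htendx kk)).mono_left inf_le_left)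
        (((l.continuous.tendsto _).comp (htendx j)).mono_left inf_le_left) hev
    rw [hlF]
    refine ⟨hmemP 0 j, ?_⟩
    intro z hz
    rw [hPoly 0] at hz
    exact g_le_on_hull (fun kk _ => hbound kk) z hz
  have hFsubK₀ : F ⊆ movFace x ↑K₀ 0 := by
    have hK₀conv : Convex ℝ (movFace x ↑K₀ 0) := by
      rw [hface]
      exact convex_hull' _ _
    rw [hFI₀, hface, hull]
    apply convexHull_min _ hK₀conv
    rintro _ ⟨i, hi, rfl⟩
    obtain ⟨js, hjs, heq⟩ := crux_pt l Finset.univ K₀ hunivform hK₀freq i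
      (Finset.mem_univ i) (fun j hj => hFvaleq _ (hK₀pts j hj) _
        (hI₀ptsF i (Finset.mem_coe.1 hi)))
    show x i 0 ∈ movFace x ↑K₀ 0
    rw [heq]
    exact hmem_face K₀ 0 js hjs
  -- the main recursion on the cardinality of K
  have hrec : ∀ (N : ℕ) (K : Finset (Fin r)), K.card ≤ N →
      (∃ t₂ ∈ Set.Ioo 0 ε, ∃ g, K = amax (fun i => x i t₂) Finset.univ g) →
      (∀ j ∈ K, x j 0 ∈ F) → F ⊆ movFace x ↑K 0 →
      ∃ I : Set (Fin r),
        (∀ t ∈ Set.Ioo 0 ε,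
          IsExposed ℝ (movPoly x t) (movFace x I t) ∧ movDim (movFace x I t) = k) ∧
        movFace x I 0 = F := by
    intro N
    induction N with
    | zero =>
      rintro K hcard ⟨t₂, ht₂, g, hg⟩ _ _
      exfalso
      have hKne : K.Nonempty := by
        rw [hg]; exact hamax_ne _ _ _ huniv_ne
      have := Finset.card_pos.2 hKne
      omega
    | succ N IH =>
      rintro K hcard ⟨t₂, ht₂, hKf⟩ hKpts hKsub
      have hKne : K.Nonempty := by
        obtain ⟨g, hg⟩ := hKf
        rw [hg]; exact hamax_ne _ _ _ huniv_ne
      have hKallt : ∀ t ∈ Set.Ioo 0 ε, ∃ g, K = amax (fun i => x i t) Finset.univ g :=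
        d4 K t₂ ht₂ hKf
      have hK0F : movFace x ↑K 0 = F := by
        apply Set.Subset.antisymm _ hKsub
        rw [hface, hull]
        apply convexHull_min _ hFconv
        rintro _ ⟨j, hj, rfl⟩
        exact hKpts j (Finset.mem_coe.1 hj)
      by_cases hmk : movDim (movFace x ↑K t₁) = k
      · refine ⟨↑K, ?_, hK0F⟩
        intro t ht
        have h1 := d1 K t₁ ht₁ (hKallt t₁ ht₁) t ht
        exact ⟨h1.1, by rw [h1.2, hmk]⟩
      · -- dimension-reduction step
        -- the submodule spanned by in-face edge directions
        set EW : Submodule ℝ (EuclideanSpace ℝ (Fin n)) := Submodule.span ℝ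
          {v | ∃ a b : Fin r, (a ∈ K ∧ b ∈ K ∧ a ≠ b ∧
            (∀ t ∈ Set.Ioo 0 ε, IsExposed ℝ (movPoly x t) (convexHull ℝ {x a t, x b t}))) ∧
            v = x b t₁ - x a t₁} with hEW
        -- every difference of face points at positive times lies in EW
        have claim1 : ∀ t ∈ Set.Ioo 0 ε, ∀ a ∈ K, ∀ b ∈ K, x b t - x a t ∈ EW := by
          intro t ht a haK b hbK
          obtain ⟨g, hKg⟩ := hKallt t ht
          obtain ⟨w, hwb⟩ := hexpw t ht b
          have hamaxb : amax (fun i => x i t) K w = {b} := by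
            ext s
            rw [amax, Finset.mem_filter, Finset.mem_singleton]
            constructor
            · rintro ⟨hsK, hs⟩
              by_contra hsb
              exact absurd (hs b hbK) (not_le.2 (hwb s hsb))
            · intro hs
              rw [hs]
              refine ⟨hbK, fun j hj => ?_⟩
              by_cases hjb : j = b
              · rw [hjb]
              · exact (hwb j hjb).le
          obtain ⟨js, hjs, hrtg⟩ := path_lemma (fun i => x i t) (hinj t ht)
            (hexpw t ht) (K.card * (r+1) +
              (K.filter (fun s => w (x a t) < w (x s t))).card)
            K g a w hKg haK (le_refl _)
          have hjsb : js = b := by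
            rw [hamaxb] at hjs
            exact Finset.mem_singleton.1 hjs
          rw [← hjsb]
          -- induction along the path
          have hind : ∀ c, Relation.ReflTransGen (Step (fun i => x i t) K w) a c →
              x c t - x a t ∈ EW := by
            intro c hc
            induction hc with
            | refl => simp
            | tail hab hbc ih =>
              rename_i b' c'
              obtain ⟨hqlt, hb'K, hc'K, hexp⟩ := hbc
              have hne : b' ≠ c' := by
                intro h
                rw [h] at hqlt
                exact lt_irrefl _ hqlt
              have h1 : IsExposed ℝ (movPoly x t) (convexHull ℝ {x b' t, x c' t}) := by
                rw [hPoly t]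
                exact hexp
              have hexpall : ∀ t' ∈ Set.Ioo 0 ε,
                  IsExposed ℝ (movPoly x t') (convexHull ℝ {x b' t', x c' t'}) := by
                intro t' ht'
                have h2 : IsExposed ℝ (movPoly x t) (movFace x {b', c'} t) := by
                  rw [hpairs]
                  exact h1
                have h3 := (hconst {b', c'} (movDim (movFace x {b', c'} t)) t ht
                  ⟨h2, rfl⟩ t' ht').1
                rwa [hpairs] at h3
              have hgen : x c' t₁ - x b' t₁ ∈ EW := by
                apply Submodule.subset_span
                exact ⟨b', c', ⟨hb'K, hc'K, hne, hexpall⟩, rfl⟩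
              have hmul : x c' t - x b' t ∈ EW := by
                have h4 := ((hedgedata b' c' hne hexpall).2.1 t ht).1
                rw [h4]
                exact Submodule.smul_mem _ _ hgen
              have h5 : x c' t - x a t = (x c' t - x b' t) + (x b' t - x a t) := by
                abel
              rw [h5]
              exact Submodule.add_mem _ hmul ih
          exact hind js hrtg
        -- dimension bookkeeping
        have hmovdim : ∀ (K' : Finset (Fin r)) (t : ℝ), movDim (movFace x ↑K' t) =
            Module.finrank ℝ (vectorSpan ℝ ((fun i => x i t) '' ↑K')) := by
          intro K' t
          unfold movDim movFace
          rw [affineSpan_convexHull, direction_affineSpan]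
        set V0 : Submodule ℝ (EuclideanSpace ℝ (Fin n)) :=
          vectorSpan ℝ ((fun i => x i 0) '' ↑K) with hV0
        have hkV0 : Module.finrank ℝ V0 = k := by
          rw [hV0, ← hmovdim K 0, hK0F, hFdim]
        have hW1le : vectorSpan ℝ ((fun i => x i t₁) '' ↑K) ≤ EW := by
          rw [vectorSpan_def]
          apply Submodule.span_le.2
          rintro v ⟨y, hy, z, hz, rfl⟩
          obtain ⟨b', hb', rfl⟩ := hy
          obtain ⟨a', ha', rfl⟩ := hz
          exact claim1 t₁ ht₁ a' (Finset.mem_coe.1 ha') b' (Finset.mem_coe.1 hb')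
        have hEWleW1 : EW ≤ vectorSpan ℝ ((fun i => x i t₁) '' ↑K) := by
          rw [hEW]
          apply Submodule.span_le.2
          rintro v ⟨a, b, ⟨haK, hbK, hne, hexpall⟩, rfl⟩
          exact vsub_mem_vectorSpan ℝ ⟨b, Finset.mem_coe.2 hbK, rfl⟩
            ⟨a, Finset.mem_coe.2 haK, rfl⟩
        have hV0le : V0 ≤ EW := by
          rw [hV0, vectorSpan_def]
          apply Submodule.span_le.2
          rintro v ⟨y, hy, z, hz, rfl⟩
          obtain ⟨b', hb', rfl⟩ := hy
          obtain ⟨a', ha', rfl⟩ := hz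
          have hcl : IsClosed (EW : Set (EuclideanSpace ℝ (Fin n))) :=
            Submodule.closed_of_finiteDimensional EW
          apply hcl.mem_of_tendsto ((htendx b').sub (htendx a'))
          filter_upwards [hevIoo] with t ht
          exact claim1 t ht a' (Finset.mem_coe.1 ha') b' (Finset.mem_coe.1 hb')
        -- a generator outside V0 exists
        have hbad : ∃ a b : Fin r, (a ∈ K ∧ b ∈ K ∧ a ≠ b ∧
            (∀ t ∈ Set.Ioo 0 ε, IsExposed ℝ (movPoly x t) (convexHull ℝ {x a t, x b t}))) ∧
            x b t₁ - x a t₁ ∉ V0 := by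
          by_contra hall
          push_neg at hall
          have hEWle0 : EW ≤ V0 := by
            rw [hEW]
            apply Submodule.span_le.2
            rintro v ⟨a, b, hEg, rfl⟩
            exact hall a b hEg
          apply hmk
          have h1 : movDim (movFace x ↑K t₁) ≤ k := by
            rw [hmovdim, ← hkV0]
            exact Submodule.finrank_mono (le_trans hW1le hEWle0)
          have h2 : k ≤ movDim (movFace x ↑K t₁) := by
            rw [hmovdim, ← hkV0]
            exact Submodule.finrank_mono (le_trans hV0le hEWleW1)
          omega
        obtain ⟨a, b, ⟨haK, hbK, hne, hexpall⟩, hnotin⟩ := hbad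
        -- build the cutting functional q
        set vd : EuclideanSpace ℝ (Fin n) := x b t₁ - x a t₁ with hvd
        set vp : EuclideanSpace ℝ (Fin n) := vd - (Submodule.orthogonalProjection V0 vd : EuclideanSpace ℝ (Fin n)) with hvp
        have hvpne : vp ≠ 0 := by
          intro h
          apply hnotin
          have h2 : vd - (Submodule.orthogonalProjection V0 vd : EuclideanSpace ℝ (Fin n)) = 0 := by
            rw [← hvp]; exact h
          rw [sub_eq_zero] at h2
          rw [h2]
          exact SetLike.coe_mem _
        set q : EuclideanSpace ℝ (Fin n) →L[ℝ] ℝ := innerSL ℝ vp with hq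
        have hqV0 : ∀ z ∈ V0, q z = 0 := by
          intro z hz
          rw [hq, innerSL_apply_apply]
          have h1 : vp ∈ V0ᗮ := by
            rw [hvp]
            exact V0.sub_starProjection_mem_orthogonal vd
          rw [real_inner_comm]
          exact h1 z hz
        have hqvd : 0 < q vd := by
          have h1 : vd = vp + (Submodule.orthogonalProjection V0 vd : EuclideanSpace ℝ (Fin n)) := by
            rw [hvp]; abel
          rw [hq, innerSL_apply_apply, h1, inner_add_right]
          have h2 : (inner ℝ vp (Submodule.orthogonalProjection V0 vd : EuclideanSpace ℝ (Fin n)) : ℝ) = 0 := by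
            have h3 := hqV0 (Submodule.orthogonalProjection V0 vd : EuclideanSpace ℝ (Fin n))
              (SetLike.coe_mem _)
            rw [hq, innerSL_apply_apply] at h3
            exact h3
          rw [h2, add_zero, real_inner_self_eq_norm_sq]
          have : 0 < ‖vp‖ := norm_pos_iff.2 hvpne
          positivity
        have hqKconst : ∀ a' ∈ K, ∀ b' ∈ K, q (x b' 0) = q (x a' 0) := by
          intro a' ha' b' hb'
          have h1 : x b' 0 - x a' 0 ∈ V0 := by
            rw [hV0]
            exact vsub_mem_vectorSpan ℝ ⟨b', Finset.mem_coe.2 hb', rfl⟩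
              ⟨a', Finset.mem_coe.2 ha', rfl⟩
          have h2 := hqV0 _ h1
          rw [map_sub] at h2
          linarith
        -- pigeonhole the cut argmax
        obtain ⟨K', hK'freq⟩ := hpigeon (𝓝[Set.Ioo 0 ε] 0)
          (fun t => amax (fun i => x i t) K q)
        obtain ⟨t₃, hK₃, ht₃⟩ := (hK'freq.and_eventually hevIoo).exists
        have hK'sub : K' ⊆ K := by
          rw [← hK₃]
          exact Finset.filter_subset _ _
        have hK'ne : K'.Nonempty := by
          rw [← hK₃]
          exact hamax_ne _ _ _ hKne
        -- K' is a face at t₃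
        obtain ⟨g₃, hKg₃⟩ := hKallt t₃ ht₃
        obtain ⟨δ₃, hδ₃, hglue₃⟩ := amax_glue (fun i => x i t₃) g₃ q K hKg₃ hKne
        have hK'face : ∃ g, K' = amax (fun i => x i t₃) Finset.univ g :=
          ⟨g₃ + δ₃ • q, by rw [← hK₃, ← hglue₃]⟩
        -- all points of K collapse onto K' at time 0
        have hKptsK' : ∀ i ∈ K, x i 0 ∈ movFace x ↑K' 0 := by
          intro i hiK
          obtain ⟨js, hjs, heq⟩ := crux_pt q K K' hKallt hK'freq i hiK
            (fun j hj => hqKconst i hiK j (hK'sub hj))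
          rw [heq]
          exact hmem_face K' 0 js hjs
        have hFsubK' : F ⊆ movFace x ↑K' 0 := by
          have hK'conv : Convex ℝ (movFace x ↑K' 0) := by
            rw [hface]
            exact convex_hull' _ _
          refine le_trans hKsub ?_
          rw [hface K 0, hull]
          apply convexHull_min _ hK'conv
          rintro _ ⟨j, hj, rfl⟩
          exact hKptsK' j (Finset.mem_coe.1 hj)
        have hK'pts : ∀ j ∈ K', x j 0 ∈ F := fun j hj => hKpts j (hK'sub hj)
        -- K' is strictly smaller than K
        have hK'lt : K'.card < K.card := by
          apply Finset.card_lt_card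
          rw [Finset.ssubset_iff_subset_ne]
          refine ⟨hK'sub, ?_⟩
          intro hKK
          -- a and b cannot both lie in K' since q separates them at t₃
          have hqd : q (x b t₃) - q (x a t₃) = cc a b t₃ * q vd := by
            have h4 := ((hedgedata a b hne hexpall).2.1 t₃ ht₃).1
            rw [← map_sub, h4, map_smul, smul_eq_mul, hvd]
          have hccne := ((hedgedata a b hne hexpall).2.1 t₃ ht₃).2
          have hqne : q (x b t₃) ≠ q (x a t₃) := by
            intro h
            rw [h, sub_self] at hqd
            have := mul_ne_zero hccne hqvd.ne'
            exact this hqd.symm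
          have haK' : a ∈ K' := by rw [hKK]; exact haK
          have hbK' : b ∈ K' := by rw [hKK]; exact hbK
          rw [← hK₃] at haK' hbK'
          exact hqne (amax_val hbK' haK')
        -- recurse
        exact IH K' (by omega) ⟨t₃, ht₃, hK'face⟩ hK'pts hFsubK'

  have ht₂ex : ∃ t₂ ∈ Set.Ioo 0 ε, amax (fun i => x i t₂) Finset.univ l = K₀ := by
    obtain ⟨t₂, h1, h2⟩ := (hK₀freq.and_eventually hevIoo).exists
    exact ⟨t₂, h2, h1⟩
  obtain ⟨t₂, ht₂, hK₂⟩ := ht₂ex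
  exact hrec K₀.card K₀ le_rfl ⟨t₂, ht₂, l, hK₂.symm⟩ hK₀pts hFsubK₀
end
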